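/- arXiv:1703.00763 — 14 statements merged into one kernel-verified Lean document; each statement's English description precedes it below -/
import Mathlib

section
/- Let s : ℕ → ℝ and t : ℕ → ℝ be arbitrary sequences and define a : ℕ × ℕ → ℝ by a(0,j) = 1 if j = 0 and a(0,j) = 0 otherwise, a(n,0) = s(0)·a(n-1,0) + t(0)·a(n-1,1) for n ≥ 1, and a(n,j) = a(n-1,j-1) + s(j)·a(n-1,j) + t(j)·a(n-1,j+1) for n ≥ 1 and j ≥ 1. Then for every n ≥ 0 the Hankel determinant satisfies det((a(i+j,0))_{i,j=0}^{n}) = ∏_{i=1}^{n} ∏_{j=0}^{i-1} t(j). -/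
section aux
variable (s t : ℕ → ℝ) (a : ℕ → ℕ → ℝ)
variable (h0 : ∀ j, a 0 j = if j = 0 then 1 else 0)
variable (h1 : ∀ n, a (n + 1) 0 = s 0 * a n 0 + t 0 * a n 1)
variable (h2 : ∀ n j, a (n + 1) (j + 1) = a n j + s (j + 1) * a n (j + 1) + t (j + 1) * a n (j + 2))

local notation "w" => fun k => ∏ j ∈ Finset.range k, t j

include h0 h2 in
lemma vanish : ∀ m k, m < k → a m k = 0 := by
  intro m
  induction m with
  | zero => intro k hk; rw [h0]; simp only [if_neg (by omega : k ≠ 0)]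
  | succ m ih =>
    intro k hk
    obtain ⟨j, rfl⟩ : ∃ j, k = j + 1 := ⟨k - 1, by omega⟩
    rw [h2, ih j (by omega), ih (j+1) (by omega), ih (j+2) (by omega)]
    ring

include h0 h2 in
lemma diag : ∀ m, a m m = 1 := by
  intro m
  induction m with
  | zero => simp [h0]
  | succ m ih =>
    rw [h2, ih, vanish s t a h0 h2 m (m+1) (by omega), vanish s t a h0 h2 m (m+2) (by omega)]
    ring

include h0 h1 h2 in
lemma half (i j M : ℕ) (hj : j ≤ M) :
    ∑ k ∈ Finset.range (M + 1), w k * (a (i + 1) k * a j k)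
    = (∑ k ∈ Finset.range (M + 1), w k * s k * (a i k * a j k))
    + (∑ k ∈ Finset.range (M + 1), w k * t k * (a i (k + 1) * a j k))
    + (∑ k ∈ Finset.range (M + 1), w k * t k * (a i k * a j (k + 1))) := by
  rw [Finset.sum_range_succ' (fun k => w k * (a (i+1) k * a j k)) M]
  rw [Finset.sum_range_succ' (fun k => w k * s k * (a i k * a j k)) M]
  rw [Finset.sum_range_succ' (fun k => w k * t k * (a i (k+1) * a j k)) M]
  rw [Finset.sum_range_succ (fun k => w k * t k * (a i k * a j (k+1))) M]
  rw [vanish s t a h0 h2 j (M+1) (by omega)]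
  simp only [h1, h2]
  have expand : ∀ k ∈ Finset.range M,
      (∏ x ∈ Finset.range (k+1), t x) * ((a i k + s (k+1) * a i (k+1) + t (k+1) * a i (k+2)) * a j (k+1))
      = ((∏ x ∈ Finset.range (k+1), t x) * s (k+1) * (a i (k+1) * a j (k+1))
        + (∏ x ∈ Finset.range (k+1), t x) * t (k+1) * (a i (k+2) * a j (k+1)))
        + (∏ x ∈ Finset.range k, t x) * t k * (a i k * a j (k+1)) := by
    intro k _
    rw [Finset.prod_range_succ]
    ring
  rw [Finset.sum_congr rfl expand, Finset.sum_add_distrib, Finset.sum_add_distrib]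
  simp only [Finset.range_zero, Finset.prod_empty]
  ring

include h0 h1 h2 in
lemma transfer (i j M : ℕ) (hi : i ≤ M) (hj : j ≤ M) :
    ∑ k ∈ Finset.range (M + 1), w k * (a (i + 1) k * a j k)
    = ∑ k ∈ Finset.range (M + 1), w k * (a i k * a (j + 1) k) := by
  rw [half s t a h0 h1 h2 i j M hj]
  have : ∑ k ∈ Finset.range (M + 1), w k * (a i k * a (j + 1) k)
      = ∑ k ∈ Finset.range (M + 1), w k * (a (j + 1) k * a i k) := by
    apply Finset.sum_congr rfl; intro k _; ring
  rw [this, half s t a h0 h1 h2 j i M hi]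
  have e1 : ∑ k ∈ Finset.range (M + 1), w k * s k * (a j k * a i k)
      = ∑ k ∈ Finset.range (M + 1), w k * s k * (a i k * a j k) := by
    apply Finset.sum_congr rfl; intro k _; ring
  have e2 : ∑ k ∈ Finset.range (M + 1), w k * t k * (a j (k+1) * a i k)
      = ∑ k ∈ Finset.range (M + 1), w k * t k * (a i k * a j (k+1)) := by
    apply Finset.sum_congr rfl; intro k _; ring
  have e3 : ∑ k ∈ Finset.range (M + 1), w k * t k * (a j k * a i (k+1))
      = ∑ k ∈ Finset.range (M + 1), w k * t k * (a i (k+1) * a j k) := by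
    apply Finset.sum_congr rfl; intro k _; ring
  rw [e1, e2, e3]
  ring

include h0 h1 h2 in
lemma main : ∀ j i N, i + j < N → a (i + j) 0 = ∑ k ∈ Finset.range N, w k * (a i k * a j k) := by
  intro j
  induction j with
  | zero =>
    intro i N hN
    have : ∀ k ∈ Finset.range N, w k * (a i k * a 0 k)
        = if k = 0 then a i 0 else 0 := by
      intro k _
      rw [h0]
      by_cases hk : k = 0 <;> simp [hk]
    rw [Finset.sum_congr rfl this, Finset.sum_ite_eq' (Finset.range N) 0 (fun _ => a i 0)]
    simp [Finset.mem_range.mpr (by omega : 0 < N)]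
  | succ j ih =>
    intro i N hN
    obtain ⟨M, rfl⟩ : ∃ M, N = M + 1 := ⟨N - 1, by omega⟩
    have : i + (j + 1) = (i + 1) + j := by omega
    rw [this, ih (i+1) (M+1) (by omega),
      transfer s t a h0 h1 h2 i j M (by omega) (by omega)]

end aux

lemma prodw (t : ℕ → ℝ) (n : ℕ) :
    ∏ k ∈ Finset.range (n + 1), ∏ j ∈ Finset.range k, t j
    = ∏ i ∈ Finset.Icc 1 n, ∏ j ∈ Finset.range i, t j := by
  induction n with
  | zero => simp
  | succ m ih =>
    rw [Finset.prod_range_succ, ih, Finset.prod_Icc_succ_top (by omega : 1 ≤ m + 1)]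

open Matrix
/-- For arbitrary sequences `s, t : ℕ → ℝ` and `a` defined by the recurrence
`a(0,j) = [j = 0]`, `a(n,0) = s(0)a(n-1,0) + t(0)a(n-1,1)`,
`a(n,j) = a(n-1,j-1) + s(j)a(n-1,j) + t(j)a(n-1,j+1)` (for `n, j ≥ 1`), the Hankel
determinant satisfies `det((a(i+j,0))_{i,j=0}^n) = ∏_{i=1}^n ∏_{j=0}^{i-1} t(j)`. -/
theorem hankel_det_of_recurrence (s t : ℕ → ℝ) (a : ℕ → ℕ → ℝ)
    (h0 : ∀ j, a 0 j = if j = 0 then 1 else 0)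
    (h1 : ∀ n, a (n + 1) 0 = s 0 * a n 0 + t 0 * a n 1)
    (h2 : ∀ n j, a (n + 1) (j + 1) = a n j + s (j + 1) * a n (j + 1) + t (j + 1) * a n (j + 2))
    (n : ℕ) :
    Matrix.det (Matrix.of fun i j : Fin (n + 1) => a ((i : ℕ) + (j : ℕ)) 0) =
      ∏ i ∈ Finset.Icc 1 n, ∏ j ∈ Finset.range i, t j := by
  set w : ℕ → ℝ := fun k => ∏ j ∈ Finset.range k, t j with hw
  set L : Matrix (Fin (n+1)) (Fin (n+1)) ℝ := Matrix.of (fun i k : Fin (n+1) => a i k) with hL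
  set D : Matrix (Fin (n+1)) (Fin (n+1)) ℝ := Matrix.diagonal (fun k : Fin (n+1) => w k) with hD
  have hH : (Matrix.of fun i j : Fin (n + 1) => a ((i : ℕ) + (j : ℕ)) 0) = L * D * Lᵀ := by
    ext i j
    rw [Matrix.mul_apply]
    simp only [Matrix.of_apply, Matrix.mul_diagonal, Matrix.transpose_apply, hL, hD,
      Matrix.of_apply]
    have : ∀ k : Fin (n+1), a i k * w k * a j k = w k * (a (i:ℕ) k * a (j:ℕ) k) := by
      intro k; ring
    rw [Fintype.sum_congr _ _ this]
    rw [Fin.sum_univ_eq_sum_range (fun k => w k * (a (i:ℕ) k * a (j:ℕ) k)) (n+1)]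
    rw [main s t a h0 h1 h2 j i (2*n+2) (by omega)]
    symm
    apply Finset.sum_subset
    · intro x hx; simp only [Finset.mem_range] at *; omega
    · intro x _ hx
      simp only [Finset.mem_range, not_lt] at hx
      rw [vanish s t a h0 h2 i x (by omega)]
      ring
  rw [hH, Matrix.det_mul, Matrix.det_mul, Matrix.det_transpose]
  have hLdet : L.det = 1 := by
    rw [Matrix.det_of_lowerTriangular L]
    · apply Finset.prod_eq_one
      intro i _
      exact diag s t a h0 h2 i
    · intro i j hij
      simp only [OrderDual.toDual_lt_toDual] at hij
      exact vanish s t a h0 h2 i j (by exact_mod_cast hij)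
  rw [hLdet, hD, Matrix.det_diagonal]
  rw [Fin.prod_univ_eq_prod_range (fun k => w k) (n+1)]
  rw [one_mul, mul_one, hw]
  exact prodw t n
end

section
/- Let s : ℕ → ℝ and t : ℕ → ℝ be arbitrary sequences and define a : ℕ × ℕ → ℝ by a(0,j) = 1 if j = 0 and a(0,j) = 0 otherwise, a(n,0) = s(0)·a(n-1,0) + t(0)·a(n-1,1) for n ≥ 1, and a(n,j) = a(n-1,j-1) + s(j)·a(n-1,j) + t(j)·a(n-1,j+1) for n ≥ 1 and j ≥ 1. Then for all m, n ≥ 0, ∑_{k=0}^{n} a(n,k)·a(m,k)·∏_{j=0}^{k-1} t(j) = a(m+n,0). -/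
lemma shift_aux (g : ℕ → ℝ) (M : ℕ) :
    ∑ k ∈ Finset.range (M + 1), (if k = 0 then 0 else g (k - 1)) =
      ∑ k ∈ Finset.range M, g k := by
  rw [Finset.sum_range_succ']
  simp

/-- With `a` defined by the recurrence as in Statement 0, for all `m, n ≥ 0`,
`∑_{k=0}^n a(n,k)·a(m,k)·∏_{j=0}^{k-1} t(j) = a(m+n,0)`. -/
theorem sum_prod_eq_hankel_entry (s t : ℕ → ℝ) (a : ℕ → ℕ → ℝ)
    (h0 : ∀ j, a 0 j = if j = 0 then 1 else 0)
    (h1 : ∀ n, a (n + 1) 0 = s 0 * a n 0 + t 0 * a n 1)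
    (h2 : ∀ n j, a (n + 1) (j + 1) = a n j + s (j + 1) * a n (j + 1) + t (j + 1) * a n (j + 2))
    (m n : ℕ) :
    ∑ k ∈ Finset.range (n + 1), a n k * a m k * ∏ j ∈ Finset.range k, t j = a (m + n) 0 := by
  set P : ℕ → ℝ := fun k => ∏ j ∈ Finset.range k, t j with hP
  have hPs : ∀ k, P (k + 1) = P k * t k := fun k => Finset.prod_range_succ t k
  have hrec : ∀ n k, a (n + 1) k =
      (if k = 0 then 0 else a n (k - 1)) + s k * a n k + t k * a n (k + 1) := by
    intro n k
    cases k with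
    | zero => simpa using h1 n
    | succ j => simpa using h2 n j
  have hz : ∀ n k, n < k → a n k = 0 := by
    intro n
    induction n with
    | zero => intro k hk; rw [h0, if_neg (by omega)]
    | succ p ih =>
      intro k hk
      obtain ⟨j, rfl⟩ : ∃ j, k = j + 1 := ⟨k - 1, by omega⟩
      rw [h2, ih j (by omega), ih (j + 1) (by omega), ih (j + 2) (by omega)]
      ring
  have key : ∀ n m N, n + 2 ≤ N →
      (∑ k ∈ Finset.range N, a (n + 1) k * a m k * P k) =
        ∑ k ∈ Finset.range N, a n k * a (m + 1) k * P k := by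
    intro n m N hN
    obtain ⟨M, rfl⟩ : ∃ M, N = M + 1 := ⟨N - 1, by omega⟩
    have expand : ∀ (p q : ℕ),
        (∑ k ∈ Finset.range (M + 1), a (p + 1) k * a q k * P k) =
          (∑ k ∈ Finset.range (M + 1), (if k = 0 then 0 else a p (k - 1) * a q k * P k))
          + (∑ k ∈ Finset.range (M + 1), s k * a p k * a q k * P k)
          + (∑ k ∈ Finset.range (M + 1), a p (k + 1) * a q k * (t k * P k)) := by
      intro p q
      rw [← Finset.sum_add_distrib, ← Finset.sum_add_distrib]
      apply Finset.sum_congr rfl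
      intro k _
      rw [hrec p k]
      cases k with
      | zero => simp; ring
      | succ j => simp; ring
    have expand' : ∀ (p q : ℕ),
        (∑ k ∈ Finset.range (M + 1), a p k * a (q + 1) k * P k) =
          (∑ k ∈ Finset.range (M + 1), (if k = 0 then 0 else a q (k - 1) * a p k * P k))
          + (∑ k ∈ Finset.range (M + 1), s k * a p k * a q k * P k)
          + (∑ k ∈ Finset.range (M + 1), a q (k + 1) * a p k * (t k * P k)) := by
      intro p q
      rw [show (∑ k ∈ Finset.range (M + 1), a p k * a (q + 1) k * P k) =
          ∑ k ∈ Finset.range (M + 1), a (q + 1) k * a p k * P k from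
        Finset.sum_congr rfl fun k _ => by ring]
      rw [expand q p]
      congr 2
      apply Finset.sum_congr rfl; intro k _; ring
    rw [expand n m, expand' n m]
    have s1 : (∑ k ∈ Finset.range (M + 1), (if k = 0 then 0 else a n (k - 1) * a m k * P k)) =
        ∑ k ∈ Finset.range (M + 1), a m (k + 1) * a n k * (t k * P k) := by
      have e1 : (∑ k ∈ Finset.range (M + 1), (if k = 0 then 0 else a n (k - 1) * a m k * P k)) =
          ∑ k ∈ Finset.range M, a n k * a m (k + 1) * P (k + 1) := by
        rw [← shift_aux (fun k => a n k * a m (k + 1) * P (k + 1)) M]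
        apply Finset.sum_congr rfl
        intro k _
        cases k with
        | zero => simp
        | succ j => simp
      rw [e1, Finset.sum_range_succ, hz n M (by omega)]
      simp only [mul_zero, zero_mul, add_zero]
      apply Finset.sum_congr rfl
      intro k _
      rw [hPs]
      ring
    have s3 : (∑ k ∈ Finset.range (M + 1), a n (k + 1) * a m k * (t k * P k)) =
        ∑ k ∈ Finset.range (M + 1), (if k = 0 then 0 else a m (k - 1) * a n k * P k) := by
      have e1 : (∑ k ∈ Finset.range (M + 1), (if k = 0 then 0 else a m (k - 1) * a n k * P k)) =
          ∑ k ∈ Finset.range M, a m k * a n (k + 1) * P (k + 1) := by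
        rw [← shift_aux (fun k => a m k * a n (k + 1) * P (k + 1)) M]
        apply Finset.sum_congr rfl
        intro k _
        cases k with
        | zero => simp
        | succ j => simp
      rw [e1, Finset.sum_range_succ, hz n (M + 1) (by omega)]
      simp only [mul_zero, zero_mul, add_zero]
      apply Finset.sum_congr rfl
      intro k _
      rw [hPs]
      ring
    rw [s1, s3]
    ring
  have main : ∀ n m, (∑ k ∈ Finset.range (n + 1), a n k * a m k * P k) = a (m + n) 0 := by
    intro n
    induction n with
    | zero =>
      intro m
      simp [h0, hP]
    | succ p ih =>
      intro m
      rw [key p m (p + 2) (le_refl _), Finset.sum_range_succ, hz p (p + 1) (by omega)]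
      simp only [zero_mul, add_zero]
      rw [ih (m + 1)]
      congr 1
      omega
  exact main n m
end

section
/- Let s : ℕ → ℝ and t : ℕ → ℝ be sequences with t(j) ≠ 0 for all j, define a : ℕ × ℕ → ℝ by a(0,j) = 1 if j = 0 and a(0,j) = 0 otherwise, a(n,0) = s(0)·a(n-1,0) + t(0)·a(n-1,1) for n ≥ 1, and a(n,j) = a(n-1,j-1) + s(j)·a(n-1,j) + t(j)·a(n-1,j+1) for n ≥ 1, j ≥ 1, and define real polynomials p(n,x) by p(0,x) = 1, p(1,x) = x − s(0), and p(n,x) = (x − s(n-1))·p(n-1,x) − t(n-2)·p(n-2,x) for n ≥ 2. For fixed n ≥ 0 let b_n(i,j) be the coefficients determined by ∑_{k=0}^{n} p(k,x)·p(k,y)/(t(0)·t(1)⋯t(k-1)) = ∑_{i,j=0}^{n} b_n(i,j)·x^i·y^j. Then the (n+1)×(n+1) matrix (b_n(i,j))_{i,j=0}^{n} is the inverse of the Hankel matrix (a(i+j,0))_{i,j=0}^{n}. -/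
open Polynomial Finset

noncomputable def Pn (s t : ℕ → ℝ) : ℕ → ℝ[X]
  | 0 => 1
  | 1 => X - C (s 0)
  | (n+2) => (X - C (s (n+1))) * Pn s t (n+1) - C (t n) * Pn s t n

noncomputable def Lf (a : ℕ → ℕ → ℝ) (j : ℕ) : ℝ[X] →ₗ[ℝ] ℝ :=
  Polynomial.lsum fun m => LinearMap.toSpanSingleton ℝ ℝ (a m j)

lemma Lf_monomial (a : ℕ → ℕ → ℝ) (j m : ℕ) (c : ℝ) :
    Lf a j (monomial m c) = c * a m j := by
  simp [Lf, Polynomial.lsum_apply, Polynomial.sum_monomial_index,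
    LinearMap.toSpanSingleton_apply, smul_eq_mul]

lemma Lf_X_pow (a : ℕ → ℕ → ℝ) (j m : ℕ) : Lf a j ((X : ℝ[X]) ^ m) = a m j := by
  rw [X_pow_eq_monomial, Lf_monomial, one_mul]

lemma Lf_one (a : ℕ → ℕ → ℝ) (j : ℕ) : Lf a j 1 = a 0 j := by
  simpa using Lf_X_pow a j 0

lemma Lf_C_mul (a : ℕ → ℕ → ℝ) (j : ℕ) (c : ℝ) (q : ℝ[X]) :
    Lf a j (C c * q) = c * Lf a j q := by
  rw [← smul_eq_C_mul, map_smul, smul_eq_mul]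

lemma Lf_X_mul_zero (s t : ℕ → ℝ) (a : ℕ → ℕ → ℝ)
    (h1 : ∀ n, a (n + 1) 0 = s 0 * a n 0 + t 0 * a n 1) (q : ℝ[X]) :
    Lf a 0 (X * q) = s 0 * Lf a 0 q + t 0 * Lf a 1 q := by
  induction q using Polynomial.induction_on' with
  | add p q hp hq => simp only [mul_add, map_add, hp, hq]; ring
  | monomial m c => rw [X_mul_monomial, Lf_monomial, Lf_monomial, Lf_monomial, h1]; ring

lemma Lf_X_mul_succ (s t : ℕ → ℝ) (a : ℕ → ℕ → ℝ)
    (h2 : ∀ n j, a (n + 1) (j + 1) = a n j + s (j + 1) * a n (j + 1) + t (j + 1) * a n (j + 2))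
    (j : ℕ) (q : ℝ[X]) :
    Lf a (j + 1) (X * q) =
      Lf a j q + s (j + 1) * Lf a (j + 1) q + t (j + 1) * Lf a (j + 2) q := by
  induction q using Polynomial.induction_on' with
  | add p q hp hq => simp only [mul_add, map_add, hp, hq]; ring
  | monomial m c =>
      rw [X_mul_monomial, Lf_monomial, Lf_monomial, Lf_monomial, Lf_monomial, h2]; ring

lemma a_one (s t : ℕ → ℝ) (a : ℕ → ℕ → ℝ)
    (h0 : ∀ j, a 0 j = if j = 0 then 1 else 0)
    (h1 : ∀ n, a (n + 1) 0 = s 0 * a n 0 + t 0 * a n 1)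
    (h2 : ∀ n j, a (n + 1) (j + 1) = a n j + s (j + 1) * a n (j + 1) + t (j + 1) * a n (j + 2))
    (j : ℕ) : a 1 j = if j = 0 then s 0 else if j = 1 then 1 else 0 := by
  match j with
  | 0 => rw [h1, h0, h0]; simp
  | (j'+1) =>
    rw [h2, h0, h0, h0]
    match j' with
    | 0 => simp
    | (j''+1) => simp

lemma orth (s t : ℕ → ℝ) (a : ℕ → ℕ → ℝ)
    (h0 : ∀ j, a 0 j = if j = 0 then 1 else 0)
    (h1 : ∀ n, a (n + 1) 0 = s 0 * a n 0 + t 0 * a n 1)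
    (h2 : ∀ n j, a (n + 1) (j + 1) = a n j + s (j + 1) * a n (j + 1) + t (j + 1) * a n (j + 2)) :
    ∀ k j, Lf a j (Pn s t k) = if j = k then 1 else 0 := by
  intro k
  induction k using Nat.strong_induction_on with
  | _ k ih =>
    match k with
    | 0 => intro j; rw [show Pn s t 0 = 1 from rfl, Lf_one, h0]
    | 1 =>
      intro j
      rw [show Pn s t 1 = X - C (s 0) from rfl, map_sub,
        show (X : ℝ[X]) = X ^ 1 by ring, Lf_X_pow,
        show (C (s 0) : ℝ[X]) = C (s 0) * 1 by ring, Lf_C_mul, Lf_one,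
        a_one s t a h0 h1 h2, h0]
      split_ifs <;> first | ring1 | exact (False.elim ‹False›) | (exfalso; omega)
    | (k+2) =>
      intro j
      have hPP : Pn s t (k+2) = X * Pn s t (k+1) - C (s (k+1)) * Pn s t (k+1)
          - C (t k) * Pn s t k := by
        show (X - C (s (k+1))) * Pn s t (k+1) - C (t k) * Pn s t k = _
        ring
      rw [hPP, map_sub, map_sub, Lf_C_mul, Lf_C_mul,
        ih (k+1) (by omega), ih k (by omega)]
      match j with
      | 0 =>
        rw [Lf_X_mul_zero s t a h1, ih (k+1) (by omega), ih (k+1) (by omega)]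
        match k with
        | 0 =>
          split_ifs <;> first | ring1 | exact (False.elim ‹False›) | (exfalso; omega)
        | (k'+1) =>
          split_ifs <;> first | ring1 | exact (False.elim ‹False›) | (exfalso; omega)
      | (j+1) =>
        rw [Lf_X_mul_succ s t a h2, ih (k+1) (by omega), ih (k+1) (by omega), ih (k+1) (by omega)]
        by_cases e1 : j = k + 1
        · subst e1; split_ifs <;> first | ring1 | exact (False.elim ‹False›) | (exfalso; omega)
        · by_cases e2 : j = k
          · subst e2; split_ifs <;> first | ring1 | exact (False.elim ‹False›) | (exfalso; omega)
          · by_cases e3 : j + 1 = k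
            · subst e3; split_ifs <;> first | ring1 | exact (False.elim ‹False›) | (exfalso; omega)
            · split_ifs <;> first | ring1 | exact (False.elim ‹False›) | (exfalso; omega)

lemma XP0 (s t : ℕ → ℝ) : X * Pn s t 0 = Pn s t 1 + C (s 0) * Pn s t 0 := by
  show X * (1 : ℝ[X]) = (X - C (s 0)) + C (s 0) * 1
  ring

lemma XPsucc (s t : ℕ → ℝ) (k : ℕ) :
    X * Pn s t (k + 1) = Pn s t (k + 2) + C (s (k + 1)) * Pn s t (k + 1) + C (t k) * Pn s t k := by
  have h : Pn s t (k + 2) = (X - C (s (k+1))) * Pn s t (k+1) - C (t k) * Pn s t k := rfl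
  rw [h]; ring

lemma a_vanish (s t : ℕ → ℝ) (a : ℕ → ℕ → ℝ)
    (h0 : ∀ j, a 0 j = if j = 0 then 1 else 0)
    (h2 : ∀ n j, a (n + 1) (j + 1) = a n j + s (j + 1) * a n (j + 1) + t (j + 1) * a n (j + 2)) :
    ∀ m k, m < k → a m k = 0 := by
  intro m
  induction m with
  | zero => intro k hk; rw [h0, if_neg (by omega)]
  | succ m ih =>
    intro k hk
    match k, hk with
    | (k+1), hk =>
      rw [h2, ih k (by omega), ih (k+1) (by omega), ih (k+2) (by omega)]
      ring

lemma momD (s t : ℕ → ℝ) (a : ℕ → ℕ → ℝ)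
    (h0 : ∀ j, a 0 j = if j = 0 then 1 else 0)
    (h1 : ∀ n, a (n + 1) 0 = s 0 * a n 0 + t 0 * a n 1)
    (h2 : ∀ n j, a (n + 1) (j + 1) = a n j + s (j + 1) * a n (j + 1) + t (j + 1) * a n (j + 2)) :
    ∀ m k, Lf a 0 ((X : ℝ[X]) ^ m * Pn s t k) = (∏ j ∈ Finset.range k, t j) * a m k := by
  intro m
  induction m with
  | zero =>
    intro k
    rw [pow_zero, one_mul, orth s t a h0 h1 h2]
    match k with
    | 0 => simp [h0]
    | (k+1) =>
      rw [a_vanish s t a h0 h2 0 (k+1) (by omega), if_neg (by omega)]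
      ring
  | succ m ih =>
    intro k
    match k with
    | 0 =>
      rw [show (X:ℝ[X])^(m+1) * Pn s t 0 = X ^ m * (X * Pn s t 0) from by ring,
        XP0, mul_add, map_add,
        show (X:ℝ[X])^m * (C (s 0) * Pn s t 0) = C (s 0) * (X ^ m * Pn s t 0) from by ring,
        Lf_C_mul, ih 1, ih 0, h1]
      simp only [Finset.prod_range_one, Finset.prod_range_zero, one_mul]
      ring
    | (k+1) =>
      rw [show (X:ℝ[X])^(m+1) * Pn s t (k+1) = X ^ m * (X * Pn s t (k+1)) from by ring,
        XPsucc, mul_add, mul_add, map_add, map_add,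
        show (X:ℝ[X])^m * (C (s (k+1)) * Pn s t (k+1)) = C (s (k+1)) * (X ^ m * Pn s t (k+1))
          from by ring,
        show (X:ℝ[X])^m * (C (t k) * Pn s t k) = C (t k) * (X ^ m * Pn s t k) from by ring,
        Lf_C_mul, Lf_C_mul, ih (k+2), ih (k+1), ih k, h2,
        Finset.prod_range_succ, Finset.prod_range_succ]
      ring

lemma Xpow_expand (s t : ℕ → ℝ) (a : ℕ → ℕ → ℝ)
    (h0 : ∀ j, a 0 j = if j = 0 then 1 else 0)
    (h1 : ∀ n, a (n + 1) 0 = s 0 * a n 0 + t 0 * a n 1)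
    (h2 : ∀ n j, a (n + 1) (j + 1) = a n j + s (j + 1) * a n (j + 1) + t (j + 1) * a n (j + 2)) :
    ∀ m, (X : ℝ[X]) ^ m = ∑ k ∈ Finset.range (m + 2), C (a m k) * Pn s t k := by
  intro m
  induction m with
  | zero =>
    rw [pow_zero, Finset.sum_range_succ, Finset.sum_range_one, h0, h0]
    norm_num [show Pn s t 0 = (1:ℝ[X]) from rfl]
  | succ m ih =>
    have hZ1 : a m (m+1) = 0 := a_vanish s t a h0 h2 _ _ (by omega)
    have hZ2 : a m (m+2) = 0 := a_vanish s t a h0 h2 _ _ (by omega)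
    have hZ3 : a (m+1) (m+2) = 0 := a_vanish s t a h0 h2 _ _ (by omega)
    have eL : (X:ℝ[X])^(m+1) = (∑ k ∈ Finset.range (m+1),
        (C (a m (k+1)) * Pn s t (k+2) + C (s (k+1)) * (C (a m (k+1)) * Pn s t (k+1))
          + C (t k) * (C (a m (k+1)) * Pn s t k)))
        + (C (a m 0) * Pn s t 1 + C (s 0) * (C (a m 0) * Pn s t 0)) := by
      rw [pow_succ, ih, Finset.sum_mul, Finset.sum_range_succ']
      congr 1
      · refine Finset.sum_congr rfl fun k _ => ?_
        rw [show (C (a m (k+1)) * Pn s t (k+1)) * X = C (a m (k+1)) * (X * Pn s t (k+1))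
            from by ring, XPsucc]
        ring
      · rw [show (C (a m 0) * Pn s t 0) * X = C (a m 0) * (X * Pn s t 0) from by ring, XP0]
        ring
    have eR : ∑ k ∈ Finset.range (m+3), C (a (m+1) k) * Pn s t k
        = (∑ k ∈ Finset.range (m+1),
            (C (a m k) * Pn s t (k+1) + C (s (k+1)) * (C (a m (k+1)) * Pn s t (k+1))
              + C (t (k+1)) * (C (a m (k+2)) * Pn s t (k+1))))
          + (C (s 0 * a m 0) * Pn s t 0 + C (t 0 * a m 1) * Pn s t 0) := by
      rw [show m+3 = (m+2)+1 from rfl, Finset.sum_range_succ, hZ3, map_zero, zero_mul, add_zero,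
        Finset.sum_range_succ']
      congr 1
      · refine Finset.sum_congr rfl fun k _ => ?_
        rw [h2, map_add, map_add, map_mul, map_mul]
        ring
      · rw [h1, map_add]
        ring
    rw [eL, eR]
    simp only [Finset.sum_add_distrib]
    have i1 : ∑ k ∈ Finset.range (m+1), C (a m k) * Pn s t (k+1)
        = C (a m 0) * Pn s t 1 + ∑ k ∈ Finset.range (m+1), C (a m (k+1)) * Pn s t (k+2) := by
      rw [Finset.sum_range_succ', Finset.sum_range_succ, hZ1, map_zero, zero_mul, add_zero]
      ring
    have i2 : ∑ k ∈ Finset.range (m+1), C (t k) * (C (a m (k+1)) * Pn s t k)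
        = C (t 0) * (C (a m 1) * Pn s t 0)
          + ∑ k ∈ Finset.range (m+1), C (t (k+1)) * (C (a m (k+2)) * Pn s t (k+1)) := by
      rw [Finset.sum_range_succ', Finset.sum_range_succ, hZ2, map_zero, zero_mul, mul_zero,
        add_zero]
      ring
    rw [i1, i2, map_mul, map_mul]
    ring

lemma Xpow_expand_le (s t : ℕ → ℝ) (a : ℕ → ℕ → ℝ)
    (h0 : ∀ j, a 0 j = if j = 0 then 1 else 0)
    (h1 : ∀ n, a (n + 1) 0 = s 0 * a n 0 + t 0 * a n 1)
    (h2 : ∀ n j, a (n + 1) (j + 1) = a n j + s (j + 1) * a n (j + 1) + t (j + 1) * a n (j + 2))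
    (m N : ℕ) (hm : m ≤ N) :
    (X : ℝ[X]) ^ m = ∑ k ∈ Finset.range (N + 1), C (a m k) * Pn s t k := by
  have e1 : ∑ k ∈ Finset.range (m+2), C (a m k) * Pn s t k
      = ∑ k ∈ Finset.range (N+2), C (a m k) * Pn s t k := by
    refine Finset.sum_subset (Finset.range_subset_range.2 (by omega)) fun k _ hk => ?_
    rw [a_vanish s t a h0 h2 m k (by simp [Finset.mem_range] at hk ⊢; omega), map_zero, zero_mul]
  have e2 : ∑ k ∈ Finset.range (N+1), C (a m k) * Pn s t k
      = ∑ k ∈ Finset.range (N+2), C (a m k) * Pn s t k := by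
    refine Finset.sum_subset (Finset.range_subset_range.2 (by omega)) fun k _ hk => ?_
    rw [a_vanish s t a h0 h2 m k (by simp [Finset.mem_range] at hk ⊢; omega), map_zero, zero_mul]
  rw [Xpow_expand s t a h0 h1 h2, e1, ← e2]

lemma p_eval (s t : ℕ → ℝ) (p : ℕ → ℝ → ℝ)
    (hp0 : ∀ x, p 0 x = 1)
    (hp1 : ∀ x, p 1 x = x - s 0)
    (hp : ∀ n x, p (n + 2) x = (x - s (n + 1)) * p (n + 1) x - t n * p n x) :
    ∀ k x, p k x = (Pn s t k).eval x := by
  intro k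
  induction k using Nat.strong_induction_on with
  | _ k ih =>
    match k with
    | 0 => intro x; simp [hp0, show Pn s t 0 = (1:ℝ[X]) from rfl]
    | 1 => intro x; simp [hp1, show Pn s t 1 = X - C (s 0) from rfl]
    | (k+2) =>
      intro x
      have h : Pn s t (k+2) = (X - C (s (k+1))) * Pn s t (k+1) - C (t k) * Pn s t k := rfl
      rw [hp, h, eval_sub, eval_mul, eval_mul, eval_sub, eval_X, eval_C, eval_C,
        ← ih (k+1) (by omega), ← ih k (by omega)]

lemma key_sum (s t : ℕ → ℝ) (ht : ∀ j, t j ≠ 0) (a : ℕ → ℕ → ℝ)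
    (h0 : ∀ j, a 0 j = if j = 0 then 1 else 0)
    (h1 : ∀ n, a (n + 1) 0 = s 0 * a n 0 + t 0 * a n 1)
    (h2 : ∀ n j, a (n + 1) (j + 1) = a n j + s (j + 1) * a n (j + 1) + t (j + 1) * a n (j + 2))
    (p : ℕ → ℝ → ℝ)
    (hp0 : ∀ x, p 0 x = 1)
    (hp1 : ∀ x, p 1 x = x - s 0)
    (hp : ∀ n x, p (n + 2) x = (x - s (n + 1)) * p (n + 1) x - t n * p n x)
    (n : ℕ) (b : ℕ → ℕ → ℝ)
    (hb : ∀ x y : ℝ,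
      ∑ k ∈ Finset.range (n + 1), p k x * p k y / ∏ j ∈ Finset.range k, t j =
        ∑ i ∈ Finset.range (n + 1), ∑ j ∈ Finset.range (n + 1), b i j * x ^ i * y ^ j)
    (i m : ℕ) (hi : i ≤ n) (hm : m ≤ n) :
    ∑ j ∈ Finset.range (n + 1), b i j * a (j + m) 0 = if i = m then 1 else 0 := by
  have hpe := p_eval s t p hp0 hp1 hp
  -- Step 1: bivariate identity as polynomial identity in y (for each fixed x)
  have hQR : ∀ x : ℝ,
      (∑ k ∈ Finset.range (n+1), C (p k x / ∏ j ∈ Finset.range k, t j) * Pn s t k)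
        = ∑ j ∈ Finset.range (n+1), C (∑ i' ∈ Finset.range (n+1), b i' j * x ^ i')
            * (X:ℝ[X])^j := by
    intro x
    apply Polynomial.funext
    intro y
    rw [eval_finset_sum, eval_finset_sum]
    calc ∑ k ∈ Finset.range (n+1), ((C (p k x / ∏ j ∈ Finset.range k, t j) * Pn s t k).eval y)
        = ∑ k ∈ Finset.range (n+1), p k x * p k y / ∏ j ∈ Finset.range k, t j := by
          refine Finset.sum_congr rfl fun k _ => ?_
          rw [eval_mul, eval_C, ← hpe]
          ring
      _ = ∑ i' ∈ Finset.range (n+1), ∑ j ∈ Finset.range (n+1), b i' j * x ^ i' * y ^ j := hb x y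
      _ = ∑ j ∈ Finset.range (n+1), ∑ i' ∈ Finset.range (n+1), b i' j * x ^ i' * y ^ j :=
          Finset.sum_comm
      _ = ∑ j ∈ Finset.range (n+1),
            ((C (∑ i' ∈ Finset.range (n+1), b i' j * x ^ i') * (X:ℝ[X])^j).eval y) := by
          refine Finset.sum_congr rfl fun j _ => ?_
          rw [eval_mul, eval_C, eval_pow, eval_X, Finset.sum_mul]
  -- Step 2: apply the moment functional to X^m * (·)
  have hq : ∀ x : ℝ, ∑ j ∈ Finset.range (n+1),
      (∑ i' ∈ Finset.range (n+1), b i' j * x ^ i') * a (j + m) 0 = x ^ m := by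
    intro x
    have h := congrArg (fun q => Lf a 0 ((X:ℝ[X])^m * q)) (hQR x)
    simp only [Finset.mul_sum] at h
    rw [map_sum, map_sum] at h
    have hL : ∑ k ∈ Finset.range (n+1),
        Lf a 0 ((X:ℝ[X])^m * (C (p k x / ∏ j ∈ Finset.range k, t j) * Pn s t k))
        = ∑ k ∈ Finset.range (n+1), a m k * p k x := by
      refine Finset.sum_congr rfl fun k _ => ?_
      rw [show (X:ℝ[X])^m * (C (p k x / ∏ j ∈ Finset.range k, t j) * Pn s t k)
          = C (p k x / ∏ j ∈ Finset.range k, t j) * ((X:ℝ[X])^m * Pn s t k) from by ring,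
        Lf_C_mul, momD s t a h0 h1 h2]
      have hπ : (∏ j ∈ Finset.range k, t j) ≠ 0 :=
        Finset.prod_ne_zero_iff.2 fun j _ => ht j
      field_simp
    have hR : ∑ j ∈ Finset.range (n+1),
        Lf a 0 ((X:ℝ[X])^m * (C (∑ i' ∈ Finset.range (n+1), b i' j * x ^ i') * (X:ℝ[X])^j))
        = ∑ j ∈ Finset.range (n+1),
            (∑ i' ∈ Finset.range (n+1), b i' j * x ^ i') * a (j + m) 0 := by
      refine Finset.sum_congr rfl fun j _ => ?_
      rw [show (X:ℝ[X])^m * (C (∑ i' ∈ Finset.range (n+1), b i' j * x ^ i') * (X:ℝ[X])^j)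
          = C (∑ i' ∈ Finset.range (n+1), b i' j * x ^ i') * (X:ℝ[X])^(j+m) from by
            rw [pow_add]; ring,
        Lf_C_mul, Lf_X_pow]
    rw [← hR, ← h, hL]
    -- now: ∑ k a m k * p k x = x ^ m
    have hX := congrArg (Polynomial.eval x) (Xpow_expand_le s t a h0 h1 h2 m n hm)
    rw [eval_pow, eval_X, eval_finset_sum] at hX
    rw [hX]
    exact Finset.sum_congr rfl fun k _ => by rw [eval_mul, eval_C, ← hpe]
  -- Step 3: extract the coefficient of x^i
  have hS : (∑ i' ∈ Finset.range (n+1),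
      C (∑ j ∈ Finset.range (n+1), b i' j * a (j + m) 0) * (X:ℝ[X])^i') = (X:ℝ[X])^m := by
    apply Polynomial.funext
    intro x
    rw [eval_finset_sum, eval_pow, eval_X]
    calc ∑ i' ∈ Finset.range (n+1),
          ((C (∑ j ∈ Finset.range (n+1), b i' j * a (j + m) 0) * (X:ℝ[X])^i').eval x)
        = ∑ i' ∈ Finset.range (n+1), ∑ j ∈ Finset.range (n+1),
            (b i' j * a (j + m) 0) * x ^ i' := by
          refine Finset.sum_congr rfl fun i' _ => ?_
          rw [eval_mul, eval_C, eval_pow, eval_X, Finset.sum_mul]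
      _ = ∑ j ∈ Finset.range (n+1), ∑ i' ∈ Finset.range (n+1),
            (b i' j * a (j + m) 0) * x ^ i' := Finset.sum_comm
      _ = ∑ j ∈ Finset.range (n+1), (∑ i' ∈ Finset.range (n+1), b i' j * x ^ i')
            * a (j + m) 0 := by
          refine Finset.sum_congr rfl fun j _ => ?_
          rw [Finset.sum_mul]
          exact Finset.sum_congr rfl fun i' _ => by ring
      _ = x ^ m := hq x
  have hco := congrArg (fun q : ℝ[X] => q.coeff i) hS
  simp only [Polynomial.finset_sum_coeff, Polynomial.coeff_C_mul, Polynomial.coeff_X_pow,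
    mul_ite, mul_one, mul_zero] at hco
  rw [Finset.sum_ite_eq (Finset.range (n+1)) i
    (fun i' => ∑ j ∈ Finset.range (n+1), b i' j * a (j + m) 0)] at hco
  rw [if_pos (Finset.mem_range.2 (by omega))] at hco
  rw [hco]



/-- With `a` defined by the recurrence (as in Statement 0), `t(j) ≠ 0` for all `j`,
the orthogonal polynomials `p` defined by `p(0,x) = 1`, `p(1,x) = x − s(0)`,
`p(n,x) = (x − s(n-1))p(n-1,x) − t(n-2)p(n-2,x)` for `n ≥ 2`, and coefficients `b_n(i,j)`
determined by `∑_{k=0}^n p(k,x)p(k,y)/(t(0)⋯t(k-1)) = ∑_{i,j=0}^n b_n(i,j) x^i y^j`,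
the matrix `(b_n(i,j))_{i,j=0}^n` is the inverse of the Hankel matrix `(a(i+j,0))_{i,j=0}^n`. -/
theorem kernel_coeffs_inverse_hankel (s t : ℕ → ℝ) (ht : ∀ j, t j ≠ 0) (a : ℕ → ℕ → ℝ)
    (h0 : ∀ j, a 0 j = if j = 0 then 1 else 0)
    (h1 : ∀ n, a (n + 1) 0 = s 0 * a n 0 + t 0 * a n 1)
    (h2 : ∀ n j, a (n + 1) (j + 1) = a n j + s (j + 1) * a n (j + 1) + t (j + 1) * a n (j + 2))
    (p : ℕ → ℝ → ℝ)
    (hp0 : ∀ x, p 0 x = 1)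
    (hp1 : ∀ x, p 1 x = x - s 0)
    (hp : ∀ n x, p (n + 2) x = (x - s (n + 1)) * p (n + 1) x - t n * p n x)
    (n : ℕ) (b : ℕ → ℕ → ℝ)
    (hb : ∀ x y : ℝ,
      ∑ k ∈ Finset.range (n + 1), p k x * p k y / ∏ j ∈ Finset.range k, t j =
        ∑ i ∈ Finset.range (n + 1), ∑ j ∈ Finset.range (n + 1), b i j * x ^ i * y ^ j) :
    (Matrix.of fun i j : Fin (n + 1) => b (i : ℕ) (j : ℕ)) *
        (Matrix.of fun i j : Fin (n + 1) => a ((i : ℕ) + (j : ℕ)) 0) = 1 ∧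
      (Matrix.of fun i j : Fin (n + 1) => a ((i : ℕ) + (j : ℕ)) 0) *
        (Matrix.of fun i j : Fin (n + 1) => b (i : ℕ) (j : ℕ)) = 1 := by
  have hBH : (Matrix.of fun i j : Fin (n + 1) => b (i : ℕ) (j : ℕ)) *
      (Matrix.of fun i j : Fin (n + 1) => a ((i : ℕ) + (j : ℕ)) 0) = 1 := by
    ext i m
    rw [Matrix.mul_apply, Matrix.one_apply]
    simp only [Matrix.of_apply]
    rw [Fin.sum_univ_eq_sum_range (fun j => b (i : ℕ) j * a (j + (m : ℕ)) 0)]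
    rw [key_sum s t ht a h0 h1 h2 p hp0 hp1 hp n b hb (i : ℕ) (m : ℕ)
      (by omega) (by omega)]
    by_cases h : i = m
    · subst h; simp
    · rw [if_neg (fun hc => h (Fin.ext hc)), if_neg h]
  exact ⟨hBH, mul_eq_one_comm.mp hBH⟩
end

section
/- For every real number t and every n ≥ 0, det((t^{i+j}/(i+j+1))_{i,j=0}^{n}) = t^{n²+n} / ∏_{j=1}^{n} ((2j+1)·C(2j,j)²). In particular (t = 1) the Hilbert determinant satisfies det((1/(i+j+1))_{i,j=0}^{n}) = 1/∏_{j=1}^{n} ((2j+1)·C(2j,j)²). -/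
/-!
Let `P` be the lower triangular matrix whose `i`-th row lists the coefficients of the shifted
Legendre polynomial `Pᵢ`. As `1 / (k + l + 1) = ∫₀¹ x ^ (k + l)`, the entry `(P * H) i l` of
its product with the Hilbert matrix `H` is the moment
`∫₀¹ xˡ Pᵢ(x) dx = (-1)ⁱ i! l! C(l, i) / (i + l + 1)!`, which vanishes for `l < i`. Hence
`P * H` is upper triangular and `det H` is the product of the ratios
`(i!)² / ((2i + 1)! C(2i, i)) = 1 / ((2i + 1) C(2i, i)²)` of diagonal entries.
The moment is computed without integrals: expanding `C(i + k, i)` by Vandermonde's identity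
leaves beta sums `∑ⱼ (-1)ʲ C(a, j) / (j + s + 1) = a! s! / (a + s + 1)!` inside an `i`-th
forward difference of `x ↦ C(x, l)`. Scaling row `i` and column `j` by `tⁱ` and `tʲ` gives
the general case.
-/

open Finset Nat Polynomial

open scoped fwdDiff

variable {K : Type*} [Field K] [CharZero K]

theorem sum_range_choose_mul_neg_one_pow_div (a s : ℕ) :
    ∑ j ∈ range (a + 1), (a.choose j : K) * ((-1) ^ j / (j + s + 1)) =
      a ! * s ! / (a + s + 1)! := by
  induction a generalizing s with
  | zero =>
    have := factorial_ne_zero s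
    rw [zero_add, factorial_succ]
    simp [field]
  | succ a ih =>
    have hshift : ∑ j ∈ range (a + 1), (a.choose j : K) * ((-1) ^ (j + 1) / ((j + 1 : ℕ) + s + 1)) =
        -∑ j ∈ range (a + 1), (a.choose j : K) * ((-1) ^ j / (j + (s + 1 : ℕ) + 1)) := by
      rw [← sum_neg_distrib]
      refine sum_congr rfl fun j _ ↦ ?_
      push_cast
      ring
    rw [sum_choose_succ_mul (fun j _ ↦ (-1 : K) ^ j / (j + s + 1)), hshift, ih, ih,
      show a + (s + 1) + 1 = a + s + 1 + 1 by ring, show a + 1 + s + 1 = a + s + 1 + 1 by ring,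
      factorial_succ (a + s + 1), factorial_succ s, factorial_succ a]
    have := factorial_ne_zero (a + s + 1)
    have : (a + s + 1 + 1 : K) ≠ 0 := by exact_mod_cast succ_ne_zero (a + s + 1)
    push_cast
    field_simp
    ring

theorem fwdDiff_iter_choose_apply_self (i l : ℕ) :
    (Δ_[1])^[i] (fun x ↦ x.choose l : ℕ → ℤ) l = l.choose i := by
  rcases le_or_gt i l with h | h
  · obtain ⟨j, rfl⟩ := Nat.exists_eq_add_of_le h
    rw [fwdDiff_iter_choose, choose_symm_add]
  · obtain ⟨j, rfl⟩ := Nat.exists_eq_add_of_lt h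
    have hconst : (Δ_[1])^[l] (fun x ↦ x.choose l : ℕ → ℤ) = fun _ ↦ 1 := by
      simpa using fwdDiff_iter_choose 0 l
    rw [choose_eq_zero_of_lt h, cast_zero, add_assoc, add_comm, Function.iterate_add_apply,
      hconst, Function.iterate_succ_apply, fwdDiff_const, fwdDiff_iter_eq_sum_shift]
    simp

theorem sum_range_neg_one_pow_mul_choose_mul_add_choose (i l : ℕ) :
    ∑ m ∈ range (i + 1), (-1 : ℤ) ^ m * i.choose m * (m + l).choose m = (-1) ^ i * l.choose i := by
  rw [← fwdDiff_iter_choose_apply_self, fwdDiff_iter_eq_sum_shift, mul_sum]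
  refine sum_congr rfl fun m hm ↦ ?_
  rw [smul_eq_mul, smul_eq_mul, mul_one, add_comm l, choose_symm_add,
    ← mul_assoc, ← mul_assoc, ← pow_add]
  congr 2
  rw [show i + (i - m) = 2 * (i - m) + m by grind, pow_add, pow_mul, neg_one_sq,
    one_pow, one_mul]

namespace Nat

theorem choose_mul_add_choose_eq_sum (i k : ℕ) :
    i.choose k * (i + k).choose i =
      ∑ m ∈ range (k + 1), i.choose m ^ 2 * (i - m).choose (k - m) := by
  rw [choose_symm_add, add_choose_eq, sum_antidiagonal_eq_sum_range_succ_mk, mul_sum]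
  refine sum_congr rfl fun m hm ↦ ?_
  dsimp only
  rw [choose_symm (mem_range_succ_iff.mp hm), ← mul_assoc, mul_right_comm,
    choose_mul (mem_range_succ_iff.mp hm)]
  ring

theorem choose_mul_factorial_mul_add_factorial {i m : ℕ} (l : ℕ) (hm : m ≤ i) :
    i.choose m * (i - m)! * (m + l)! = i ! * l ! * (m + l).choose m := by
  rw [← choose_mul_factorial_mul_factorial hm, add_comm m l,
    ← add_choose_mul_factorial_mul_factorial l m]
  ring

end Nat

theorem sum_coeff_shiftedLegendre_div_eq_sum_choose_sq_mul (i l : ℕ) :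
    ∑ k ∈ range (i + 1), ((shiftedLegendre i).coeff k : K) / (k + l + 1) =
      ∑ m ∈ range (i + 1), (-1) ^ m * (i.choose m : K) ^ 2 *
        ∑ j ∈ range (i - m + 1), ((i - m).choose j : K) * ((-1) ^ j / (j + (m + l : ℕ) + 1)) := by
  let f : ℕ → ℕ → K := fun m k ↦
    (-1) ^ m * (i.choose m : K) ^ 2 * ((i - m).choose (k - m) * ((-1) ^ (k - m) / (k + l + 1)))
  calc ∑ k ∈ range (i + 1), ((shiftedLegendre i).coeff k : K) / (k + l + 1)
      = ∑ k ∈ Ico 0 (i + 1), ∑ m ∈ Ico 0 (k + 1), f m k := by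
        simp only [← range_eq_Ico, coeff_shiftedLegendre, f]
        refine sum_congr rfl fun k _ ↦ ?_
        have hvand : (i.choose k * (i + k).choose i : K) =
            ∑ m ∈ range (k + 1), (i.choose m : K) ^ 2 * (i - m).choose (k - m) :=
          mod_cast choose_mul_add_choose_eq_sum i k
        push_cast
        rw [mul_assoc, hvand, mul_sum, sum_div]
        refine sum_congr rfl fun m hm ↦ ?_
        rw [← pow_sub_mul_pow (-1 : K) (mem_range_succ_iff.mp hm)]
        ring
    _ = _ := by
        rw [← sum_Ico_Ico_comm, ← range_eq_Ico]
        refine sum_congr rfl fun m hm ↦ ?_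
        rw [sum_Ico_eq_sum_range, mul_sum, show i + 1 - m = i - m + 1 by grind]
        refine sum_congr rfl fun j _ ↦ ?_
        simp only [f, add_tsub_cancel_left]
        push_cast
        ring

theorem sum_coeff_shiftedLegendre_div (i l : ℕ) :
    ∑ k ∈ range (i + 1), ((shiftedLegendre i).coeff k : K) / (k + l + 1) =
      (-1) ^ i * i ! * l ! * l.choose i / (i + l + 1)! := by
  rw [sum_coeff_shiftedLegendre_div_eq_sum_choose_sq_mul]
  calc ∑ m ∈ range (i + 1), (-1) ^ m * (i.choose m : K) ^ 2 *
        ∑ j ∈ range (i - m + 1), ((i - m).choose j : K) * ((-1) ^ j / (j + (m + l : ℕ) + 1))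
      = (i ! * l ! / (i + l + 1)! : K) *
          ((∑ m ∈ range (i + 1), (-1 : ℤ) ^ m * i.choose m * (m + l).choose m : ℤ) : K) := by
        rw [Int.cast_sum, mul_sum]
        refine sum_congr rfl fun m hm ↦ ?_
        have hm : m ≤ i := mem_range_succ_iff.mp hm
        have hfact : ((i.choose m * (i - m)! * (m + l)! : ℕ) : K) = i ! * l ! * (m + l).choose m :=
          mod_cast choose_mul_factorial_mul_add_factorial l hm
        rw [sum_range_choose_mul_neg_one_pow_div, show i - m + (m + l) + 1 = i + l + 1 by grind]
        push_cast at hfact ⊢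
        linear_combination ((-1) ^ m * (i.choose m : K) / (i + l + 1)!) * hfact
    _ = (-1) ^ i * i ! * l ! * l.choose i / (i + l + 1)! := by
        rw [sum_range_neg_one_pow_mul_choose_mul_add_choose]
        push_cast
        ring

open Matrix

noncomputable def legendreMatrix (R : Type*) [Ring R] (n : ℕ) : Matrix (Fin n) (Fin n) R :=
  of fun i k ↦ ((shiftedLegendre i).coeff k : R)

def hilbertMatrix (K : Type*) [DivisionRing K] (n : ℕ) : Matrix (Fin n) (Fin n) K :=
  of fun i j ↦ 1 / (((i : ℕ) + (j : ℕ) + 1 : ℕ) : K)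

section Matrices

variable {n : ℕ}

theorem legendreMatrix_apply {R : Type*} [Ring R] (i k : Fin n) :
    legendreMatrix R n i k = (-1) ^ (k : ℕ) * (i : ℕ).choose k * ((i + k : ℕ)).choose i := by
  simp [legendreMatrix, coeff_shiftedLegendre]

theorem legendreMatrix_isLowerTriangular {R : Type*} [Ring R] :
    (legendreMatrix R n).IsLowerTriangular := fun i k hik ↦ by
  simp [legendreMatrix_apply, choose_eq_zero_of_lt (show (i : ℕ) < k from hik)]

theorem det_legendreMatrix {R : Type*} [CommRing R] :
    det (legendreMatrix R n) = ∏ i : Fin n, (-1) ^ (i : ℕ) * ((2 * i : ℕ).choose i : R) := by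
  rw [det_of_isLowerTriangular _ legendreMatrix_isLowerTriangular]
  simp [legendreMatrix_apply, two_mul]

theorem legendreMatrix_mul_hilbertMatrix_apply (i l : Fin n) :
    (legendreMatrix K n * hilbertMatrix K n) i l =
      (-1) ^ (i : ℕ) * (i : ℕ)! * (l : ℕ)! * (l : ℕ).choose i / ((i : ℕ) + l + 1)! := by
  rw [← sum_coeff_shiftedLegendre_div, mul_apply]
  simp only [legendreMatrix, hilbertMatrix, of_apply, mul_one_div]
  rw [Fin.sum_univ_eq_sum_range
      (fun k ↦ ((shiftedLegendre i).coeff k : K) / ((k + l + 1 : ℕ) : K)) n,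
    ← sum_subset (range_subset_range.mpr i.isLt) fun k _ hk ↦ ?_]
  · push_cast
    rfl
  · rw [coeff_eq_zero_of_natDegree_lt (by simpa using hk)]
    simp

theorem legendreMatrix_mul_hilbertMatrix_isUpperTriangular :
    (legendreMatrix K n * hilbertMatrix K n).IsUpperTriangular := fun i l hli ↦ by
  rw [legendreMatrix_mul_hilbertMatrix_apply, choose_eq_zero_of_lt (show (l : ℕ) < i from hli)]
  simp

theorem det_hilbertMatrix (n : ℕ) :
    det (hilbertMatrix K n) = 1 / ∏ i ∈ range n, ((2 * i + 1 : K) * (2 * i).choose i ^ 2) := by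
  have hdiag (i : ℕ) :
      (-1) ^ i * i ! * i ! * i.choose i / (i + i + 1)! / ((-1) ^ i * (2 * i).choose i) =
        ((2 * i + 1 : K) * (2 * i).choose i ^ 2)⁻¹ := by
    have := factorial_ne_zero i
    have := (choose_pos (le_add_right i i)).ne'
    have : (i + i + 1 : K) ≠ 0 := by exact_mod_cast succ_ne_zero (i + i)
    rw [choose_self, two_mul, factorial_succ, ← add_choose_mul_factorial_mul_factorial]
    push_cast
    field_simp
    ring
  have hP : det (legendreMatrix K n) ≠ 0 := by
    rw [det_legendreMatrix]
    exact prod_ne_zero_iff.mpr fun i _ ↦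
      mul_ne_zero (by simp) (by exact_mod_cast (choose_pos (by omega : (i : ℕ) ≤ 2 * i)).ne')
  rw [← mul_div_cancel_left₀ (det (hilbertMatrix K n)) hP, ← det_mul,
    det_of_isUpperTriangular legendreMatrix_mul_hilbertMatrix_isUpperTriangular, det_legendreMatrix,
    ← prod_div_distrib, ← Fin.prod_univ_eq_prod_range, one_div, ← prod_inv_distrib]
  refine prod_congr rfl fun i _ ↦ ?_
  rw [legendreMatrix_mul_hilbertMatrix_apply, hdiag]

end Matrices

theorem det_of_pow_add_mul {R : Type*} [CommRing R] {n : ℕ} (t : R) (A : Matrix (Fin n) (Fin n) R) :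
    det (of fun i j : Fin n ↦ t ^ ((i : ℕ) + j) * A i j) = t ^ (n * (n - 1)) * det A := by
  have hsplit : (of fun i j : Fin n ↦ t ^ ((i : ℕ) + j) * A i j) =
      of fun (i j : Fin n) ↦ t ^ (i : ℕ) * of (fun i j : Fin n ↦ t ^ (j : ℕ) * A i j) i j := by
    ext i j
    simp only [of_apply, pow_add, mul_assoc]
  rw [hsplit, det_mul_column, det_mul_row, ← mul_assoc, ← sq, prod_pow_eq_pow_sum, ← pow_mul,
    Fin.sum_univ_eq_sum_range (fun i ↦ i), sum_range_id_mul_two]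

/-- `det((t^{i+j}/(i+j+1))_{i,j=0}^n) = t^{n²+n} / ∏_{j=1}^n ((2j+1)·C(2j,j)²)`;
in particular for `t = 1` the Hilbert determinant is `1/∏_{j=1}^n ((2j+1)·C(2j,j)²)`. -/
theorem det_hilbert_type (t : ℝ) (n : ℕ) :
    Matrix.det (Matrix.of fun i j : Fin (n + 1) =>
        t ^ ((i : ℕ) + (j : ℕ)) / (((i : ℕ) + (j : ℕ) + 1 : ℕ) : ℝ)) =
      t ^ (n ^ 2 + n) /
        ∏ j ∈ Finset.Icc 1 n, ((2 * (j : ℝ) + 1) * (Nat.choose (2 * j) j : ℝ) ^ 2) ∧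
    Matrix.det (Matrix.of fun i j : Fin (n + 1) =>
        (1 : ℝ) / (((i : ℕ) + (j : ℕ) + 1 : ℕ) : ℝ)) =
      1 / ∏ j ∈ Finset.Icc 1 n, ((2 * (j : ℝ) + 1) * (Nat.choose (2 * j) j : ℝ) ^ 2) := by
  have hprod : ∏ i ∈ range (n + 1), ((2 * i + 1 : ℝ) * (2 * i).choose i ^ 2) =
      ∏ j ∈ Icc 1 n, ((2 * (j : ℝ) + 1) * (Nat.choose (2 * j) j : ℝ) ^ 2) := by
    rw [range_eq_Ico, prod_eq_prod_Ico_succ_bot (succ_pos n), succ_eq_add_one,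
      Ico_add_one_right_eq_Icc]
    simp
  have hhilbert : det (hilbertMatrix ℝ (n + 1)) =
      1 / ∏ j ∈ Icc 1 n, ((2 * (j : ℝ) + 1) * (Nat.choose (2 * j) j : ℝ) ^ 2) := by
    rw [det_hilbertMatrix, hprod]
  refine ⟨?_, hhilbert⟩
  have hscale : (of fun i j : Fin (n + 1) ↦ t ^ ((i : ℕ) + j) / ((i + j + 1 : ℕ) : ℝ)) =
      of fun (i j : Fin (n + 1)) ↦ t ^ ((i : ℕ) + j) * hilbertMatrix ℝ (n + 1) i j := by
    ext i j
    simp only [hilbertMatrix, of_apply, mul_one_div]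
  rw [hscale, det_of_pow_add_mul, hhilbert, mul_one_div, add_tsub_cancel_right]
  ring
end

section
/- Define P_n(x,t) = ∑_{j=0}^{n} (−t)^{n−j}·C(n,j)·C(n+j,j)·x^j for n ≥ 0 and real x, t. Then for all n ≥ 0 and all real x, t: (n+2)·P_{n+2}(x,t) − (2x − t)·(2n+3)·P_{n+1}(x,t) + t²·(n+1)·P_n(x,t) = 0, with P_0(x,t) = 1 and P_1(x,t) = 2x − t. -/
/-- `P_n(x,t) = ∑_{j=0}^n (−t)^{n−j}·C(n,j)·C(n+j,j)·x^j` (shifted Legendre polynomials for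
`t = 1`). -/
noncomputable def shiftedLegendre (n : ℕ) (x t : ℝ) : ℝ :=
  ∑ j ∈ Finset.range (n + 1),
    (-t) ^ (n - j) * (Nat.choose n j : ℝ) * (Nat.choose (n + j) j : ℝ) * x ^ j

/-!
With `u = -t` and `a(n,j) = C(n,j)·C(n+j,j)`, `P_n(x,t) = ∑ⱼ a(n,j) u^(n-j) x^j` is a binary
form, and comparing coefficients of `u^(n+1-j) x^(j+1)` reduces the recurrence to
`(n+2) a(n+2,j+1) + (n+1) a(n,j+1) = (2n+3) (a(n+1,j+1) + 2 a(n+1,j))`.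
This follows from the two ratio identities
`(j+1)² a(n+1,j+1) = (n+j+2)(n+j+1) a(n,j)` and `(n+1-j) a(n+1,j) = (n+1+j) a(n,j)`:
written without division they hold for all `n, j`, including where the coefficients vanish,
so a single linear combination of them, multiplied by `(j+1)²(n+j+2)`, gives the identity.
-/

open Finset

theorem Nat.cast_choose_mul_succ_eq {R : Type*} [CommRing R] (n k : ℕ) :
    (n.choose k : R) * (n + 1) = (n + 1).choose k * ((n : R) + 1 - k) := by
  rcases le_or_gt k (n + 1) with h | h
  · have := congrArg (Nat.cast : ℕ → R) (Nat.choose_mul_succ_eq n k)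
    push_cast [Nat.cast_sub h] at this
    exact this
  · simp [Nat.choose_eq_zero_of_lt h, Nat.choose_eq_zero_of_lt (by omega : n < k)]

def legendreCoeff (n j : ℕ) : ℕ := n.choose j * (n + j).choose j

theorem legendreCoeff_eq_zero_of_lt {n j : ℕ} (h : n < j) : legendreCoeff n j = 0 := by
  simp [legendreCoeff, Nat.choose_eq_zero_of_lt h]

@[simp]
theorem legendreCoeff_zero_right (n : ℕ) : legendreCoeff n 0 = 1 := by
  simp [legendreCoeff]

theorem legendreCoeff_succ_left (n j : ℕ) :
    ((n : ℤ) + 1 - j) * legendreCoeff (n + 1) j = (n + 1 + j) * legendreCoeff n j := by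
  have h₁ := Nat.cast_choose_mul_succ_eq (R := ℤ) n j
  have h₂ := Nat.cast_choose_mul_succ_eq (R := ℤ) (n + j) j
  refine mul_right_cancel₀ (b := (n : ℤ) + 1) (by positivity) ?_
  rw [legendreCoeff, legendreCoeff, show n + 1 + j = n + j + 1 by ring]
  push_cast at h₂ ⊢
  linear_combination
    -(((n + j + 1).choose j : ℤ) * (n + 1)) * h₁ - ((n.choose j : ℤ) * (n + 1)) * h₂

theorem legendreCoeff_succ_succ (n j : ℕ) :
    (j + 1) ^ 2 * legendreCoeff (n + 1) (j + 1) =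
      (n + j + 2) * (n + j + 1) * legendreCoeff n j := by
  have h₁ := Nat.add_one_mul_choose_eq n j
  have h₂ := Nat.add_one_mul_choose_eq (n + j + 1) j
  have h₃ := Nat.cast_choose_mul_succ_eq (R := ℤ) (n + j) j
  zify at h₁ h₂ ⊢
  refine mul_right_cancel₀ (b := (n : ℤ) + 1) (by positivity) ?_
  rw [legendreCoeff, legendreCoeff, show n + 1 + (j + 1) = n + j + 1 + 1 by ring]
  push_cast at h₁ h₂ h₃ ⊢
  linear_combination
    -(((n + j + 1 + 1).choose (j + 1) : ℤ) * (j + 1) * (n + 1)) * h₁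
      - ((n + 1) * (n.choose j : ℤ) * (n + 1)) * h₂
      - ((n + 1) * (n.choose j : ℤ) * (n + j + 2)) * h₃

theorem legendreCoeff_recurrence (n j : ℕ) :
    (n + 2) * legendreCoeff (n + 2) (j + 1) + (n + 1) * legendreCoeff n (j + 1) =
      (2 * n + 3) * (legendreCoeff (n + 1) (j + 1) + 2 * legendreCoeff (n + 1) j) := by
  have d₁ := legendreCoeff_succ_succ (n + 1) j
  have d₀ := legendreCoeff_succ_succ n j
  have e₀ := legendreCoeff_succ_left n j
  have e₁ := legendreCoeff_succ_left n (j + 1)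
  zify at d₁ d₀ ⊢
  refine mul_left_cancel₀ (a := ((j : ℤ) + 1) ^ 2 * (n + j + 2)) (by positivity) ?_
  push_cast at d₁ d₀ e₁ ⊢
  set q : ℤ := (2 * n + 3) * (n + j + 2) - (n + 1) * (n - j)
  linear_combination ((n : ℤ) + 2) * (n + j + 2) * d₁ - q * d₀ + (n + j + 2) * q * e₀
    - ((n : ℤ) + 1) * (j + 1) ^ 2 * e₁

section Form

variable {R : Type*} [CommRing R]

def shiftedLegendreTerm (m j : ℕ) (u x : R) : R := legendreCoeff m j * u ^ (m - j) * x ^ j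

def shiftedLegendreForm (n : ℕ) (u x : R) : R :=
  ∑ j ∈ range (n + 1), shiftedLegendreTerm n j u x

theorem shiftedLegendreTerm_eq_zero_of_lt {m j : ℕ} (h : m < j) (u x : R) :
    shiftedLegendreTerm m j u x = 0 := by
  simp [shiftedLegendreTerm, legendreCoeff_eq_zero_of_lt h]

theorem shiftedLegendreForm_eq_sum_range {n N : ℕ} (h : n < N) (u x : R) :
    shiftedLegendreForm n u x = ∑ j ∈ range N, shiftedLegendreTerm n j u x :=
  sum_subset (range_subset_range.2 h) fun _ _ hj =>
    shiftedLegendreTerm_eq_zero_of_lt (by simpa using hj) u x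

@[simp]
theorem shiftedLegendreTerm_zero_right (m : ℕ) (u x : R) :
    shiftedLegendreTerm m 0 u x = u ^ m := by
  simp [shiftedLegendreTerm]

theorem pow_mul_shiftedLegendreTerm (k m j : ℕ) (u x : R) :
    u ^ k * shiftedLegendreTerm m j u x = legendreCoeff m j * u ^ (m + k - j) * x ^ j := by
  rcases le_or_gt j m with h | h
  · rw [shiftedLegendreTerm, Nat.sub_add_comm h, pow_add]
    ring
  · simp [shiftedLegendreTerm, legendreCoeff_eq_zero_of_lt h]

theorem shiftedLegendreTerm_recurrence (n j : ℕ) (u x : R) :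
    (n + 2) * shiftedLegendreTerm (n + 2) (j + 1) u x
      - (2 * n + 3) * u * shiftedLegendreTerm (n + 1) (j + 1) u x
      + (n + 1) * u ^ 2 * shiftedLegendreTerm n (j + 1) u x
      = 2 * (2 * n + 3) * x * shiftedLegendreTerm (n + 1) j u x := by
  have hc := congrArg (Nat.cast : ℕ → R) (legendreCoeff_recurrence n j)
  have h₁ := pow_mul_shiftedLegendreTerm 1 (n + 1) (j + 1) u x
  have h₂ := pow_mul_shiftedLegendreTerm 2 n (j + 1) u x
  simp only [shiftedLegendreTerm, show n + 1 + 1 - (j + 1) = n + 1 - j by omega, pow_one]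
    at h₁ h₂ ⊢
  push_cast at hc
  linear_combination (u ^ (n + 1 - j) * x ^ (j + 1)) * hc - (2 * n + 3 : R) * h₁
    + (n + 1 : R) * h₂

theorem shiftedLegendreForm_recurrence (n : ℕ) (u x : R) :
    (n + 2) * shiftedLegendreForm (n + 2) u x + (n + 1) * u ^ 2 * shiftedLegendreForm n u x =
      (2 * n + 3) * (2 * x + u) * shiftedLegendreForm (n + 1) u x := by
  have hsum : ∑ j ∈ range (n + 3), ((n + 2) * shiftedLegendreTerm (n + 2) j u x
      - (2 * n + 3) * u * shiftedLegendreTerm (n + 1) j u x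
      + (n + 1) * u ^ 2 * shiftedLegendreTerm n j u x)
      = 2 * (2 * n + 3) * x * ∑ j ∈ range (n + 3), shiftedLegendreTerm (n + 1) j u x := by
    rw [sum_range_succ', sum_range_succ _ (n + 2),
      shiftedLegendreTerm_eq_zero_of_lt (by omega : n + 1 < n + 2), add_zero, mul_sum]
    simp only [shiftedLegendreTerm_recurrence, shiftedLegendreTerm_zero_right]
    ring
  rw [shiftedLegendreForm_eq_sum_range (by omega : n + 2 < n + 3),
    shiftedLegendreForm_eq_sum_range (by omega : n + 1 < n + 3),
    shiftedLegendreForm_eq_sum_range (by omega : n < n + 3)]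
  simp only [sum_add_distrib, sum_sub_distrib, ← mul_sum] at hsum
  linear_combination hsum

end Form

theorem shiftedLegendre_eq_shiftedLegendreForm (n : ℕ) (x t : ℝ) :
    shiftedLegendre n x t = shiftedLegendreForm n (-t) x := by
  simp only [shiftedLegendre, shiftedLegendreForm, shiftedLegendreTerm, legendreCoeff, Nat.cast_mul]
  exact sum_congr rfl fun j _ => by ring

/-- `(n+2)P_{n+2}(x,t) − (2x−t)(2n+3)P_{n+1}(x,t) + t²(n+1)P_n(x,t) = 0`,
with `P_0(x,t) = 1` and `P_1(x,t) = 2x − t`. -/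
theorem shiftedLegendre_recurrence :
    (∀ (n : ℕ) (x t : ℝ),
      ((n : ℝ) + 2) * shiftedLegendre (n + 2) x t -
          (2 * x - t) * (2 * (n : ℝ) + 3) * shiftedLegendre (n + 1) x t +
          t ^ 2 * ((n : ℝ) + 1) * shiftedLegendre n x t = 0) ∧
    (∀ x t : ℝ, shiftedLegendre 0 x t = 1 ∧ shiftedLegendre 1 x t = 2 * x - t) := by
  simp only [shiftedLegendre_eq_shiftedLegendreForm]
  refine ⟨fun n x t => ?_, fun x t => ⟨?_, ?_⟩⟩
  · linear_combination shiftedLegendreForm_recurrence n (-t) x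
  · simp [shiftedLegendreForm, shiftedLegendreTerm]
  · simp [shiftedLegendreForm, shiftedLegendreTerm, sum_range_succ, legendreCoeff]
    ring
end

section
/- For every n ≥ 1 and every real t, ∑_{j=0}^{n} (−t)^{n−j}·C(n,j)·C(n+j,j)·t^j/(j+1) = 0. Equivalently, ∑_{j=0}^{n} (−1)^{n−j}·C(n,j)·C(n+j,j)/(j+1) = 0 for n ≥ 1. -/
/-!
Since `(n + 1) * C(n, j) / (j + 1) = C(n + 1, j + 1)`, multiplying the scalar sum by `n + 1` turns
it into `∑ₖ (-1)^(n+1-k) C(n+1, k) C(n-1+k, n)`, the `(n + 1)`-st forward difference at `n - 1` of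
`x ↦ C(x, n)`; a polynomial of degree `n` has vanishing `(n + 1)`-st differences. The `t`-version
is `t ^ n` times the scalar sum.
-/

open Finset fwdDiff

theorem fwdDiff_iter_choose_eq_zero_of_lt {n m : ℕ} (h : n < m) :
    (Δ_[1])^[m] (fun x ↦ x.choose n : ℕ → ℤ) = 0 := by
  obtain ⟨k, rfl⟩ := Nat.exists_eq_add_of_lt h
  have hconst : (Δ_[1])^[n] (fun x ↦ x.choose n : ℕ → ℤ) = fun _ ↦ 1 := by
    simpa using fwdDiff_iter_choose 0 n
  rw [add_assoc, add_comm, Function.iterate_add_apply, hconst]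
  simp only [Function.iterate_succ_apply, fwdDiff_const]
  exact Function.iterate_fixed (fwdDiff_const 1 0) k

theorem alternating_sum_choose_mul_choose_add_eq_zero {n m : ℕ} (h : n < m) (a : ℕ) :
    ∑ k ∈ range (m + 1), (-1 : ℤ) ^ (m - k) * m.choose k * (a + k).choose n = 0 := by
  simpa [fwdDiff_iter_eq_sum_shift] using congr_fun (fwdDiff_iter_choose_eq_zero_of_lt h) a

theorem alternating_sum_choose_mul_choose_div_succ_eq_zero {K : Type*} [Field K] [CharZero K]
    {n : ℕ} (hn : 0 < n) :
    ∑ j ∈ range (n + 1), (-1 : K) ^ (n - j) * n.choose j * (n + j).choose j / (j + 1) = 0 := by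
  have hsum : ∑ k ∈ range (n + 2),
      (-1 : K) ^ (n + 1 - k) * (n + 1).choose k * (n - 1 + k).choose n = 0 := by
    exact_mod_cast alternating_sum_choose_mul_choose_add_eq_zero (Nat.lt_succ_self n) (n - 1)
  rw [sum_range_succ', Nat.choose_eq_zero_of_lt (by omega : n - 1 + 0 < n)] at hsum
  refine (mul_eq_zero.mp ?_).resolve_right (Nat.cast_add_one_ne_zero n)
  rw [sum_mul, ← hsum, Nat.cast_zero, mul_zero, add_zero]
  refine sum_congr rfl fun j hj ↦ ?_
  have hj : j ≤ n := Nat.lt_succ_iff.mp (mem_range.mp hj)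
  have hsucc : ((n : K) + 1) * n.choose j = (n + 1).choose (j + 1) * (j + 1) := by
    exact_mod_cast Nat.add_one_mul_choose_eq n j
  rw [show n - 1 + (j + 1) = n + j by omega, show n + 1 - (j + 1) = n - j by omega,
    ← Nat.choose_symm_add]
  field_simp
  linear_combination ((n + j).choose n : K) * hsucc

/-- For `n ≥ 1`, `∑_{j=0}^n (−t)^{n−j}·C(n,j)·C(n+j,j)·t^j/(j+1) = 0`;
equivalently `∑_{j=0}^n (−1)^{n−j}·C(n,j)·C(n+j,j)/(j+1) = 0`. -/
theorem legendre_moment_vanishes (n : ℕ) (hn : 1 ≤ n) :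
    (∀ t : ℝ,
      ∑ j ∈ Finset.range (n + 1),
        (-t) ^ (n - j) * (Nat.choose n j : ℝ) * (Nat.choose (n + j) j : ℝ) * t ^ j /
          ((j : ℝ) + 1) = 0) ∧
    ∑ j ∈ Finset.range (n + 1),
      (-1 : ℝ) ^ (n - j) * (Nat.choose n j : ℝ) * (Nat.choose (n + j) j : ℝ) /
        ((j : ℝ) + 1) = 0 := by
  have hscalar := alternating_sum_choose_mul_choose_div_succ_eq_zero (K := ℝ) hn
  refine ⟨fun t ↦ ?_, hscalar⟩
  calc _ = t ^ n * ∑ j ∈ range (n + 1),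
        (-1 : ℝ) ^ (n - j) * n.choose j * (n + j).choose j / (j + 1) := by
        rw [mul_sum]
        refine sum_congr rfl fun j hj ↦ ?_
        rw [neg_pow, ← pow_sub_mul_pow t (Nat.lt_succ_iff.mp (mem_range.mp hj))]
        ring
    _ = 0 := by rw [hscalar, mul_zero]
end

section
/- For every n ≥ 0, the inverse of the Hilbert matrix M_n = (1/(i+j+1))_{i,j=0}^{n} is the matrix whose (i,j) entry is (−1)^{i+j}·(i+j+1)·C(n+i+1, n−j)·C(n+j+1, n−i)·C(i+j, i)². In particular, all entries of M_n^{-1} are integers. -/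
open Finset Polynomial Nat

-- L3: factorial times ascending product
lemma prodAllNat (n k : ℕ) : k ! * ∏ m ∈ range (n+1), (k + m + 1) = (k + n + 1)! := by
  induction n with
  | zero => simp [Nat.factorial_succ]; ring
  | succ n ih =>
    rw [prod_range_succ, ← Nat.mul_assoc, ih]
    have h : k + (n+1) + 1 = (k + n + 1) + 1 := by omega
    rw [h]; simp [Nat.factorial_succ]; ring

lemma prodAll (n k : ℕ) :
    (k ! : ℝ) * ∏ m ∈ range (n+1), ((k : ℝ) + m + 1) = ((k + n + 1)! : ℝ) := by
  rw [← prodAllNat n k]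
  push_cast
  ring

lemma prodReflNat (k : ℕ) : ∏ m ∈ range k, (k - m) = k ! := by
  rw [← prod_range_reflect (fun m => k - m) k, ← Finset.prod_range_add_one_eq_factorial]
  apply prod_congr rfl
  intro j hj
  simp only [mem_range] at hj
  omega

lemma prodIcoNat (n k : ℕ) (hk : k ≤ n) : ∏ m ∈ Ico (k+1) (n+1), (m - k) = (n - k)! := by
  rw [prod_Ico_eq_prod_range, ← Finset.prod_range_add_one_eq_factorial]
  have : n + 1 - (k + 1) = n - k := by omega
  rw [this]
  apply prod_congr rfl
  intro j hj
  omega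

-- the crucial product over the erased range
lemma prodErase (n k : ℕ) (hk : k ≤ n) :
    ∏ m ∈ (range (n+1)).erase k, ((m : ℝ) - k) = (-1)^k * k ! * (n-k)! := by
  have hsplit : (range (n+1)).erase k = range k ∪ Ico (k+1) (n+1) := by
    ext m
    simp only [mem_erase, mem_range, mem_union, mem_Ico]
    omega
  have hdisj : Disjoint (range k) (Ico (k+1) (n+1)) := by
    simp only [disjoint_left, mem_range, mem_Ico]
    omega
  rw [hsplit, prod_union hdisj]
  have h1 : ∏ m ∈ range k, ((m:ℝ) - k) = (-1)^k * k ! := by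
    have hc : ∀ m ∈ range k, ((m:ℝ) - k) = (-1) * (((k - m : ℕ) : ℝ)) := by
      intro m hm
      simp only [mem_range] at hm
      push_cast [Nat.cast_sub hm.le]
      ring
    rw [prod_congr rfl hc, prod_mul_distrib, prod_const, card_range, ← Nat.cast_prod,
      prodReflNat]
  have h2 : ∏ m ∈ Ico (k+1) (n+1), ((m:ℝ) - k) = ((n-k)! : ℝ) := by
    have hc : ∀ m ∈ Ico (k+1) (n+1), ((m:ℝ) - k) = (((m - k : ℕ) : ℝ)) := by
      intro m hm
      simp only [mem_Ico] at hm
      push_cast [Nat.cast_sub (by omega : k ≤ m)]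
      ring
    rw [prod_congr rfl hc, ← Nat.cast_prod, prodIcoNat n k hk]
  rw [h1, h2]

lemma natkey (n i k : ℕ) (hi : i ≤ n) (hk : k ≤ n) :
    (n+i+1)! * (n+k+1)! =
      (i+k+1)^2 * ((n+i+1).choose (n-k)) * ((n+k+1).choose (n-i)) * ((i+k).choose i)^2
        * (k ! * k ! * (n-i)! * (n-k)! * i ! * i !) := by
  have h1 : (n+i+1).choose (n-k) * ((n-k)! * (i+k+1)!) = (n+i+1)! := by
    have := Nat.choose_mul_factorial_mul_factorial (show n-k ≤ n+i+1 by omega)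
    rw [show n+i+1-(n-k) = i+k+1 by omega] at this
    rw [← this]; ring
  have h2 : (n+k+1).choose (n-i) * ((n-i)! * (i+k+1)!) = (n+k+1)! := by
    have := Nat.choose_mul_factorial_mul_factorial (show n-i ≤ n+k+1 by omega)
    rw [show n+k+1-(n-i) = i+k+1 by omega] at this
    rw [← this]; ring
  have h3 : (i+k).choose i * (i ! * k !) = (i+k)! := by
    have := Nat.choose_mul_factorial_mul_factorial (show i ≤ i+k by omega)
    rw [show i+k-i = k by omega] at this
    rw [← this]; ring
  have h4 : (i+k+1)! = (i+k+1) * ((i+k).choose i * (i ! * k !)) := by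
    rw [h3, Nat.factorial_succ]
  rw [← h1, ← h2, h4]
  ring


lemma hsq (m : ℕ) : ((-1:ℝ))^m * (-1)^m = 1 := by
  rw [← pow_add, ← two_mul, pow_mul]; norm_num

lemma hilbert_key (n i j : ℕ) (hi : i ≤ n) (hj : j ≤ n) :
    ∑ k ∈ range (n+1),
      ((-1:ℝ) ^ (i + k) * ((i + k + 1 : ℕ) : ℝ) * ((n + i + 1).choose (n - k) : ℝ) *
        ((n + k + 1).choose (n - i) : ℝ) * (((i + k).choose i : ℝ)) ^ 2) *
        (1 / ((k + j + 1 : ℕ) : ℝ)) = if i = j then 1 else 0 := by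
  have himem : i ∈ range (n+1) := mem_range.mpr (by omega)
  have hjmem : j ∈ range (n+1) := mem_range.mpr (by omega)
  set b : ℕ → ℝ := fun k => (-1:ℝ)^(i+k) * ((i+k+1 : ℕ):ℝ) * ((n+i+1).choose (n-k) : ℝ) *
    ((n+k+1).choose (n-i) : ℝ) * (((i+k).choose i : ℝ))^2 with hb
  set c : ℝ := (-1:ℝ)^(i+n) * ((n+i+1)! : ℝ) / (((n-i)! : ℝ) * ((i ! : ℝ) * (i ! : ℝ)))
    with hc
  set P : Polynomial ℝ :=
    ∑ k ∈ range (n+1), C (b k) * ∏ m ∈ (range (n+1)).erase k, (X + C (m:ℝ)) with hP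
  set Q : Polynomial ℝ := C c * ∏ t ∈ (range (n+1)).erase i, (X - C ((t:ℝ)+1)) with hQ
  -- degree bounds
  have hccard : ∀ k ∈ range (n+1), ((range (n+1)).erase k).card = n := by
    intro k hk; rw [card_erase_of_mem hk, card_range]; omega
  have hdegP : P.degree < (#(range (n+1)) : WithBot ℕ) := by
    rw [card_range]
    refine lt_of_le_of_lt (degree_sum_le _ _) ?_
    rw [Finset.sup_lt_iff (by exact_mod_cast WithBot.bot_lt_coe (n+1))]
    intro k hk
    refine lt_of_le_of_lt (degree_mul_le _ _) ?_
    have h1 : (∏ m ∈ (range (n+1)).erase k, (X + C ((m:ℕ):ℝ))).degree = (n : WithBot ℕ) := by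
      rw [degree_prod]
      have h2 : ∑ m ∈ (range (n+1)).erase k, (X + C ((m:ℕ):ℝ)).degree
          = ∑ m ∈ (range (n+1)).erase k, (1 : WithBot ℕ) :=
        Finset.sum_congr rfl fun m _ => degree_X_add_C _
      rw [h2, Finset.sum_const, hccard k hk, nsmul_eq_mul, mul_one]
    calc (C (b k)).degree + (∏ m ∈ (range (n+1)).erase k, (X + C ((m:ℕ):ℝ))).degree
        ≤ 0 + (n : WithBot ℕ) := add_le_add degree_C_le (le_of_eq h1)
      _ = (n : WithBot ℕ) := zero_add _
      _ < ((n+1 : ℕ) : WithBot ℕ) := by exact_mod_cast Nat.lt_succ_self n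
  have hdegQ : Q.degree < (#(range (n+1)) : WithBot ℕ) := by
    rw [card_range]
    refine lt_of_le_of_lt (degree_mul_le _ _) ?_
    have h1 : (∏ t ∈ (range (n+1)).erase i, (X - C ((t:ℝ)+1))).degree = (n : WithBot ℕ) := by
      rw [degree_prod]
      have h2 : ∑ t ∈ (range (n+1)).erase i, (X - C (((t:ℕ):ℝ)+1)).degree
          = ∑ t ∈ (range (n+1)).erase i, (1 : WithBot ℕ) :=
        Finset.sum_congr rfl fun t _ => degree_X_sub_C _
      rw [h2, Finset.sum_const, hccard i himem, nsmul_eq_mul, mul_one]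
    calc (C c).degree + (∏ t ∈ (range (n+1)).erase i, (X - C ((t:ℝ)+1))).degree
        ≤ 0 + (n : WithBot ℕ) := add_le_add degree_C_le (le_of_eq h1)
      _ = (n : WithBot ℕ) := zero_add _
      _ < ((n+1 : ℕ) : WithBot ℕ) := by exact_mod_cast Nat.lt_succ_self n
  have hinj : Set.InjOn (fun m : ℕ => -(m:ℝ)) (range (n+1)) := by
    intro a _ b _ h
    simp only [neg_inj, Nat.cast_inj] at h
    exact h
  -- evaluation agreement
  have heval : ∀ k ∈ range (n+1), P.eval (-(k:ℝ)) = Q.eval (-(k:ℝ)) := by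
    intro k hk
    have hkn : k ≤ n := by simpa [Nat.lt_succ_iff] using hk
    have hPev : P.eval (-(k:ℝ)) = b k * ((-1)^k * (k !) * ((n-k)!)) := by
      rw [hP, eval_finset_sum]
      rw [Finset.sum_eq_single k]
      · simp only [eval_mul, eval_C, eval_prod, eval_add, eval_X]
        congr 1
        rw [← prodErase n k hkn]
        exact prod_congr rfl fun m _ => by ring
      · intro k' hk' hne
        simp only [eval_mul, eval_C, eval_prod, eval_add, eval_X]
        have hkmem : k ∈ (range (n+1)).erase k' := mem_erase.mpr ⟨fun h => hne h.symm, hk⟩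
        rw [prod_eq_zero hkmem (by ring), mul_zero]
      · intro h; exact absurd hk h
    have hQev : Q.eval (-(k:ℝ)) =
        c * ((-1)^n * ∏ t ∈ (range (n+1)).erase i, ((k:ℝ) + t + 1)) := by
      simp only [hQ, eval_mul, eval_C, eval_prod, eval_sub, eval_X]
      congr 1
      rw [show ∏ t ∈ (range (n+1)).erase i, (-(k:ℝ) - ((t:ℝ)+1))
            = ∏ t ∈ (range (n+1)).erase i, ((-1) * ((k:ℝ) + t + 1)) from
          prod_congr rfl fun t _ => by ring]
      rw [prod_mul_distrib, prod_const, hccard i himem]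
    rw [hPev, hQev]
    -- the numerical identity
    set A : ℝ := ∏ t ∈ (range (n+1)).erase i, ((k:ℝ) + t + 1) with hA'
    have hA : (k ! : ℝ) * (((k:ℝ) + i + 1) * A) = ((k+n+1)! : ℝ) := by
      rw [hA', Finset.mul_prod_erase (range (n+1)) (fun t => (k:ℝ)+(t:ℕ)+1) himem]
      exact prodAll n k
    have hki : ((k:ℝ) + i + 1) ≠ 0 := by positivity
    have hkf : ((k ! : ℕ) : ℝ) ≠ 0 := by positivity
    have hAval : A = ((k+n+1)! : ℝ) / ((k ! : ℝ) * ((k:ℝ)+i+1)) := by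
      rw [eq_div_iff (by positivity)]
      linear_combination hA
    have ckey : ((n+i+1)! : ℝ) * ((n+k+1)! : ℝ) =
        ((i+k+1 : ℕ):ℝ)^2 * ((n+i+1).choose (n-k) : ℝ) * ((n+k+1).choose (n-i) : ℝ)
          * (((i+k).choose i : ℝ))^2
          * ((k ! :ℝ) * (k ! :ℝ) * ((n-i)! :ℝ) * ((n-k)! :ℝ) * (i ! :ℝ) * (i ! :ℝ)) := by
      exact_mod_cast congrArg (Nat.cast : ℕ → ℝ) (natkey n i k hi hkn)
    have hpos : ((n+i+1)! : ℝ) / (((n-i)! : ℝ) * ((i ! : ℝ) * (i ! : ℝ))) * A =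
        ((i+k+1 : ℕ):ℝ) * ((n+i+1).choose (n-k) : ℝ) * ((n+k+1).choose (n-i) : ℝ)
          * (((i+k).choose i : ℝ))^2 * ((k ! :ℝ) * ((n-k)! :ℝ)) := by
      rw [hAval]
      have hknn : ((k+n+1)! : ℝ) = ((n+k+1)! : ℝ) := by rw [show k+n+1 = n+k+1 by omega]
      rw [hknn, _root_.div_mul_div_comm, div_eq_iff (by positivity)]
      have hik : ((i+k+1 : ℕ):ℝ) = (k:ℝ) + i + 1 := by push_cast; ring
      rw [← hik] at *
      linear_combination ckey
    calc b k * ((-1:ℝ)^k * (k !) * ((n-k)!))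
        = ((-1:ℝ)^k * (-1)^k) * ((-1)^i *
            (((i+k+1 : ℕ):ℝ) * ((n+i+1).choose (n-k) : ℝ) * ((n+k+1).choose (n-i) : ℝ)
              * (((i+k).choose i : ℝ))^2 * ((k ! :ℝ) * ((n-k)! :ℝ)))) := by
          simp only [hb]; rw [pow_add]; ring
      _ = (-1)^i * (((n+i+1)! : ℝ) / (((n-i)! : ℝ) * ((i ! : ℝ) * (i ! : ℝ))) * A) := by
          rw [hsq k, ← hpos]; ring
      _ = ((-1:ℝ)^n * (-1)^n) *
            ((-1)^i * (((n+i+1)! : ℝ) / (((n-i)! : ℝ) * ((i ! : ℝ) * (i ! : ℝ))) * A)) := by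
          rw [hsq n]; ring
      _ = c * ((-1)^n * A) := by rw [hc, pow_add]; ring
  have hPQ : P = Q :=
    Polynomial.eq_of_degrees_lt_of_eval_index_eq _ hinj hdegP hdegQ heval
  -- final evaluation at j+1
  have hT : (j ! : ℝ) * ∏ m ∈ range (n+1), ((j:ℝ) + m + 1) = ((j+n+1)! : ℝ) := prodAll n j
  set T : ℝ := ∏ m ∈ range (n+1), ((j:ℝ) + m + 1) with hT'
  have hTpos : 0 < T := prod_pos fun m _ => by positivity
  have hsum : T * (∑ k ∈ range (n+1), b k * (1 / ((k + j + 1 : ℕ) : ℝ)))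
      = P.eval ((j:ℝ)+1) := by
    rw [hP, eval_finset_sum, mul_sum]
    refine sum_congr rfl fun k hk => ?_
    simp only [eval_mul, eval_C, eval_prod, eval_add, eval_X]
    have hpc : ∏ m ∈ (range (n+1)).erase k, ((j:ℝ) + 1 + (m:ℝ))
        = ∏ m ∈ (range (n+1)).erase k, ((j:ℝ) + m + 1) :=
      prod_congr rfl fun m _ => by ring
    have hme : ((j:ℝ) + k + 1) * ∏ m ∈ (range (n+1)).erase k, ((j:ℝ) + m + 1) = T := by
      rw [hT']; exact Finset.mul_prod_erase (range (n+1)) (fun m => (j:ℝ)+(m:ℕ)+1) hk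
    rw [hpc, ← hme]
    have hne : ((j:ℝ) + k + 1) ≠ 0 := by positivity
    have hc1 : ((k + j + 1 : ℕ) : ℝ) = (j:ℝ) + k + 1 := by push_cast; ring
    rw [hc1]
    field_simp
  rw [hPQ] at hsum
  have hgoal : (∑ k ∈ range (n+1),
      ((-1:ℝ) ^ (i + k) * ((i + k + 1 : ℕ) : ℝ) * ((n + i + 1).choose (n - k) : ℝ) *
        ((n + k + 1).choose (n - i) : ℝ) * (((i + k).choose i : ℝ)) ^ 2) *
        (1 / ((k + j + 1 : ℕ) : ℝ)))
      = ∑ k ∈ range (n+1), b k * (1 / ((k + j + 1 : ℕ) : ℝ)) := by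
    simp only [hb]
  rw [hgoal]
  split_ifs with hij
  · subst hij
    have hQe : Q.eval ((i:ℝ)+1) = c * ((-1:ℝ)^n * ((-1:ℝ)^i * (i ! : ℝ) * ((n-i)! : ℝ))) := by
      simp only [hQ, eval_mul, eval_C, eval_prod, eval_sub, eval_X]
      congr 1
      have h1 : ∏ t ∈ (range (n+1)).erase i, ((i:ℝ) + 1 - ((t:ℝ)+1))
          = ∏ t ∈ (range (n+1)).erase i, ((-1) * ((t:ℝ) - i)) :=
        prod_congr rfl fun t _ => by ring
      rw [h1, prod_mul_distrib, prod_const, hccard i himem, prodErase n i hi]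
    have hTeq : c * ((-1:ℝ)^n * ((-1:ℝ)^i * (i ! : ℝ) * ((n-i)! : ℝ))) = T := by
      have hstep : c * ((-1:ℝ)^n * ((-1:ℝ)^i * (i !:ℝ) * ((n-i)!:ℝ)))
          = ((-1:ℝ)^i*(-1:ℝ)^i) * (((-1:ℝ)^n*(-1:ℝ)^n) *
            (((n+i+1)!:ℝ) / (((n-i)!:ℝ) * ((i !:ℝ) * (i !:ℝ))) * ((i !:ℝ) * ((n-i)!:ℝ)))) := by
        rw [hc, pow_add]; ring
      rw [hstep, hsq i, hsq n, one_mul, one_mul]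
      have h3 : ((n+i+1)! : ℝ) = ((i+n+1)! : ℝ) := by rw [show n+i+1 = i+n+1 by omega]
      rw [h3, div_mul_eq_mul_div, div_eq_iff (by positivity)]
      linear_combination (-(i !:ℝ) * ((n-i)!:ℝ)) * hT
    have hfin : T * (∑ k ∈ range (n+1), b k * (1 / ((k + i + 1 : ℕ) : ℝ))) = T * 1 := by
      rw [mul_one, hsum, hQe, hTeq]
    exact mul_left_cancel₀ (ne_of_gt hTpos) hfin
  · have hQe0 : Q.eval ((j:ℝ)+1) = 0 := by
      simp only [hQ, eval_mul, eval_C, eval_prod, eval_sub, eval_X]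
      rw [prod_eq_zero (mem_erase.mpr ⟨fun h => hij h.symm, hjmem⟩) (by ring), mul_zero]
    have hfin : T * (∑ k ∈ range (n+1), b k * (1 / ((k + j + 1 : ℕ) : ℝ))) = T * 0 := by
      rw [mul_zero, hsum, hQe0]
    exact mul_left_cancel₀ (ne_of_gt hTpos) hfin


/-- The inverse of the Hilbert matrix `M_n = (1/(i+j+1))_{i,j=0}^n` has `(i,j)`
entry `(−1)^{i+j}(i+j+1)·C(n+i+1,n−j)·C(n+j+1,n−i)·C(i+j,i)²`; in particular all entries of
`M_n⁻¹` are integers. -/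
theorem hilbert_matrix_inverse (n : ℕ) :
    let M : Matrix (Fin (n + 1)) (Fin (n + 1)) ℝ :=
      Matrix.of fun i j => 1 / (((i : ℕ) + (j : ℕ) + 1 : ℕ) : ℝ)
    let B : Matrix (Fin (n + 1)) (Fin (n + 1)) ℝ :=
      Matrix.of fun i j =>
        (-1 : ℝ) ^ ((i : ℕ) + (j : ℕ)) * (((i : ℕ) + (j : ℕ) + 1 : ℕ) : ℝ) *
          (Nat.choose (n + (i : ℕ) + 1) (n - (j : ℕ)) : ℝ) *
          (Nat.choose (n + (j : ℕ) + 1) (n - (i : ℕ)) : ℝ) *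
          ((Nat.choose ((i : ℕ) + (j : ℕ)) (i : ℕ) : ℝ)) ^ 2
    B * M = 1 ∧ M * B = 1 ∧ ∀ i j, ∃ z : ℤ, B i j = (z : ℝ) := by
  intro M B
  have hBM : B * M = 1 := by
    ext i j
    rw [Matrix.mul_apply]
    simp only [M, B, Matrix.of_apply, Matrix.one_apply]
    rw [Fin.sum_univ_eq_sum_range (fun k =>
      ((-1:ℝ) ^ ((i:ℕ) + k) * (((i:ℕ) + k + 1 : ℕ) : ℝ) * ((n + (i:ℕ) + 1).choose (n - k) : ℝ) *
        ((n + k + 1).choose (n - (i:ℕ)) : ℝ) * ((((i:ℕ) + k).choose (i:ℕ) : ℝ)) ^ 2) *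
        (1 / ((k + (j:ℕ) + 1 : ℕ) : ℝ))) (n+1)]
    rw [hilbert_key n (i:ℕ) (j:ℕ) (Nat.lt_succ_iff.mp i.isLt) (Nat.lt_succ_iff.mp j.isLt)]
    simp [Fin.val_inj]
  refine ⟨hBM, mul_eq_one_comm.mp hBM, ?_⟩
  intro i j
  refine ⟨((-1)^((i:ℕ)+(j:ℕ)) * ((((i:ℕ)+(j:ℕ)+1) * ((n+(i:ℕ)+1).choose (n-(j:ℕ))) *
    ((n+(j:ℕ)+1).choose (n-(i:ℕ))) * (((i:ℕ)+(j:ℕ)).choose (i:ℕ))^2 : ℕ) : ℤ) : ℤ), ?_⟩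
  simp only [B, Matrix.of_apply]
  push_cast
  ring
end

section
/- For all natural numbers n, i, j with 0 ≤ i ≤ n and 0 ≤ j ≤ n, ∑_{k=max(i,j)}^{n} C(k,i)·C(k,j)·C(k+i,i)·C(k+j,j)·(2k+1) = (i+j+1)·C(n+i+1, n−j)·C(n+j+1, n−i)·C(i+j, i)². -/
private lemma step_main' (n i j : ℕ) (hi : i ≤ n) (hj : j ≤ n) :
    (i+j+1) * Nat.choose (n+i+1) (i+j+1) * Nat.choose (n+j+1) (i+j+1) * Nat.choose (i+j) i ^ 2
      + Nat.choose (n+1) i * Nat.choose (n+1) j * Nat.choose (n+1+i) i * Nat.choose (n+1+j) j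
        * (2*(n+1)+1)
    = (i+j+1) * Nat.choose (n+1+i+1) (i+j+1) * Nat.choose (n+1+j+1) (i+j+1)
        * Nat.choose (i+j) i ^ 2 := by
  rw [← Nat.cast_inj (R := ℚ)]
  push_cast
  rw [Nat.cast_choose ℚ (show i+j+1 ≤ n+i+1 by omega),
      Nat.cast_choose ℚ (show i+j+1 ≤ n+j+1 by omega),
      Nat.cast_choose ℚ (show i ≤ i+j by omega),
      Nat.cast_choose ℚ (show i ≤ n+1 by omega),
      Nat.cast_choose ℚ (show j ≤ n+1 by omega),
      Nat.cast_choose ℚ (show i ≤ n+1+i by omega),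
      Nat.cast_choose ℚ (show j ≤ n+1+j by omega),
      Nat.cast_choose ℚ (show i+j+1 ≤ n+1+i+1 by omega),
      Nat.cast_choose ℚ (show i+j+1 ≤ n+1+j+1 by omega)]
  rw [show n+i+1-(i+j+1) = n-j by omega, show n+j+1-(i+j+1) = n-i by omega,
      show i+j-i = j by omega, show n+1-i = (n-i)+1 by omega,
      show n+1-j = (n-j)+1 by omega, show n+1+i-i = n+1 from by omega,
      show n+1+j-j = n+1 from by omega,
      show n+1+i+1-(i+j+1) = (n-j)+1 by omega,
      show n+1+j+1-(i+j+1) = (n-i)+1 by omega,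
      show n+1+i = n+i+1 by omega, show n+1+j = n+j+1 by omega
      ]
  rw [Nat.factorial_succ (n-i), Nat.factorial_succ (n-j),
      Nat.factorial_succ (n+i+1), Nat.factorial_succ (n+j+1),
      Nat.factorial_succ (i+j)]
  push_cast [Nat.cast_sub hi, Nat.cast_sub hj]
  have h1 : ((n+i+1).factorial : ℚ) ≠ 0 := Nat.cast_ne_zero.2 (Nat.factorial_ne_zero _)
  have h2 : ((n+j+1).factorial : ℚ) ≠ 0 := Nat.cast_ne_zero.2 (Nat.factorial_ne_zero _)
  have h3 : ((i+j).factorial : ℚ) ≠ 0 := Nat.cast_ne_zero.2 (Nat.factorial_ne_zero _)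
  have h4 : ((n-i).factorial : ℚ) ≠ 0 := Nat.cast_ne_zero.2 (Nat.factorial_ne_zero _)
  have h5 : ((n-j).factorial : ℚ) ≠ 0 := Nat.cast_ne_zero.2 (Nat.factorial_ne_zero _)
  have h6 : ((i).factorial : ℚ) ≠ 0 := Nat.cast_ne_zero.2 (Nat.factorial_ne_zero _)
  have h7 : ((j).factorial : ℚ) ≠ 0 := Nat.cast_ne_zero.2 (Nat.factorial_ne_zero _)
  have h8 : ((n+1).factorial : ℚ) ≠ 0 := Nat.cast_ne_zero.2 (Nat.factorial_ne_zero _)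
  have h9 : ((n:ℚ)-i)+1 ≠ 0 := by
    have : (i:ℚ) ≤ n := by exact_mod_cast hi
    nlinarith
  have h10 : ((n:ℚ)-j)+1 ≠ 0 := by
    have : (j:ℚ) ≤ n := by exact_mod_cast hj
    nlinarith
  have h11 : ((i:ℚ)+j+1) ≠ 0 := by positivity
  field_simp
  ring

private lemma step_edge' (n j : ℕ) (hj : j ≤ n) :
    Nat.choose (n+1) j * Nat.choose (2*n+2) (n+1) * Nat.choose (n+1+j) j * (2*(n+1)+1)
    = (n+j+2) * Nat.choose (2*n+3) (n+j+2) * Nat.choose (n+j+1) (n+1) ^ 2 := by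
  rw [← Nat.cast_inj (R := ℚ)]
  push_cast
  rw [Nat.cast_choose ℚ (show j ≤ n+1 by omega),
      Nat.cast_choose ℚ (show n+1 ≤ 2*n+2 by omega),
      Nat.cast_choose ℚ (show j ≤ n+1+j by omega),
      Nat.cast_choose ℚ (show n+j+2 ≤ 2*n+3 by omega),
      Nat.cast_choose ℚ (show n+1 ≤ n+j+1 by omega)]
  rw [show n+1-j = (n-j)+1 by omega, show 2*n+2-(n+1) = n+1 by omega,
      show n+1+j-j = n+1 by omega, show 2*n+3-(n+j+2) = (n-j)+1 by omega,
      show n+j+1-(n+1) = j by omega, show 2*n+3 = (2*n+2)+1 by omega,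
      show n+j+2 = (n+j+1)+1 by omega, show n+1+j = n+j+1 by omega]
  rw [Nat.factorial_succ (n-j), Nat.factorial_succ (2*n+2), Nat.factorial_succ (n+j+1)]
  push_cast [Nat.cast_sub hj]
  have h1 : ((n+1).factorial : ℚ) ≠ 0 := Nat.cast_ne_zero.2 (Nat.factorial_ne_zero _)
  have h2 : ((j).factorial : ℚ) ≠ 0 := Nat.cast_ne_zero.2 (Nat.factorial_ne_zero _)
  have h3 : ((n-j).factorial : ℚ) ≠ 0 := Nat.cast_ne_zero.2 (Nat.factorial_ne_zero _)
  have h4 : ((2*n+2).factorial : ℚ) ≠ 0 := Nat.cast_ne_zero.2 (Nat.factorial_ne_zero _)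
  have h5 : ((n+j+1).factorial : ℚ) ≠ 0 := Nat.cast_ne_zero.2 (Nat.factorial_ne_zero _)
  have h6 : ((n:ℚ)-j)+1 ≠ 0 := by
    have : (j:ℚ) ≤ n := by exact_mod_cast hj
    nlinarith
  have h7 : ((n:ℚ)+j+2) ≠ 0 := by positivity
  field_simp
  ring

private lemma step' (n i j : ℕ) :
    (i+j+1) * Nat.choose (n+i+1) (i+j+1) * Nat.choose (n+j+1) (i+j+1) * Nat.choose (i+j) i ^ 2
      + Nat.choose (n+1) i * Nat.choose (n+1) j * Nat.choose (n+1+i) i * Nat.choose (n+1+j) j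
        * (2*(n+1)+1)
    = (i+j+1) * Nat.choose (n+1+i+1) (i+j+1) * Nat.choose (n+1+j+1) (i+j+1)
        * Nat.choose (i+j) i ^ 2 := by
  by_cases hi : i ≤ n + 1
  · by_cases hj : j ≤ n + 1
    · by_cases hi' : i ≤ n
      · by_cases hj' : j ≤ n
        · exact step_main' n i j hi' hj'
        · -- j = n+1, i ≤ n
          obtain rfl : j = n+1 := by omega
          rw [show Nat.choose (n+i+1) (i+(n+1)+1) = 0 from
                Nat.choose_eq_zero_of_lt (by omega)]
          rw [← Nat.choose_symm (show i ≤ i+(n+1) by omega),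
              show i+(n+1)-i = n+1 by omega]
          rw [show n+1+i+1 = i+(n+1)+1 by omega]
          simp only [Nat.choose_self, mul_zero, zero_mul, mul_one, one_mul, zero_add]
          rw [show i+(n+1) = n+i+1 by omega, show n+1+(n+1) = 2*n+2 by ring]
          have h := step_edge' n i hi'
          rw [show n+1+i = n+i+1 by omega, show n+i+2 = n+i+1+1 by omega,
              show 2*n+3 = 2*n+2+1 by ring] at h
          ring_nf at h ⊢
          linarith [h]
      · -- i = n+1
        by_cases hj' : j ≤ n
        · obtain rfl : i = n+1 := by omega
          rw [show Nat.choose (n+j+1) ((n+1)+j+1) = 0 from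
                Nat.choose_eq_zero_of_lt (by omega)]
          simp only [Nat.choose_self, mul_zero, zero_mul, mul_one, one_mul, zero_add]
          rw [show n+1+(n+1) = 2*n+2 by ring, show n+1+j+1 = n+j+2 by omega]
          have h := step_edge' n j hj'
          rw [show n+1+j = n+j+1 by omega, show n+j+2 = n+j+1+1 by omega,
              show 2*n+3 = 2*n+2+1 by ring] at h
          ring_nf at h ⊢
          linarith [h]
        · -- i = n+1, j = n+1
          obtain rfl : i = n+1 := by omega
          obtain rfl : j = n+1 := by omega
          rw [show Nat.choose (n+(n+1)+1) ((n+1)+(n+1)+1) = 0 from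
                Nat.choose_eq_zero_of_lt (by omega)]
          simp [Nat.choose_self]
          ring
    · -- j > n+1
      rw [Nat.choose_eq_zero_of_lt (show n+1 < j by omega),
          show Nat.choose (n+i+1) (i+j+1) = 0 from Nat.choose_eq_zero_of_lt (by omega),
          show Nat.choose (n+1+i+1) (i+j+1) = 0 from Nat.choose_eq_zero_of_lt (by omega)]
      ring
  · -- i > n+1
    rw [Nat.choose_eq_zero_of_lt (show n+1 < i by omega),
        show Nat.choose (n+j+1) (i+j+1) = 0 from Nat.choose_eq_zero_of_lt (by omega),
        show Nat.choose (n+1+j+1) (i+j+1) = 0 from Nat.choose_eq_zero_of_lt (by omega)]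
    ring

private lemma aux' (n i j : ℕ) :
    ∑ k ∈ Finset.range (n+1),
        Nat.choose k i * Nat.choose k j * Nat.choose (k+i) i * Nat.choose (k+j) j * (2*k+1)
    = (i+j+1) * Nat.choose (n+i+1) (i+j+1) * Nat.choose (n+j+1) (i+j+1)
        * Nat.choose (i+j) i ^ 2 := by
  induction n with
  | zero =>
      rcases Nat.eq_zero_or_pos i with rfl | hi
      · rcases Nat.eq_zero_or_pos j with rfl | hj
        · simp
        · rw [show Nat.choose (0+0+1) (0+j+1) = 0 from Nat.choose_eq_zero_of_lt (by omega)]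
          simp [Nat.choose_eq_zero_of_lt hj]
      · rw [show Nat.choose (0+j+1) (i+j+1) = 0 from Nat.choose_eq_zero_of_lt (by omega)]
        simp [Nat.choose_eq_zero_of_lt hi]
  | succ n ih =>
      rw [Finset.sum_range_succ, ih]
      exact step' n i j

/-- For `i, j ≤ n`,
`∑_{k=max(i,j)}^n C(k,i)C(k,j)C(k+i,i)C(k+j,j)(2k+1)
  = (i+j+1)·C(n+i+1,n−j)·C(n+j+1,n−i)·C(i+j,i)²`. -/
theorem very_well_poised_sum (n i j : ℕ) (hi : i ≤ n) (hj : j ≤ n) :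
    ∑ k ∈ Finset.Icc (max i j) n,
        Nat.choose k i * Nat.choose k j * Nat.choose (k + i) i * Nat.choose (k + j) j *
          (2 * k + 1) =
      (i + j + 1) * Nat.choose (n + i + 1) (n - j) * Nat.choose (n + j + 1) (n - i) *
        (Nat.choose (i + j) i) ^ 2 := by
  rw [Finset.sum_subset (show Finset.Icc (max i j) n ⊆ Finset.range (n+1) by
        intro k hk
        simp only [Finset.mem_Icc] at hk
        exact Finset.mem_range.2 (by omega))
      (by
        intro k hk hnk
        simp only [Finset.mem_range] at hk
        simp only [Finset.mem_Icc] at hnk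
        have : k < i ∨ k < j := by omega
        rcases this with h | h
        · simp [Nat.choose_eq_zero_of_lt h]
        · simp [Nat.choose_eq_zero_of_lt h])]
  rw [aux' n i j,
      show n - j = n+i+1-(i+j+1) by omega,
      show n - i = n+j+1-(i+j+1) by omega,
      Nat.choose_symm (show i+j+1 ≤ n+i+1 by omega),
      Nat.choose_symm (show i+j+1 ≤ n+j+1 by omega)]
end

section
/- For every real t and every n ≥ 0, det((H_{i+j}(t))_{i,j=0}^{n}) = (−1)^n · t^{n²} · r(n,t) / (C(2n,n) · ∏_{j=1}^{n−1} ((2j+1)·C(2j,j)²)), where r(n,t) = ∑_{j=0}^{n} (−t)^{n−j}·C(n,j)·C(n+j,j)·H_j(t). -/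
/-- `H_m(t) = ∑_{k=1}^m t^k/k`. -/
noncomputable def harmonicPoly (m : ℕ) (t : ℝ) : ℝ := ∑ k ∈ Finset.Icc 1 m, t ^ k / (k : ℝ)

/-- `r(n,t) = ∑_{j=0}^n (−t)^{n−j}·C(n,j)·C(n+j,j)·H_j(t)`. -/
noncomputable def rPoly (n : ℕ) (t : ℝ) : ℝ :=
  ∑ j ∈ Finset.range (n + 1),
    (-t) ^ (n - j) * (Nat.choose n j : ℝ) * (Nat.choose (n + j) j : ℝ) * harmonicPoly j t

/-!
Since `H_{m+1}(t) - H_m(t) = t^(m+1)/(m+1)`, subtracting from each column of the Hankel matrix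
its predecessor leaves the first column `H_i(t)` and the entries `t^(i+j)/(i+j)` elsewhere.
Expanding along the first column, the `k`-th minor is, after pulling `t^(i+j)` out of rows and
columns, the Cauchy determinant `det (1/(a + b))` with `a` running over `{0, …, n} \ {k}` and `b`
over `{1, …, n}`. Cauchy's formula turns it into Vandermonde products over these sets, i.e.
superfactorials and factorials, and the quotient is `C(n,k) C(n+k,k)` over the normalizing
constant.
-/

open Finset Matrix Nat

theorem Fin.prod_prod_Ioi_succAbove {M : Type*} [CommMonoid M] {n : ℕ}
    (f : Fin (n + 1) → Fin (n + 1) → M) (k : Fin (n + 1)) :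
    ∏ i, ∏ j ∈ Ioi i, f i j =
      (∏ j ∈ Ioi k, f k j) * (∏ i ∈ Iio k, f i k) *
        ∏ i : Fin n, ∏ j ∈ Ioi i, f (k.succAbove i) (k.succAbove j) := by
  have hIoi : ∀ {m} (i : Fin m) (g : Fin m → M),
      ∏ j ∈ Ioi i, g j = ∏ j, if i < j then g j else 1 :=
    fun i g => by rw [← prod_filter, filter_lt_eq_Ioi]
  have hIio : ∏ i ∈ Iio k, f i k =
      ∏ i : Fin n, if k.succAbove i < k then f (k.succAbove i) k else 1 := by
    rw [← filter_gt_eq_Iio, prod_filter, prod_univ_succAbove _ k, if_neg (lt_irrefl k), one_mul]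
  simp only [hIoi, hIio]
  rw [prod_univ_succAbove _ k, mul_assoc, ← prod_mul_distrib]
  congr 1
  refine prod_congr rfl fun i _ => ?_
  rw [prod_univ_succAbove _ k]
  simp only [succAbove_lt_succAbove_iff]

theorem Fin.prod_Iio_natCast_sub {R : Type*} [CommRing R] {n : ℕ} (k : Fin n) :
    ∏ i ∈ Iio k, ((k : R) - i) = (k ! : ℕ) := by
  rw [← descFactorial_self, descFactorial_eq_prod_range, Nat.cast_prod, ← Nat.Iio_eq_range,
    ← Fin.map_valEmbedding_Iio, prod_map]
  exact prod_congr rfl fun i hi => by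
    rw [Fin.valEmbedding_apply, Nat.cast_sub (Fin.le_iff_val_le_val.mp (mem_Iio.mp hi).le)]

theorem Fin.prod_Ioi_sub_natCast {R : Type*} [CommRing R] {n : ℕ} (k : Fin (n + 1)) :
    ∏ j ∈ Ioi k, ((j : R) - k) = ((n - k) ! : ℕ) := by
  calc ∏ j ∈ Ioi k, ((j : R) - k) = ∏ m ∈ Ico ((k : ℕ) + 1) (n + 1), ((m : R) - k) := by
        rw [Finset.Ico_add_one_left_eq_Ioo, ← Fin.map_valEmbedding_Ioi, prod_map]; rfl
    _ = ((n - k) ! : ℕ) := by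
        rw [prod_Ico_eq_prod_range, ← prod_range_add_one_eq_factorial, Nat.cast_prod,
          show n + 1 - (k + 1) = n - k by omega]
        exact prod_congr rfl fun i _ => by push_cast; ring

theorem Fin.sum_succAbove_add_sum_succ (n : ℕ) (k : Fin (n + 1)) :
    ∑ i : Fin n, (k.succAbove i : ℕ) + ∑ j : Fin n, ((j : ℕ) + 1) = n ^ 2 + (n - k) := by
  have hk : (k : ℕ) + ∑ i : Fin n, (k.succAbove i : ℕ) = ∑ j : Fin n, ((j : ℕ) + 1) := by
    rw [← Fin.sum_univ_succAbove (fun m : Fin (n + 1) => (m : ℕ)) k, Fin.sum_univ_succ]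
    simp
  have hgauss : (∑ j : Fin n, ((j : ℕ) + 1)) * 2 = n ^ 2 + n := by
    have h := sum_range_id_mul_two (n + 1)
    rw [sum_range_succ', add_zero, Nat.add_sub_cancel] at h
    rw [Fin.sum_univ_eq_sum_range (fun j => j + 1), h]
    ring
  omega

theorem Fin.ascFactorial_mul_prod_prod_natCast_succAbove_add_succ {K : Type*} [CommSemiring K]
    (n : ℕ) (k : Fin (n + 1)) :
    (((k : ℕ) + 1).ascFactorial n : K) *
        ∏ i : Fin n, ∏ j : Fin n, ((k.succAbove i : K) + ((j : K) + 1)) =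
      ∏ m ∈ range (n + 1), ((m + 1).ascFactorial n : K) := by
  have hasc : ∀ m : ℕ, ∏ j : Fin n, ((m : K) + ((j : K) + 1)) = ((m + 1).ascFactorial n : ℕ) :=
    fun m => by
      rw [ascFactorial_eq_prod_range, Nat.cast_prod, ← Fin.prod_univ_eq_prod_range]
      exact prod_congr rfl fun j _ => by push_cast; ring
  simp only [← hasc]
  rw [← Fin.prod_univ_succAbove (fun m : Fin (n + 1) => ∏ j : Fin n, ((m : K) + ((j : K) + 1))) k,
    ← Fin.prod_univ_eq_prod_range (fun m => ∏ j : Fin n, ((m : K) + ((j : K) + 1)))]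

theorem Nat.superFactorial_ne_zero (n : ℕ) : n.superFactorial ≠ 0 := by
  rw [← prod_range_succ_factorial]
  exact prod_ne_zero_iff.mpr fun m _ => factorial_ne_zero m

theorem Nat.choose_mul_add_choose_mul_factorial_mul_factorial {n k : ℕ} (hk : k ≤ n) :
    n.choose k * (n + k).choose k * ((n - k)! * k !) * k ! = (n + k)! := by
  rw [← add_choose_mul_factorial_mul_factorial, ← choose_mul_factorial_mul_factorial hk]
  ring

/-- `(2j+1) C(2j,j)² j!⁴ = (2j+1)! (2j)!`, so the product telescopes into `sf (2n)`. -/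
theorem Nat.centralBinom_mul_prod_mul_superFactorial_sq : ∀ n : ℕ,
    (2 * n).choose n * (∏ j ∈ Icc 1 (n - 1), (2 * j + 1) * (2 * j).choose j ^ 2) *
      ((n - 1).superFactorial * n.superFactorial) ^ 2 = (2 * n).superFactorial
  | 0 => rfl
  | 1 => rfl
  | m + 2 => by
    have ih := centralBinom_mul_prod_mul_superFactorial_sq (m + 1)
    have h1 : (2 * (m + 2)).choose (m + 2) * (m + 2)! * (m + 2)! = (2 * (m + 2))! := by
      rw [two_mul]; exact add_choose_mul_factorial_mul_factorial _ _
    have h2 : (2 * (m + 1) + 1) * ((2 * (m + 1)).choose (m + 1) * (m + 1)! * (m + 1)!) =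
        (2 * (m + 1) + 1)! := by
      rw [factorial_succ (2 * (m + 1)), two_mul, add_choose_mul_factorial_mul_factorial]
    have hsf : (2 * (m + 2)).superFactorial =
        (2 * (m + 2))! * ((2 * (m + 1) + 1)! * (2 * (m + 1)).superFactorial) := rfl
    rw [hsf, ← h1, ← h2, ← ih, show m + 2 - 1 = m + 1 by rfl, prod_Icc_succ_top (by omega)]
    simp only [superFactorial_succ, Nat.add_sub_cancel]
    ring

theorem Nat.prod_ascFactorial_mul_superFactorial (n : ℕ) :
    (∏ m ∈ range (n + 1), (m + 1).ascFactorial n) * n.superFactorial * (n - 1).superFactorial =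
      (2 * n).superFactorial := by
  have hlow : ∏ m ∈ range n, m ! = (n - 1).superFactorial := by
    cases n with
    | zero => rfl
    | succ n => exact prod_range_succ_factorial n
  calc (∏ m ∈ range (n + 1), (m + 1).ascFactorial n) * n.superFactorial * (n - 1).superFactorial
      = (∏ m ∈ range n, m !) * ∏ m ∈ range (n + 1), (n + m)! := by
        rw [← hlow, ← prod_range_succ_factorial n, ← prod_mul_distrib, mul_comm]
        exact congrArg _ (prod_congr rfl fun m _ => by
          rw [mul_comm, factorial_mul_ascFactorial, add_comm])
    _ = (2 * n).superFactorial := by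
        rw [← prod_range_add, ← prod_range_succ_factorial, two_mul, add_assoc]

namespace Matrix

theorem det_eq_mul_det_schur {K : Type*} [Field K] {n : ℕ}
    (M : Matrix (Fin (n + 1)) (Fin (n + 1)) K) (h : M 0 0 ≠ 0) :
    M.det = M 0 0 *
      (of fun i j : Fin n => M i.succ j.succ - M i.succ 0 / M 0 0 * M 0 j.succ).det := by
  let c : Fin (n + 1) → K := Fin.cases 0 fun i => M i.succ 0 / M 0 0
  let B : Matrix (Fin (n + 1)) (Fin (n + 1)) K := of fun i j => M i j - c i * M 0 j
  have hB : M.det = B.det :=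
    det_eq_of_forall_row_eq_smul_add_const c 0 rfl fun i j => by simp [B, c]
  have hB0 : ∀ i : Fin n, B i.succ 0 = 0 := fun i => by simp [B, c, div_mul_cancel₀ _ h]
  rw [hB, det_succ_column_zero, Fin.sum_univ_succ]
  simp only [hB0, mul_zero, zero_mul, sum_const_zero, add_zero, Fin.val_zero, pow_zero, one_mul,
    Fin.succAbove_zero]
  congr 1
  simp [B, c]

theorem det_vandermonde_succAbove {R : Type*} [CommRing R] {n : ℕ} (v : Fin (n + 1) → R)
    (k : Fin (n + 1)) :
    det (vandermonde v) =
      (∏ j ∈ Ioi k, (v j - v k)) * (∏ i ∈ Iio k, (v k - v i)) *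
        det (vandermonde (v ∘ k.succAbove)) := by
  simp only [det_vandermonde]
  exact Fin.prod_prod_Ioi_succAbove (fun i j => v j - v i) k

theorem det_vandermonde_succ {R : Type*} [CommRing R] {n : ℕ} (v : Fin (n + 1) → R) :
    det (vandermonde v) = (∏ j : Fin n, (v j.succ - v 0)) * det (vandermonde (v ∘ Fin.succ)) := by
  rw [det_vandermonde_succAbove v 0, Fin.prod_Ioi_zero, Fin.succAbove_zero,
    prod_eq_one (s := Iio 0) fun i hi => by simp at hi, mul_one]

theorem det_vandermonde_natCast {R : Type*} [CommRing R] (n : ℕ) :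
    det (vandermonde fun i : Fin n => (i : R)) = (n - 1).superFactorial := by
  cases n with
  | zero => simp
  | succ n => exact det_vandermonde_id_eq_superFactorial n

theorem det_vandermonde_natCast_succAbove {R : Type*} [CommRing R] {n : ℕ} (k : Fin (n + 1)) :
    ((n - k)! * k ! : ℕ) * det (vandermonde fun i : Fin n => (k.succAbove i : R)) =
      n.superFactorial := by
  have h := det_vandermonde_succAbove (fun i : Fin (n + 1) => (i : R)) k
  rw [det_vandermonde_id_eq_superFactorial, Fin.prod_Ioi_sub_natCast,
    Fin.prod_Iio_natCast_sub] at h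
  rw [h, Nat.cast_mul]
  rfl

theorem det_cauchy {K : Type*} [Field K] {n : ℕ} (x y : Fin n → K)
    (h : ∀ i j, x i + y j ≠ 0) :
    det (of fun i j => (x i + y j)⁻¹) =
      det (vandermonde x) * det (vandermonde y) / ∏ i, ∏ j, (x i + y j) := by
  induction n with
  | zero => simp
  | succ n ih =>
    have hschur : (of fun i j : Fin n =>
        (x i.succ + y j.succ)⁻¹ - (x i.succ + y 0)⁻¹ / (x 0 + y 0)⁻¹ * (x 0 + y j.succ)⁻¹) =
        of fun i j => (x i.succ - x 0) / (x i.succ + y 0) *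
          (of fun i j => (y j.succ - y 0) / (x 0 + y j.succ) *
            (of fun i j => (x i.succ + y j.succ)⁻¹) i j) i j := by
      ext i j
      have hij := h i.succ j.succ; have hi0 := h i.succ 0; have h0j := h 0 j.succ
      have h00 := h 0 0
      simp only [of_apply]
      field_simp
      ring
    rw [det_eq_mul_det_schur _ (by simpa using h 0 0)]
    simp only [of_apply]
    rw [hschur, det_mul_column, det_mul_row, ih _ _ fun i j => h i.succ j.succ,
      det_vandermonde_succ x, det_vandermonde_succ y, Fin.prod_univ_succ]
    simp only [Fin.prod_univ_succ (fun j => x _ + y j), prod_div_distrib, prod_mul_distrib]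
    have hrow : ∀ i, ∏ j : Fin n, (x i + y j.succ) ≠ 0 :=
      fun i => prod_ne_zero_iff.mpr fun j _ => h _ _
    have hcol : ∏ i : Fin n, (x i.succ + y 0) ≠ 0 := prod_ne_zero_iff.mpr fun i _ => h _ _
    have hrest : ∏ i : Fin n, ∏ j : Fin n, (x i.succ + y j.succ) ≠ 0 :=
      prod_ne_zero_iff.mpr fun i _ => hrow i.succ
    field_simp
    simp only [Function.comp_def]

theorem det_inv_natCast_succAbove_add_succ {K : Type*} [Field K] [CharZero K] (n : ℕ)
    (k : Fin (n + 1)) :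
    det (of fun i j : Fin n => ((k.succAbove i : K) + ((j : K) + 1))⁻¹) =
      ((n.choose k * (n + k).choose k : ℕ) : K) /
        ((Nat.choose (2 * n) n : K) *
          ∏ j ∈ Icc 1 (n - 1), ((2 * (j : K) + 1) * (Nat.choose (2 * j) j : K) ^ 2)) := by
  have hne : ∀ (m : ℕ) (j : Fin n), (m : K) + ((j : K) + 1) ≠ 0 := fun m j => by
    exact_mod_cast Nat.succ_ne_zero (m + j)
  have hden := Fin.ascFactorial_mul_prod_prod_natCast_succAbove_add_succ (K := K) n k
  have hsf := congrArg (Nat.cast : ℕ → K) (prod_ascFactorial_mul_superFactorial n)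
  have hconst := congrArg (Nat.cast : ℕ → K) (centralBinom_mul_prod_mul_superFactorial_sq n)
  have hvx := det_vandermonde_natCast_succAbove (R := K) k
  have hvy : det (vandermonde fun j : Fin n => (j : K) + 1) = (n - 1).superFactorial := by
    rw [det_vandermonde_add, det_vandermonde_natCast]
  have hk := congrArg (Nat.cast : ℕ → K) (factorial_mul_ascFactorial k n)
  have hchoose := congrArg (Nat.cast : ℕ → K)
    (choose_mul_add_choose_mul_factorial_mul_factorial (Nat.lt_succ_iff.mp k.isLt))
  rw [add_comm (k : ℕ) n] at hk
  push_cast at hsf hconst hk hchoose hvx ⊢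
  set D := ∏ i : Fin n, ∏ j : Fin n, ((k.succAbove i : K) + ((j : K) + 1))
  set c := (Nat.choose (2 * n) n : K) *
    ∏ j ∈ Icc 1 (n - 1), ((2 * (j : K) + 1) * (Nat.choose (2 * j) j : K) ^ 2)
  set gk := (((k : ℕ) + 1).ascFactorial n : K)
  set S0 := ((n - 1).superFactorial : K)
  set S1 := (n.superFactorial : K)
  have hS0 : S0 ≠ 0 := Nat.cast_ne_zero.mpr (superFactorial_ne_zero _)
  have hS1 : S1 ≠ 0 := Nat.cast_ne_zero.mpr (superFactorial_ne_zero _)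
  have hgk : gk ≠ 0 := Nat.cast_ne_zero.mpr (ascFactorial_pos _ _).ne'
  have hc : c ≠ 0 := by
    intro h0
    rw [h0, zero_mul] at hconst
    exact superFactorial_ne_zero (2 * n) (by exact_mod_cast hconst.symm)
  have hD : D ≠ 0 := prod_ne_zero_iff.mpr fun i _ => prod_ne_zero_iff.mpr fun j _ => hne _ j
  rw [det_cauchy _ _ fun i j => hne _ j, hvy, div_eq_div_iff hD hc]
  apply mul_right_cancel₀ (b := ((n - k)! * k ! : K) * k ! * gk * S0 * S1)
    (by simp [hgk, hS0, hS1, factorial_ne_zero])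
  -- after multiplying out, both sides equal `(n + k)! * sf (2 * n)`
  linear_combination (S0 * c * (k ! : K) * gk * S0 * S1) * hvx + (c * (S0 * S1) ^ 2) * hk +
    ((n + k)! : K) * hconst - (gk * D * S0 * S1) * hchoose - (((n + k)! : K) * S0 * S1) * hden -
    ((n + k)! : K) * hsf

theorem det_pow_div_natCast_succAbove_add_succ {K : Type*} [Field K] [CharZero K] (t : K)
    (n : ℕ) (k : Fin (n + 1)) :
    det (of fun i j : Fin n =>
        t ^ ((k.succAbove i : ℕ) + j + 1) / (((k.succAbove i : ℕ) + j + 1 : ℕ) : K)) =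
      t ^ (n ^ 2 + (n - k)) * ((n.choose k * (n + k).choose k : ℕ) : K) /
        ((Nat.choose (2 * n) n : K) *
          ∏ j ∈ Icc 1 (n - 1), ((2 * (j : K) + 1) * (Nat.choose (2 * j) j : K) ^ 2)) := by
  have hfactor : (of fun i j : Fin n =>
      t ^ ((k.succAbove i : ℕ) + j + 1) / (((k.succAbove i : ℕ) + j + 1 : ℕ) : K)) =
      of fun i j => t ^ (k.succAbove i : ℕ) * (of fun i (j : Fin n) => t ^ ((j : ℕ) + 1) *
        (of fun i j : Fin n => ((k.succAbove i : K) + ((j : K) + 1))⁻¹) i j) i j := by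
    ext i j
    simp only [of_apply]
    push_cast
    ring
  rw [hfactor, det_mul_column, det_mul_row, det_inv_natCast_succAbove_add_succ,
    prod_pow_eq_pow_sum, prod_pow_eq_pow_sum, ← mul_assoc, ← pow_add,
    Fin.sum_succAbove_add_sum_succ, mul_div_assoc]

end Matrix

theorem harmonicPoly_succ (m : ℕ) (t : ℝ) :
    harmonicPoly (m + 1) t = harmonicPoly m t + t ^ (m + 1) / ((m + 1 : ℕ) : ℝ) :=
  sum_Icc_succ_top (by omega) _

theorem neg_one_pow_mul_neg_pow_sub {R : Type*} [Ring R] (t : R) {n j : ℕ} (hj : j ≤ n) :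
    (-1) ^ n * (-t) ^ (n - j) = (-1) ^ j * t ^ (n - j) := by
  rw [neg_pow t, ← mul_assoc, ← pow_add, show n + (n - j) = j + 2 * (n - j) by omega, pow_add,
    pow_mul, neg_one_sq, one_pow, mul_one]

/-- `det((H_{i+j}(t))_{i,j=0}^n)
  = (−1)^n t^{n²} r(n,t) / (C(2n,n)·∏_{j=1}^{n−1} ((2j+1)C(2j,j)²))`. -/
theorem det_hankel_harmonicPoly (t : ℝ) (n : ℕ) :
    Matrix.det (Matrix.of fun i j : Fin (n + 1) => harmonicPoly ((i : ℕ) + (j : ℕ)) t) =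
      (-1 : ℝ) ^ n * t ^ (n ^ 2) * rPoly n t /
        ((Nat.choose (2 * n) n : ℝ) *
          ∏ j ∈ Finset.Icc 1 (n - 1), ((2 * (j : ℝ) + 1) * (Nat.choose (2 * j) j : ℝ) ^ 2)) := by
  let B : Matrix (Fin (n + 1)) (Fin (n + 1)) ℝ := of fun i j =>
    Fin.cases (harmonicPoly i t)
      (fun j : Fin n => t ^ ((i : ℕ) + j + 1) / (((i : ℕ) + j + 1 : ℕ) : ℝ)) j
  have hB : det (of fun i j : Fin (n + 1) => harmonicPoly ((i : ℕ) + (j : ℕ)) t) = B.det :=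
    det_eq_of_forall_col_eq_smul_add_pred (fun _ => 1) (fun i => by simp [B])
      fun i j => by simp [B, ← add_assoc, harmonicPoly_succ, add_comm]
  rw [hB, det_succ_column_zero, rPoly, mul_sum, sum_div, ← Fin.sum_univ_eq_sum_range]
  refine sum_congr rfl fun k _ => ?_
  have hminor : B.submatrix k.succAbove Fin.succ = of fun i j : Fin n =>
      t ^ ((k.succAbove i : ℕ) + j + 1) / (((k.succAbove i : ℕ) + j + 1 : ℕ) : ℝ) := rfl
  have hsign := neg_one_pow_mul_neg_pow_sub t (Nat.lt_succ_iff.mp k.isLt)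
  rw [hminor, det_pow_div_natCast_succAbove_add_succ, pow_add]
  simp only [B, of_apply, Fin.cases_zero]
  push_cast
  linear_combination (-(t ^ n ^ 2 * (n.choose k : ℝ) * ((n + k).choose k : ℝ) * harmonicPoly k t /
    ((Nat.choose (2 * n) n : ℝ) *
      ∏ j ∈ Icc 1 (n - 1), ((2 * (j : ℝ) + 1) * (Nat.choose (2 * j) j : ℝ) ^ 2)))) * hsign
end

section
/- Define r(n,t) = ∑_{j=0}^{n} (−t)^{n−j}·C(n,j)·C(n+j,j)·H_j(t). Then for every real t, the sequence (r(n,t))_{n≥0} satisfies the recurrence n·r(n,t) + (t−2)·(2n−1)·r(n−1,t) + t²·(n−1)·r(n−2,t) = 0 for all n ≥ 2, with initial values r(0,t) = 0 and r(1,t) = 2t. -/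
section AuxRPoly
open Nat


-- helper: cast factorial step
lemma factR (a : ℕ) : ((a+1)! : ℝ) = (a+1) * (a ! : ℝ) := by
  rw [Nat.factorial_succ]; push_cast; ring

lemma fact_ne (a : ℕ) : ((a ! : ℝ)) ≠ 0 := by
  exact_mod_cast Nat.factorial_ne_zero a

-- identity (ii), generic case: n = i+d+3, j = i+1  (1 ≤ j ≤ n-2)
lemma idA (i d : ℕ) :
    ((i:ℝ)+d+3) * ((i+d+3).choose (i+1) : ℝ) * ((2*i+d+4).choose (i+1) : ℝ)
      + ((i:ℝ)+d+2) * ((i+d+1).choose (i+1) : ℝ) * ((2*i+d+2).choose (i+1) : ℝ)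
  = (2*(i:ℝ)+2*d+5) * ((i+d+2).choose (i+1) : ℝ) * ((2*i+d+3).choose (i+1) : ℝ)
      + 2*(2*(i:ℝ)+2*d+5) * ((i+d+2).choose i : ℝ) * ((2*i+d+2).choose i : ℝ) := by
  rw [Nat.cast_choose ℝ (by omega : i+1 ≤ i+d+3),
      Nat.cast_choose ℝ (by omega : i+1 ≤ 2*i+d+4),
      Nat.cast_choose ℝ (by omega : i+1 ≤ i+d+1),
      Nat.cast_choose ℝ (by omega : i+1 ≤ 2*i+d+2),
      Nat.cast_choose ℝ (by omega : i+1 ≤ i+d+2),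
      Nat.cast_choose ℝ (by omega : i+1 ≤ 2*i+d+3),
      Nat.cast_choose ℝ (by omega : i ≤ i+d+2),
      Nat.cast_choose ℝ (by omega : i ≤ 2*i+d+2)]
  rw [show i+d+3-(i+1) = d+2 by omega, show 2*i+d+4-(i+1) = i+d+3 by omega,
      show i+d+1-(i+1) = d by omega, show 2*i+d+2-(i+1) = i+d+1 by omega,
      show i+d+2-(i+1) = d+1 by omega, show 2*i+d+3-(i+1) = i+d+2 by omega,
      show i+d+2-i = d+2 by omega, show 2*i+d+2-i = i+d+2 by omega]
  rw [show (i+d+3)! = (i+d+3)*(i+d+2)! by rw [show i+d+3 = (i+d+2)+1 by omega, Nat.factorial_succ],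
      show (2*i+d+4)! = (2*i+d+4)*(2*i+d+3)! by rw [show 2*i+d+4 = (2*i+d+3)+1 by omega, Nat.factorial_succ],
      show (2*i+d+3)! = (2*i+d+3)*(2*i+d+2)! by rw [show 2*i+d+3 = (2*i+d+2)+1 by omega, Nat.factorial_succ],
      show (i+d+2)! = (i+d+2)*(i+d+1)! by rw [show i+d+2 = (i+d+1)+1 by omega, Nat.factorial_succ],
      show (d+2)! = (d+2)*(d+1)! by rw [show d+2 = (d+1)+1 by omega, Nat.factorial_succ],
      Nat.factorial_succ (d), Nat.factorial_succ i]
  push_cast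
  have h1 := fact_ne i; have h2 := fact_ne d; have h3 := fact_ne (i+d+1); have h4 := fact_ne (2*i+d+2)
  have hi : ((i:ℝ)+1) ≠ 0 := by positivity
  have hd1 : ((d:ℝ)+1) ≠ 0 := by positivity
  have hd2 : ((d:ℝ)+2) ≠ 0 := by positivity
  have hid : ((i:ℝ)+d+1) ≠ 0 := by positivity
  have hid2 : ((i:ℝ)+d+2) ≠ 0 := by positivity
  have hid3 : ((i:ℝ)+d+3) ≠ 0 := by positivity
  field_simp
  ring

-- j = m+1 case
lemma idB (m : ℕ) :
    ((m:ℝ)+2)*((m:ℝ)+2) * ((2*m+3).choose (m+1) : ℝ)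
  = (2*(m:ℝ)+3) * ((2*m+2).choose (m+1) : ℝ) + 2*(2*(m:ℝ)+3)*((m:ℝ)+1) * ((2*m+1).choose m : ℝ) := by
  rw [Nat.cast_choose ℝ (by omega : m+1 ≤ 2*m+3),
      Nat.cast_choose ℝ (by omega : m+1 ≤ 2*m+2),
      Nat.cast_choose ℝ (by omega : m ≤ 2*m+1)]
  rw [show 2*m+3-(m+1) = m+2 by omega, show 2*m+2-(m+1) = m+1 by omega,
      show 2*m+1-m = m+1 by omega]
  rw [show (2*m+3)! = (2*m+3)*(2*m+2)*(2*m+1)! by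
        rw [show 2*m+3 = (2*m+2)+1 by omega, Nat.factorial_succ,
            show 2*m+2 = (2*m+1)+1 by omega, Nat.factorial_succ]; ring,
      show (2*m+2)! = (2*m+2)*(2*m+1)! by
        rw [show 2*m+2 = (2*m+1)+1 by omega, Nat.factorial_succ],
      show (m+2)! = (m+2)*(m+1)! by
        rw [show m+2 = (m+1)+1 by omega, Nat.factorial_succ],
      Nat.factorial_succ m]
  push_cast
  have hm1 : ((m:ℝ)+1) ≠ 0 := by positivity
  have hm2 : ((m:ℝ)+2) ≠ 0 := by positivity
  field_simp
  ring

-- j = m+2 case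
lemma idC (m : ℕ) :
    ((m:ℝ)+2) * ((2*m+4).choose (m+2) : ℝ) = 2*(2*(m:ℝ)+3) * ((2*m+2).choose (m+1) : ℝ) := by
  rw [Nat.cast_choose ℝ (by omega : m+2 ≤ 2*m+4),
      Nat.cast_choose ℝ (by omega : m+1 ≤ 2*m+2)]
  rw [show 2*m+4-(m+2) = m+2 by omega, show 2*m+2-(m+1) = m+1 by omega]
  rw [show (2*m+4)! = (2*m+4)*(2*m+3)*(2*m+2)! by
        rw [show 2*m+4 = (2*m+3)+1 by omega, Nat.factorial_succ,
            show 2*m+3 = (2*m+2)+1 by omega, Nat.factorial_succ]; ring,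
      show (m+2)! = (m+2)*(m+1)! by rw [show m+2 = (m+1)+1 by omega, Nat.factorial_succ]]
  push_cast
  have hm2 : ((m:ℝ)+2) ≠ 0 := by positivity
  field_simp
  ring

lemma partialSum (N : ℕ) : ∀ k e : ℕ, k + e = N →
    ∑ i ∈ Finset.range (k+1),
        ((-1:ℝ)^i * ((N+1).choose i : ℝ) * ((N+1+i).choose i : ℝ) / ((i:ℝ)+1))
      = (-1:ℝ)^k * (N ! : ℝ) * ((N+k+2)! : ℝ)
        / ((e ! : ℝ) * ((N+2)! : ℝ) * (k ! : ℝ) * ((k+1)! : ℝ)) := by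
  intro k
  induction k with
  | zero =>
    intro e he
    subst he
    have h2 := fact_ne e
    simp [Nat.factorial]
    field_simp
  | succ k ih =>
    intro e he
    rw [Finset.sum_range_succ, ih (e+1) (by omega)]
    rw [Nat.cast_choose ℝ (by omega : k+1 ≤ N+1),
        Nat.cast_choose ℝ (by omega : k+1 ≤ N+1+(k+1))]
    rw [show N+1-(k+1) = e+1 by omega, show N+1+(k+1)-(k+1) = N+1 by omega]
    rw [show N+1+(k+1) = N+k+2 by omega]
    rw [show (N+(k+1)+2)! = (N+k+3)*(N+k+2)! by
          rw [show N+(k+1)+2 = (N+k+2)+1 by omega, Nat.factorial_succ],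
        show (e+1)! = (e+1)*(e !) by rw [Nat.factorial_succ],
        show ((k+1)+1)! = (k+2)*((k+1)!) by
          rw [show (k+1)+1 = k+2 by omega, show (k+2)! = (k+2)*((k+1)!) by
            rw [show k+2 = (k+1)+1 by omega, Nat.factorial_succ]],
        show ((k+1)!) = (k+1)*(k !) by rw [Nat.factorial_succ],
        show ((N+1)!) = (N+1)*(N !) by rw [Nat.factorial_succ],
        show ((N+2)!) = (N+2)*(N+1)*(N !) by
          rw [show N+2 = (N+1)+1 by omega, Nat.factorial_succ, Nat.factorial_succ]; ring]
    have h1 := fact_ne k; have h2 := fact_ne e; have h3 := fact_ne N; have h4 := fact_ne (N+k+2)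
    have hk1 : ((k:ℝ)+1) ≠ 0 := by positivity
    have hk2 : ((k:ℝ)+2) ≠ 0 := by positivity
    have he1 : ((e:ℝ)+1) ≠ 0 := by positivity
    have hN1 : ((N:ℝ)+1) ≠ 0 := by positivity
    have hN2 : ((N:ℝ)+2) ≠ 0 := by positivity
    have hNe : (N:ℝ) = (k:ℝ) + 1 + (e:ℝ) := by exact_mod_cast congrArg (Nat.cast : ℕ → ℝ) he.symm
    push_cast
    rw [pow_succ, hNe]
    field_simp
    ring

lemma key_sum_s10 (N : ℕ) :
    ∑ i ∈ Finset.range (N+2),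
        ((-1:ℝ)^i * ((N+1).choose i : ℝ) * ((N+1+i).choose i : ℝ) / ((i:ℝ)+1)) = 0 := by
  rw [show N+2 = (N+1)+1 by omega, Finset.sum_range_succ, partialSum N N 0 (by omega)]
  rw [Nat.choose_self, Nat.cast_choose ℝ (by omega : N+1 ≤ N+1+(N+1))]
  rw [show N+1+(N+1)-(N+1) = N+1 by omega, show N+1+(N+1) = N+N+2 by omega]
  rw [show ((N+1)!) = (N+1)*(N !) by rw [Nat.factorial_succ],
      show ((N+2)!) = (N+2)*(N+1)*(N !) by
        rw [show N+2 = (N+1)+1 by omega, Nat.factorial_succ, Nat.factorial_succ]; ring]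
  have h3 := fact_ne N; have h4 := fact_ne (N+N+2)
  have hN1 : ((N:ℝ)+1) ≠ 0 := by positivity
  have hN2 : ((N:ℝ)+2) ≠ 0 := by positivity
  push_cast
  rw [pow_succ]
  simp [Nat.factorial]
  field_simp
  ring
noncomputable def Tfun (t : ℝ) (n k : ℕ) : ℝ :=
  ∑ j ∈ Finset.Icc k n, (-t) ^ (n - j) * (n.choose j : ℝ) * ((n + j).choose j : ℝ)

noncomputable def uu (t : ℝ) (m j : ℕ) : ℝ :=
  (-1:ℝ)^(m+2-j) * (2*(2*(m:ℝ)+3)) * ((m+1).choose (j-1) : ℝ) * ((m+j).choose (j-1) : ℝ)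
    * t^(m+2-j)

lemma wA (t : ℝ) (i d : ℕ) :
    ((i:ℝ)+d+3) * ((-t)^(d+2) * ((i+d+3).choose (i+1) : ℝ) * ((2*i+d+4).choose (i+1) : ℝ))
  + (t-2)*(2*(i:ℝ)+2*d+5) * ((-t)^(d+1) * ((i+d+2).choose (i+1) : ℝ) * ((2*i+d+3).choose (i+1) : ℝ))
  + t^2*((i:ℝ)+d+2) * ((-t)^d * ((i+d+1).choose (i+1) : ℝ) * ((2*i+d+2).choose (i+1) : ℝ))
  = (-1:ℝ)^(d+2) * (2*(2*(i:ℝ)+2*d+5)) * ((i+d+2).choose i : ℝ) * ((2*i+d+2).choose i : ℝ) * t^(d+2)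
    - (-1:ℝ)^(d+1) * (2*(2*(i:ℝ)+2*d+5)) * ((i+d+2).choose (i+1) : ℝ) * ((2*i+d+3).choose (i+1) : ℝ) * t^(d+1) := by
  simp only [show ∀ e:ℕ, (-t)^e = (-1:ℝ)^e * t^e from fun e => by rw [neg_pow]]
  linear_combination ((-1:ℝ)^d * t^(d+2)) * idA i d

lemma w_eq (t : ℝ) (m j : ℕ) (h1 : 1 ≤ j) (h2 : j ≤ m+2) :
    ((m:ℝ)+2) * ((-t)^(m+2-j) * ((m+2).choose j : ℝ) * ((m+2+j).choose j : ℝ))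
  + (t-2)*(2*(m:ℝ)+3) * ((-t)^(m+1-j) * ((m+1).choose j : ℝ) * ((m+1+j).choose j : ℝ))
  + t^2*((m:ℝ)+1) * ((-t)^(m-j) * (m.choose j : ℝ) * ((m+j).choose j : ℝ))
  = uu t m j - uu t m (j+1) := by
  obtain ⟨i, rfl⟩ : ∃ i, j = i+1 := ⟨j-1, by omega⟩
  rcases (by omega : i+1 ≤ m ∨ i+1 = m+1 ∨ i+1 = m+2) with h | h | h
  · obtain ⟨d, rfl⟩ : ∃ d, m = i+1+d := ⟨m-(i+1), by omega⟩
    simp only [uu]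
    rw [show i+1+d = i+d+1 from by omega]
    rw [show i+d+1+2 = i+d+3 from by omega, show i+d+1+1 = i+d+2 from by omega]
    rw [show i+d+3+(i+1) = 2*i+d+4 from by omega, show i+d+2+(i+1) = 2*i+d+3 from by omega,
        show i+d+1+(i+1) = 2*i+d+2 from by omega, show i+d+1+(i+1+1) = 2*i+d+3 from by omega]
    rw [show i+d+3-(i+1) = d+2 from by omega, show i+d+2-(i+1) = d+1 from by omega,
        show i+d+1-(i+1) = d from by omega, show i+d+3-(i+1+1) = d+1 from by omega,
        show i+1-1 = i from by omega, show i+1+1-1 = i+1 from by omega]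
    push_cast
    linear_combination wA t i d
  · have hi : i = m := by omega
    subst hi
    simp only [uu]
    rw [show i+2-(i+1) = 1 from by omega, show i+1-(i+1) = 0 from by omega,
        show i-(i+1) = 0 from by omega, show i+2-(i+1+1) = 0 from by omega,
        show i+1-1 = i from by omega, show i+1+1-1 = i+1 from by omega,
        show i+2+(i+1) = 2*i+3 from by omega, show i+1+(i+1) = 2*i+2 from by omega,
        show i+(i+1) = 2*i+1 from by omega, show i+(i+1+1) = 2*i+2 from by omega]
    simp only [Nat.choose_self,
      show (i+2).choose (i+1) = i+2 from by
        rw [show i+2 = (i+1)+1 from by omega]; exact Nat.choose_succ_self_right (i+1),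
      show (i+1).choose i = i+1 from Nat.choose_succ_self_right i,
      Nat.choose_eq_zero_of_lt (show i < i+1 from by omega)]
    push_cast
    linear_combination (-t) * idB i
  · have hi : i = m+1 := by omega
    subst hi
    simp only [uu]
    rw [show m+2-(m+1+1) = 0 from by omega, show m+1-(m+1+1) = 0 from by omega,
        show m-(m+1+1) = 0 from by omega, show m+2-(m+1+1+1) = 0 from by omega,
        show m+1+1-1 = m+1 from by omega]
    simp only [show m+1+1 = m+2 from rfl, Nat.add_sub_cancel, Nat.choose_self,
      Nat.choose_eq_zero_of_lt (show m+1 < m+2 from by omega),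
      Nat.choose_eq_zero_of_lt (show m < m+2 from by omega),
      show m+2+(m+2) = 2*m+4 from by omega, show m+(m+2) = 2*m+2 from by omega]
    push_cast
    linear_combination idC m
lemma tele (t:ℝ) (m k : ℕ) (hkn : k ≤ m+2) :
    ∑ j ∈ Finset.Icc k (m+2), (uu t m j - uu t m (j+1)) = uu t m k := by
  rw [← Finset.Ico_add_one_right_eq_Icc, Finset.sum_Ico_eq_sum_range]
  rw [show m+2+1-k = m+3-k by omega]
  have hrs := Finset.sum_range_sub' (f := fun i => uu t m (k+i)) (n := m+3-k)
  simp only [show ∀ i:ℕ, k+(i+1) = k+i+1 from fun i => rfl] at hrs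
  rw [hrs]
  rw [show k + (m+3-k) = m+3 by omega, show k + 0 = k by omega]
  have : uu t m (m+3) = 0 := by
    simp [uu, show m+3-1 = m+2 by omega, Nat.choose_eq_zero_of_lt (by omega : m+1 < m+2)]
  rw [this, sub_zero]

lemma T_rec (t : ℝ) (m k : ℕ) (hk : 1 ≤ k) (hkn : k ≤ m+2) :
    ((m:ℝ)+2) * Tfun t (m+2) k + (t-2)*(2*(m:ℝ)+3) * Tfun t (m+1) k
      + t^2*((m:ℝ)+1) * Tfun t m k = uu t m k := by
  have h1 : Tfun t (m+1) k
      = ∑ j ∈ Finset.Icc k (m+2), (-t)^(m+1-j) * ((m+1).choose j : ℝ) * ((m+1+j).choose j : ℝ) := by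
    rw [Tfun]
    apply Finset.sum_subset (Finset.Icc_subset_Icc_right (by omega))
    intro j hj hj2
    simp only [Finset.mem_Icc] at hj hj2
    have hj3 : m+1 < j := by omega
    simp [Nat.choose_eq_zero_of_lt hj3]
  have h2 : Tfun t m k
      = ∑ j ∈ Finset.Icc k (m+2), (-t)^(m-j) * (m.choose j : ℝ) * ((m+j).choose j : ℝ) := by
    rw [Tfun]
    apply Finset.sum_subset (Finset.Icc_subset_Icc_right (by omega))
    intro j hj hj2
    simp only [Finset.mem_Icc] at hj hj2
    have hj3 : m < j := by omega
    simp [Nat.choose_eq_zero_of_lt hj3]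
  rw [Tfun, h1, h2, Finset.mul_sum, Finset.mul_sum, Finset.mul_sum,
      ← Finset.sum_add_distrib, ← Finset.sum_add_distrib, ← tele t m k hkn]
  apply Finset.sum_congr rfl
  intro j hj
  simp only [Finset.mem_Icc] at hj
  linear_combination w_eq t m j (by omega) (by omega)

lemma rPoly_eq (t : ℝ) (n : ℕ) :
    rPoly n t = ∑ k ∈ Finset.Icc 1 n, t^k/(k:ℝ) * Tfun t n k := by
  rw [rPoly]
  have hH : ∀ j : ℕ, (-t)^(n-j) * (n.choose j : ℝ) * ((n+j).choose j : ℝ) * harmonicPoly j t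
      = ∑ k ∈ Finset.Ico 1 (j+1), (-t)^(n-j) * (n.choose j:ℝ) * ((n+j).choose j:ℝ) * (t^k/(k:ℝ)) := by
    intro j; rw [harmonicPoly, ← Finset.Ico_add_one_right_eq_Icc, Finset.mul_sum]
  simp only [hH]
  rw [Finset.range_eq_Ico]
  rcases Nat.eq_zero_or_pos n with hn | hn
  · subst hn; simp
  rw [Finset.sum_eq_sum_Ico_succ_bot (by omega : 0 < n+1)]
  rw [show (0:ℕ)+1 = 1 from rfl, Finset.Ico_self, Finset.sum_empty, zero_add]
  rw [← Finset.sum_Ico_Ico_comm 1 (n+1)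
      (fun k j => (-t)^(n-j) * (n.choose j:ℝ) * ((n+j).choose j:ℝ) * (t^k/(k:ℝ)))]
  rw [← Finset.Ico_add_one_right_eq_Icc 1 n]
  apply Finset.sum_congr rfl
  intro k hk
  rw [Finset.Ico_add_one_right_eq_Icc, Tfun, Finset.mul_sum]
  apply Finset.sum_congr rfl
  intro j hj
  ring

end AuxRPoly

/-- `n·r(n,t) + (t−2)(2n−1)·r(n−1,t) + t²(n−1)·r(n−2,t) = 0` for `n ≥ 2`,
with `r(0,t) = 0` and `r(1,t) = 2t`. -/
theorem rPoly_recurrence (t : ℝ) :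
    (∀ n : ℕ, 2 ≤ n →
      (n : ℝ) * rPoly n t + (t - 2) * (2 * (n : ℝ) - 1) * rPoly (n - 1) t +
        t ^ 2 * ((n : ℝ) - 1) * rPoly (n - 2) t = 0) ∧
    rPoly 0 t = 0 ∧ rPoly 1 t = 2 * t := by
  refine ⟨?_, ?_, ?_⟩
  · intro n hn
    obtain ⟨m, rfl⟩ : ∃ m, n = m+2 := ⟨n-2, by omega⟩
    rw [show m+2-1 = m+1 from by omega, show m+2-2 = m from by omega]
    rw [rPoly_eq t (m+2), rPoly_eq t (m+1), rPoly_eq t m]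
    have E1 : (∑ k ∈ Finset.Icc 1 (m+1), t^k/(k:ℝ) * Tfun t (m+1) k)
        = ∑ k ∈ Finset.Icc 1 (m+2), t^k/(k:ℝ) * Tfun t (m+1) k := by
      apply Finset.sum_subset (Finset.Icc_subset_Icc_right (by omega))
      intro k hk hk2
      simp only [Finset.mem_Icc] at hk hk2
      have : Tfun t (m+1) k = 0 := by
        rw [Tfun, Finset.Icc_eq_empty (by omega), Finset.sum_empty]
      rw [this, mul_zero]
    have E2 : (∑ k ∈ Finset.Icc 1 m, t^k/(k:ℝ) * Tfun t m k)
        = ∑ k ∈ Finset.Icc 1 (m+2), t^k/(k:ℝ) * Tfun t m k := by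
      apply Finset.sum_subset (Finset.Icc_subset_Icc_right (by omega))
      intro k hk hk2
      simp only [Finset.mem_Icc] at hk hk2
      have : Tfun t m k = 0 := by
        rw [Tfun, Finset.Icc_eq_empty (by omega), Finset.sum_empty]
      rw [this, mul_zero]
    rw [E1, E2, Finset.mul_sum, Finset.mul_sum, Finset.mul_sum,
        ← Finset.sum_add_distrib, ← Finset.sum_add_distrib]
    rw [← Finset.Ico_add_one_right_eq_Icc, Finset.sum_Ico_eq_sum_range,
        show m+2+1-1 = m+2 from by omega]
    have hz := key_sum_s10 m
    calc
      ∑ i ∈ Finset.range (m+2),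
          ((↑(m+2):ℝ) * (t^(1+i)/((1+i:ℕ):ℝ) * Tfun t (m+2) (1+i))
            + (t-2) * (2*(↑(m+2):ℝ)-1) * (t^(1+i)/((1+i:ℕ):ℝ) * Tfun t (m+1) (1+i))
            + t^2 * ((↑(m+2):ℝ)-1) * (t^(1+i)/((1+i:ℕ):ℝ) * Tfun t m (1+i)))
        = ∑ i ∈ Finset.range (m+2),
            (2*(2*(m:ℝ)+3) * (-1:ℝ)^(m+1) * t^(m+2))
              * ((-1:ℝ)^i * ((m+1).choose i : ℝ) * ((m+1+i).choose i : ℝ) / ((i:ℝ)+1)) := by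
          apply Finset.sum_congr rfl
          intro i hi
          simp only [Finset.mem_range] at hi
          obtain ⟨c, hc⟩ : ∃ c, m+1 = i+c := ⟨m+1-i, by omega⟩
          have hT := T_rec t m (1+i) (by omega) (by omega)
          simp only [uu] at hT
          rw [show m+2-(1+i) = c from by omega, show 1+i-1 = i from by omega,
              show m+(1+i) = m+1+i from by omega] at hT
          have hp : t^(1+i) * t^c = t^(m+2) := by rw [← pow_add]; congr 1; omega
          have h2i : (-1:ℝ)^c = (-1:ℝ)^(m+1) * (-1:ℝ)^i := by
            rw [hc, pow_add]
            rcases Nat.even_or_odd i with h | h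
            · rw [h.neg_one_pow]; ring
            · rw [h.neg_one_pow]; ring
          rw [h2i] at hT
          have hi1 : ((i:ℝ)+1) ≠ 0 := by positivity
          push_cast
          linear_combination (t^(1+i)/((i:ℝ)+1)) * hT
            + (2*(2*(m:ℝ)+3)*(-1:ℝ)^(m+1)*(-1:ℝ)^i*((m+1).choose i:ℝ)*((m+1+i).choose i:ℝ)/((i:ℝ)+1)) * hp
      _ = 0 := by rw [← Finset.mul_sum, hz, mul_zero]
  · simp [rPoly, harmonicPoly]
  · rw [rPoly]
    rw [show (1:ℕ)+1 = 2 from rfl, Finset.sum_range_succ, Finset.sum_range_succ,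
        Finset.sum_range_zero]
    simp [harmonicPoly]
end

section
/- For every n ≥ 0, ∑_{j=0}^{n} (−1)^{n−j}·C(n,j)·C(n+j,j)·H_j = 2·H_n, where H_m = ∑_{k=1}^{m} 1/k is the m-th harmonic number. -/
/-!
Writing `H_j = ∑_{i ≥ 1} (-1)^(i-1) C(j,i) / i` and exchanging the sums, the inner sums
`∑_j (-1)^(n-j) C(n,j) C(n+j,j) C(j,i) = C(n,i) C(n+i,i)` are `(n-i)`-th forward differences of
`x ↦ C(x,n)`. What remains, `∑_{i ≥ 1} (-1)^(i-1) C(n,i) C(n+i,i) / i = 2 H_n`, follows by induction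
on `n`: by the recurrence `(n+1) (C(n+1,i) C(n+1+i,i) - C(n,i) C(n+i,i)) = 2 i C(n+1,i) C(n+i,i)`
the increment is `2/(n+1)` times `∑_{i ≥ 1} (-1)^(i-1) C(n+1,i) C(n+i,n)`, and this sum is `1`
because the `(n+1)`-st forward difference of the degree-`n` polynomial `C(x,n)` vanishes.
-/

open Finset

lemma fwdDiff_iter_one_eq_sum {R : Type*} [Ring R] (f : ℕ → R) (m a : ℕ) :
    (fwdDiff 1)^[m] f a = ∑ t ∈ range (m + 1), (-1 : R) ^ (m - t) * m.choose t * f (a + t) := by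
  simp [fwdDiff_iter_eq_sum_shift, zsmul_eq_mul]

lemma sum_neg_one_pow_mul_choose_mul_choose_add (m k a : ℕ) :
    ∑ t ∈ range (m + 1), (-1 : ℤ) ^ (m - t) * m.choose t * (a + t).choose (m + k) =
      a.choose k := by
  rw [← fwdDiff_iter_one_eq_sum (fun x ↦ (x.choose (m + k) : ℤ)), fwdDiff_iter_choose]

lemma fwdDiff_iter_choose_eq_zero {k m : ℕ} (hk : k < m) :
    (fwdDiff 1)^[m] (fun x ↦ x.choose k : ℕ → ℤ) = 0 := by
  obtain ⟨l, rfl⟩ := Nat.exists_eq_add_of_lt hk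
  have h := fwdDiff_iter_choose 0 k
  simp only [add_zero, Nat.choose_zero_right, Nat.cast_one] at h
  rw [add_assoc, add_comm, Function.iterate_add_apply, h, Function.iterate_succ_apply,
    fwdDiff_const]
  exact Function.iterate_fixed (fwdDiff_const 1 0) l

lemma sum_neg_one_pow_mul_choose_mul_choose_add_eq_zero {k m : ℕ} (hk : k < m) (a : ℕ) :
    ∑ t ∈ range (m + 1), (-1 : ℤ) ^ t * m.choose t * (a + t).choose k = 0 := by
  have h := fwdDiff_iter_one_eq_sum (fun x ↦ (x.choose k : ℤ)) m a
  rw [fwdDiff_iter_choose_eq_zero hk, Pi.zero_apply, eq_comm] at h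
  rw [← mul_eq_zero_of_right ((-1 : ℤ) ^ m) h, mul_sum]
  refine sum_congr rfl fun t ht ↦ ?_
  have hsq : ((-1 : ℤ) ^ (m - t)) ^ 2 = 1 := by rw [← pow_mul, pow_mul', neg_one_sq, one_pow]
  rw [← pow_sub_mul_pow (-1 : ℤ) (mem_range_succ_iff.1 ht)]
  linear_combination (-(-1 : ℤ) ^ t * m.choose t * (a + t).choose k) * hsq

lemma sum_neg_one_pow_mul_choose_succ_mul_choose_add {k m : ℕ} (hk : k < m) (a : ℕ) :
    ∑ i ∈ range m, (-1 : ℤ) ^ i * m.choose (i + 1) * (a + (i + 1)).choose k = a.choose k := by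
  have h := sum_neg_one_pow_mul_choose_mul_choose_add_eq_zero hk a
  simp only [sum_range_succ', pow_succ, mul_neg_one, neg_mul, sum_neg_distrib, pow_zero,
    Nat.choose_zero_right, add_zero, Nat.cast_one, one_mul] at h
  linarith

lemma sum_neg_one_pow_mul_choose_mul_choose_add_mul_choose {k n : ℕ} (hk : k ≤ n) :
    ∑ j ∈ range (n + 1), (-1 : ℤ) ^ (n - j) * n.choose j * (n + j).choose j * j.choose k =
      n.choose k * (n + k).choose k := by
  obtain ⟨m, rfl⟩ := Nat.exists_eq_add_of_le hk
  have hlow : ∀ j ∈ range k,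
      (-1 : ℤ) ^ (k + m - j) * (k + m).choose j * (k + m + j).choose j * j.choose k = 0 :=
    fun j hj ↦ by simp [Nat.choose_eq_zero_of_lt (mem_range.1 hj)]
  rw [show k + m + 1 = k + (m + 1) by ring, sum_range_add, sum_eq_zero hlow, zero_add,
    ← sum_neg_one_pow_mul_choose_mul_choose_add m k (k + m + k), mul_sum]
  refine sum_congr rfl fun t ht ↦ ?_
  have hsign : k + m - (k + t) = m - t := by omega
  have hchoose : ((k + m).choose (k + t) : ℤ) * (k + t).choose k =
      (k + m).choose k * m.choose t := by
    rw [← Nat.cast_mul, Nat.choose_mul (by omega)]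
    simp
  have hsymm : (k + m + (k + t)).choose (k + t) = (k + m + k + t).choose (m + k) := by
    rw [show k + m + k + t = m + k + (k + t) by ring, Nat.choose_symm_add]
    ring_nf
  rw [hsign, hsymm]
  linear_combination ((-1 : ℤ) ^ (m - t) * (k + m + k + t).choose (m + k)) * hchoose

lemma sum_neg_one_pow_mul_choose_succ_mul_choose_add_succ (n : ℕ) :
    ∑ i ∈ range (n + 1), (-1 : ℤ) ^ i * (n + 1).choose (i + 1) * (n + (i + 1)).choose (i + 1) =
      1 := by
  have h := sum_neg_one_pow_mul_choose_succ_mul_choose_add (lt_add_one n) n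
  rw [Nat.choose_self, Nat.cast_one] at h
  refine (sum_congr rfl fun i _ ↦ ?_).trans h
  rw [Nat.choose_symm_add]

lemma choose_mul_choose_add_recurrence {n k : ℕ} (hk : k ≤ n + 1) :
    (n + 1) * ((n + 1).choose k * (n + 1 + k).choose k) =
      (n + 1) * (n.choose k * (n + k).choose k) +
        2 * k * ((n + 1).choose k * (n + k).choose k) := by
  have h₁ := Nat.choose_mul_succ_eq (n + k) k
  have h₂ := Nat.choose_mul_succ_eq n k
  rw [show n + k + 1 - k = n + 1 by omega, show n + k + 1 = n + 1 + k by ring] at h₁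
  zify [hk] at h₁ h₂ ⊢
  linear_combination -((n + 1).choose k : ℤ) * h₁ - ((n + k).choose k : ℤ) * h₂

theorem harmonic_eq_sum_neg_one_pow_mul_choose_div (n : ℕ) :
    harmonic n = ∑ i ∈ range n, (-1 : ℚ) ^ i * n.choose (i + 1) / (i + 1) := by
  induction n with
  | zero => simp
  | succ n ih =>
    have hpascal : ∀ i ∈ range (n + 1),
        (-1 : ℚ) ^ i * (n + 1).choose (i + 1) / (i + 1) =
          (-1 : ℚ) ^ i * n.choose (i + 1) / (i + 1) +
            ((-1 : ℚ) ^ i * (n + 1).choose (i + 1)) / (n + 1) := by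
      intro i _
      have h₁ : ((n + 1).choose (i + 1) : ℚ) = n.choose i + n.choose (i + 1) := by
        exact_mod_cast Nat.choose_succ_succ' n i
      have h₂ : (n + 1 : ℚ) * n.choose i = (n + 1).choose (i + 1) * (i + 1) := by
        exact_mod_cast Nat.add_one_mul_choose_eq n i
      field_simp
      linear_combination (n + 1 : ℚ) * h₁ + h₂
    have halt : ∑ i ∈ range (n + 1), (-1 : ℚ) ^ i * (n + 1).choose (i + 1) = 1 := by
      have h := sum_neg_one_pow_mul_choose_succ_mul_choose_add (Nat.succ_pos n) 0
      simp only [Nat.choose_zero_right, Nat.cast_one, mul_one] at h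
      exact_mod_cast h
    rw [sum_congr rfl hpascal, sum_add_distrib, ← sum_div, halt, sum_range_succ,
      Nat.choose_succ_self, ← ih, harmonic_succ]
    push_cast
    ring

theorem sum_neg_one_pow_mul_choose_mul_choose_add_div_eq_two_mul_harmonic (n : ℕ) :
    ∑ i ∈ range n, (-1 : ℚ) ^ i * n.choose (i + 1) * (n + (i + 1)).choose (i + 1) / (i + 1) =
      2 * harmonic n := by
  induction n with
  | zero => simp
  | succ n ih =>
    have hstep : ∀ i ∈ range (n + 1),
        (-1 : ℚ) ^ i * (n + 1).choose (i + 1) * (n + 1 + (i + 1)).choose (i + 1) / (i + 1) =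
          (-1 : ℚ) ^ i * n.choose (i + 1) * (n + (i + 1)).choose (i + 1) / (i + 1) +
            2 * ((-1 : ℚ) ^ i * (n + 1).choose (i + 1) * (n + (i + 1)).choose (i + 1)) /
              (n + 1) := by
      intro i hi
      have h : (n + 1 : ℚ) * ((n + 1).choose (i + 1) * (n + 1 + (i + 1)).choose (i + 1)) =
          (n + 1) * (n.choose (i + 1) * (n + (i + 1)).choose (i + 1)) +
            2 * (i + 1) * ((n + 1).choose (i + 1) * (n + (i + 1)).choose (i + 1)) := by
        exact_mod_cast choose_mul_choose_add_recurrence (mem_range.1 hi)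
      field_simp
      linear_combination h
    have halt : ∑ i ∈ range (n + 1),
        (-1 : ℚ) ^ i * (n + 1).choose (i + 1) * (n + (i + 1)).choose (i + 1) = 1 := by
      exact_mod_cast sum_neg_one_pow_mul_choose_succ_mul_choose_add_succ n
    rw [sum_congr rfl hstep, sum_add_distrib, ← sum_div, ← mul_sum, halt, sum_range_succ,
      Nat.choose_succ_self, ih, harmonic_succ]
    push_cast
    ring

theorem sum_neg_one_pow_mul_choose_mul_choose_add_mul_harmonic (n : ℕ) :
    ∑ j ∈ range (n + 1), (-1 : ℚ) ^ (n - j) * n.choose j * (n + j).choose j * harmonic j =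
      2 * harmonic n := by
  have hharmonic : ∀ j ∈ range (n + 1),
      harmonic j = ∑ i ∈ range n, (-1 : ℚ) ^ i * j.choose (i + 1) / (i + 1) := by
    intro j hj
    rw [harmonic_eq_sum_neg_one_pow_mul_choose_div]
    refine sum_subset (range_subset_range.2 (mem_range_succ_iff.1 hj)) fun i _ hi ↦ ?_
    rw [Nat.choose_eq_zero_of_lt (by simp at hi; omega), Nat.cast_zero, mul_zero, zero_div]
  have hinner : ∀ i ∈ range n,
      ∑ j ∈ range (n + 1), (-1 : ℚ) ^ (n - j) * n.choose j * (n + j).choose j * j.choose (i + 1) =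
        n.choose (i + 1) * (n + (i + 1)).choose (i + 1) := fun i hi ↦ by
    exact_mod_cast sum_neg_one_pow_mul_choose_mul_choose_add_mul_choose (mem_range.1 hi)
  calc _ = ∑ i ∈ range n, (-1 : ℚ) ^ i / (i + 1) * ∑ j ∈ range (n + 1),
          (-1 : ℚ) ^ (n - j) * n.choose j * (n + j).choose j * j.choose (i + 1) := by
        rw [sum_congr rfl fun j hj ↦ by rw [hharmonic j hj, mul_sum], sum_comm]
        simp_rw [mul_sum]
        refine sum_congr rfl fun i _ ↦ sum_congr rfl fun j _ ↦ ?_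
        ring
    _ = ∑ i ∈ range n,
          (-1 : ℚ) ^ i * n.choose (i + 1) * (n + (i + 1)).choose (i + 1) / (i + 1) :=
        sum_congr rfl fun i hi ↦ by rw [hinner i hi]; ring
    _ = 2 * harmonic n := sum_neg_one_pow_mul_choose_mul_choose_add_div_eq_two_mul_harmonic n

/-- `∑_{j=0}^n (−1)^{n−j}·C(n,j)·C(n+j,j)·H_j = 2·H_n`, where
`H_m = ∑_{k=1}^m 1/k` is the `m`-th harmonic number. -/
theorem alternating_sum_harmonic (n : ℕ) :
    ∑ j ∈ Finset.range (n + 1),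
        (-1 : ℝ) ^ (n - j) * (Nat.choose n j : ℝ) * (Nat.choose (n + j) j : ℝ) *
          (∑ k ∈ Finset.Icc 1 j, (1 : ℝ) / (k : ℝ)) =
      2 * ∑ k ∈ Finset.Icc 1 n, (1 : ℝ) / (k : ℝ) := by
  have hcast : ∀ m : ℕ, ∑ k ∈ Icc 1 m, (1 : ℝ) / k = harmonic m := by
    simp [harmonic_eq_sum_Icc]
  simp_rw [hcast]
  exact_mod_cast sum_neg_one_pow_mul_choose_mul_choose_add_mul_harmonic n
end

section
/- Define r(n,t) = ∑_{j=0}^{n} (−t)^{n−j}·C(n,j)·C(n+j,j)·H_j(t). Then the sequence r(n,2) satisfies n·r(n,2) + 4(n−1)·r(n−2,2) = 0 for n ≥ 2 with r(0,2) = 0 and r(1,2) = 4; consequently r(2n,2) = 0 and r(2n+1,2) = (−1)^n · n! · 2^{3n+2} / (2n+1)!! for all n ≥ 0. -/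
noncomputable def cR (n j : ℕ) : ℝ := (-2)^(n-j) * (n.choose j : ℝ) * ((n+j).choose j : ℝ)

lemma hB (m k : ℕ) : (m.choose (k+1) : ℝ) * (k+1) = (m.choose k : ℝ) * ((m:ℝ) - k) := by
  rcases lt_or_ge m k with h | h
  · simp [Nat.choose_eq_zero_of_lt h, Nat.choose_eq_zero_of_lt (by omega : m < k+1)]
  · have h1 : (m.choose (k+1) * (k+1) : ℕ) = m.choose k * (m - k) := Nat.choose_succ_right_eq m k
    have h2 : ((m : ℝ) - k) = ((m - k : ℕ) : ℝ) := by rw [Nat.cast_sub h]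
    rw [h2]
    exact_mod_cast h1

lemma hC (m k : ℕ) : ((m:ℝ)+1) * (m.choose k : ℝ) = ((m+1).choose k : ℝ) * ((m:ℝ)+1-(k:ℝ)) := by
  have h1 : ((m:ℝ)+1) * (m.choose k : ℝ) = ((m+1).choose (k+1) : ℝ) * ((k:ℝ)+1) := by
    exact_mod_cast Nat.add_one_mul_choose_eq m k
  have h2 := hB (m+1) k
  push_cast at h2
  rw [h1, h2]

lemma R1 (n j : ℕ) (hj : j ≤ n) :
    2*((j:ℝ)+1)^2 * cR n (j+1) = -(((n:ℝ)-j)*((n:ℝ)+j+1)) * cR n j := by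
  rcases eq_or_lt_of_le hj with rfl | h
  · simp [cR, Nat.choose_succ_self]
  · have hpow : ((-2:ℝ))^(n-j) = ((-2:ℝ))^(n-(j+1)) * (-2) := by
      rw [← pow_succ]; congr 1; omega
    have e1 := hB n j
    have e2 : ((n:ℝ)+(j:ℝ)+1) * ((n+j).choose j : ℝ) = ((n+j+1).choose (j+1) : ℝ) * ((j:ℝ)+1) := by
      exact_mod_cast Nat.add_one_mul_choose_eq (n+j) j
    have hidx : n + (j+1) = n + j + 1 := by omega
    simp only [cR, hpow, hidx]
    linear_combination (2*((j:ℝ)+1)*((-2:ℝ))^(n-(j+1))*(((n+j+1).choose (j+1)) : ℝ)) * e1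
      - (2*((n:ℝ)-(j:ℝ))*((-2:ℝ))^(n-(j+1))*((n.choose j : ℝ))) * e2

lemma R2 (n j : ℕ) (hn : 2 ≤ n) (hj : j ≤ n) :
    ((n:ℝ)-j)*((n:ℝ)-j-1) * cR n j = 4*((n:ℝ)+j)*((n:ℝ)+j-1) * cR (n-2) j := by
  rcases (by omega : j ≤ n-2 ∨ j = n-1 ∨ j = n) with h | h | h
  · obtain ⟨k, hk⟩ : ∃ k, n = j + k + 2 := ⟨n-j-2, by omega⟩
    subst hk
    have h2 : j+k+2-2 = j+k := by omega
    have ep1 : j+k+2-j = k+2 := by omega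
    have ep2 : j+k-j = k := by omega
    have i1 : j+k+2 = (j+k+1)+1 := by omega
    have i2 : j+k+2+j = ((j+k+j)+1)+1 := by omega
    rw [h2]
    simp only [cR, ep1, ep2]
    rw [show ((j+k+2).choose j : ℝ) = (((j+k+1)+1).choose j : ℝ) by rw [← i1],
        show ((j+k+2+j).choose j : ℝ) = ((((j+k+j)+1)+1).choose j : ℝ) by rw [← i2]]
    have e1 := hC (j+k+1) j
    have e2 := hC (j+k) j
    have e3 := hC ((j+k+j)+1) j
    have e4 := hC (j+k+j) j
    push_cast at e1 e2 e3 e4 ⊢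
    linear_combination
      (-4*((-2:ℝ))^k*((k:ℝ)+1)*((((j+k+j)+1)+1).choose j : ℝ)) * e1
      + (-4*((-2:ℝ))^k*((j:ℝ)+(k:ℝ)+2)*((((j+k+j)+1)+1).choose j : ℝ)) * e2
      + (-4*((-2:ℝ))^k*((j:ℝ)+(k:ℝ)+1)*(((j+k).choose j : ℝ))) * e3
      + (-4*((-2:ℝ))^k*(2*(j:ℝ)+(k:ℝ)+2)*(((j+k).choose j : ℝ))) * e4
  · subst h
    have hc : ((n-2).choose (n-1)) = 0 := Nat.choose_eq_zero_of_lt (by omega)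
    have hcast : ((n-1 : ℕ):ℝ) = (n:ℝ)-1 := by
      rw [Nat.cast_sub (by omega)]; norm_num
    rw [hcast]
    simp [cR, hc]
  · subst h
    have hc : ((j-2).choose j) = 0 := Nat.choose_eq_zero_of_lt (by omega)
    simp [cR, hc]

noncomputable def GR (n j : ℕ) : ℝ :=
  (cR n j * (-2*(2*(n:ℝ)-1)*(j:ℝ)^2*((n:ℝ)*((n:ℝ)-1)) * harmonicPoly j 2
     + 2*(2*(n:ℝ)-1)*(j:ℝ)*((n:ℝ)-j)*2^j*((n:ℝ)+j-1)))
  / (((n:ℝ)+j)*((n:ℝ)+j-1)*((n:ℝ)*((n:ℝ)-1)))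

set_option maxHeartbeats 1000000 in
lemma stepG (n j : ℕ) (hn : 2 ≤ n) (hj : j ≤ n) :
    (n:ℝ) * (cR n j * harmonicPoly j 2) + 4*((n:ℝ)-1) * (cR (n-2) j * harmonicPoly j 2)
      = GR n (j+1) - GR n j := by
  have hn2 : (2:ℝ) ≤ (n:ℝ) := by exact_mod_cast hn
  have hj0 : (0:ℝ) ≤ (j:ℝ) := by positivity
  have hc : ((j+1 : ℕ) : ℝ) = (j:ℝ)+1 := by push_cast; ring
  have h3 : ((j:ℝ)+1) * harmonicPoly (j+1) 2 = ((j:ℝ)+1) * harmonicPoly j 2 + 2^(j+1) := by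
    unfold harmonicPoly
    rw [Finset.sum_Icc_succ_top (by omega : 1 ≤ j+1)]
    have : ((j:ℝ)+1) ≠ 0 := by positivity
    push_cast
    field_simp
  have h1 := R1 n j hj
  have h2 := R2 n j hn hj
  have hD0 : ((n:ℝ)+(j:ℝ))*((n:ℝ)+(j:ℝ)-1)*((n:ℝ)*((n:ℝ)-1)) ≠ 0 := by
    intro hx
    rcases mul_eq_zero.1 hx with hx | hx
    · rcases mul_eq_zero.1 hx with hx | hx <;> nlinarith
    · rcases mul_eq_zero.1 hx with hx | hx <;> nlinarith
  have hD1 : ((n:ℝ)+((j+1:ℕ):ℝ))*((n:ℝ)+((j+1:ℕ):ℝ)-1)*((n:ℝ)*((n:ℝ)-1)) ≠ 0 := by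
    rw [hc]
    intro hx
    rcases mul_eq_zero.1 hx with hx | hx
    · rcases mul_eq_zero.1 hx with hx | hx <;> nlinarith
    · rcases mul_eq_zero.1 hx with hx | hx <;> nlinarith
  unfold GR
  rw [div_sub_div _ _ hD1 hD0, eq_div_iff (mul_ne_zero hD1 hD0)]
  push_cast
  linear_combination
    ((2*(n:ℝ)-1)*(n:ℝ)*((n:ℝ)-1)*(((n:ℝ)+(j:ℝ))*((n:ℝ)+(j:ℝ)-1)*((n:ℝ)*((n:ℝ)-1)))*harmonicPoly j 2
      + 2*(j:ℝ)*(2*(n:ℝ)-1)*(2:ℝ)^j*(((n:ℝ)+(j:ℝ))*((n:ℝ)+(j:ℝ)-1)*((n:ℝ)*((n:ℝ)-1)))) * h1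
    + (-(n:ℝ)^2*((n:ℝ)-1)^3*((n:ℝ)+(j:ℝ))*((n:ℝ)+(j:ℝ)+1)*harmonicPoly j 2) * h2
    + (2*(2*(n:ℝ)-1)*((j:ℝ)+1)*(n:ℝ)*((n:ℝ)-1)*(((n:ℝ)+(j:ℝ))*((n:ℝ)+(j:ℝ)-1)*((n:ℝ)*((n:ℝ)-1)))*cR n (j+1)) * h3

lemma rPoly_eq_s13 (m : ℕ) : rPoly m 2 = ∑ j ∈ Finset.range (m+1), cR m j * harmonicPoly j 2 := by
  unfold rPoly cR
  norm_num

lemma recurMain (n : ℕ) (hn : 2 ≤ n) :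
    (n : ℝ) * rPoly n 2 + 4 * ((n : ℝ) - 1) * rPoly (n - 2) 2 = 0 := by
  have hr2 : rPoly (n-2) 2 = ∑ j ∈ Finset.range (n+1), cR (n-2) j * harmonicPoly j 2 := by
    rw [rPoly_eq_s13]
    apply Finset.sum_subset
    · exact Finset.range_subset_range.2 (by omega)
    · intro j hj1 hj2
      simp only [Finset.mem_range] at hj1 hj2
      have : (n-2).choose j = 0 := Nat.choose_eq_zero_of_lt (by omega)
      simp [cR, this]
  rw [rPoly_eq_s13, hr2, Finset.mul_sum, Finset.mul_sum, ← Finset.sum_add_distrib]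
  have hstep : ∀ j ∈ Finset.range (n+1),
      (n:ℝ) * (cR n j * harmonicPoly j 2) + 4*((n:ℝ)-1) * (cR (n-2) j * harmonicPoly j 2)
        = GR n (j+1) - GR n j := by
    intro j hj
    exact stepG n j hn (by simp only [Finset.mem_range] at hj; omega)
  rw [Finset.sum_congr rfl hstep, Finset.sum_range_sub (fun j => GR n j) (n+1)]
  have hG0 : GR n 0 = 0 := by
    simp [GR, harmonicPoly]
  have hG1 : GR n (n+1) = 0 := by
    have : n.choose (n+1) = 0 := Nat.choose_succ_self n
    simp [GR, cR, this]
  rw [hG0, hG1, sub_zero]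

/-- `n·r(n,2) + 4(n−1)·r(n−2,2) = 0` for `n ≥ 2` with `r(0,2) = 0`,
`r(1,2) = 4`; consequently `r(2n,2) = 0` and
`r(2n+1,2) = (−1)^n·n!·2^{3n+2}/(2n+1)!!` (with `(2n+1)!! = ∏_{i=0}^n (2i+1)`). -/
theorem rPoly_two_recurrence :
    (∀ n : ℕ, 2 ≤ n →
      (n : ℝ) * rPoly n 2 + 4 * ((n : ℝ) - 1) * rPoly (n - 2) 2 = 0) ∧
    rPoly 0 2 = 0 ∧ rPoly 1 2 = 4 ∧
    (∀ n : ℕ, rPoly (2 * n) 2 = 0) ∧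
    (∀ n : ℕ, rPoly (2 * n + 1) 2 =
      (-1 : ℝ) ^ n * (n.factorial : ℝ) * 2 ^ (3 * n + 2) /
        ((∏ i ∈ Finset.range (n + 1), (2 * i + 1) : ℕ) : ℝ)) := by
  have h0 : rPoly 0 2 = 0 := by
    simp [rPoly, harmonicPoly]
  have h1 : rPoly 1 2 = 4 := by
    rw [rPoly, Finset.sum_range_succ, Finset.sum_range_succ]
    norm_num [harmonicPoly]
  have heven : ∀ n : ℕ, rPoly (2 * n) 2 = 0 := by
    intro n
    induction n with
    | zero => simpa using h0
    | succ m ih =>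
      have h := recurMain (2*m+2) (by omega)
      rw [show 2*m+2-2 = 2*m from by omega, ih] at h
      have h2 : ((2*m+2 : ℕ):ℝ) ≠ 0 := by positivity
      rw [show 2*(m+1) = 2*m+2 from by ring]
      have := mul_eq_zero.1 (by linarith [h] : ((2*m+2 : ℕ):ℝ) * rPoly (2*m+2) 2 = 0)
      tauto
  have hodd : ∀ n : ℕ, rPoly (2 * n + 1) 2 =
      (-1 : ℝ) ^ n * (n.factorial : ℝ) * 2 ^ (3 * n + 2) /
        ((∏ i ∈ Finset.range (n + 1), (2 * i + 1) : ℕ) : ℝ) := by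
    intro n
    induction n with
    | zero => rw [show 2*0+1 = 1 from rfl, h1]; norm_num
    | succ m ih =>
      have h := recurMain (2*m+3) (by omega)
      rw [show 2*m+3-2 = 2*m+1 from by omega, ih] at h
      have hP : (0:ℝ) < ((∏ i ∈ Finset.range (m + 1), (2 * i + 1) : ℕ) : ℝ) := by
        have : 0 < ∏ i ∈ Finset.range (m + 1), (2 * i + 1) :=
          Finset.prod_pos (fun i _ => by omega)
        exact_mod_cast this
      have hP' : ((∏ i ∈ Finset.range (m + 1), (2 * i + 1) : ℕ) : ℝ) ≠ 0 := ne_of_gt hP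
      have h23 : ((2*m+3 : ℕ):ℝ) ≠ 0 := by positivity
      rw [show 2*(m+1)+1 = 2*m+3 from by ring]
      rw [show m+1+1 = m+2 from rfl, Finset.prod_range_succ]
      rw [eq_div_iff (by push_cast; positivity)]
      field_simp at h
      push_cast [Nat.factorial_succ] at h ⊢
      linear_combination h
  exact ⟨recurMain, h0, h1, heven, hodd⟩
end

section
/- Let s > 0 be a real number and t a real number. Then for every n ≥ 0, det((s·t^{i+j}/(i+j+s))_{i,j=0}^{n}) = s^n · t^{n²+n} / ∏_{j=1}^{n} ((2j+s) · C(2j+s−1, j)²), where for real x the generalized binomial coefficient is C(x,m) = x(x−1)⋯(x−m+1)/m!. -/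
/-- Generalized binomial coefficient `C(x,m) = x(x−1)⋯(x−m+1)/m!` for real `x`. -/
noncomputable def genChoose (x : ℝ) (m : ℕ) : ℝ :=
  (∏ i ∈ Finset.range m, (x - (i : ℝ))) / (m.factorial : ℝ)

/-!
With `x i = i` and `y j = j + s` the matrix is `s • (D * C * D)`, where `D = diag (t ^ i)` and
`C = ((x i + y j)⁻¹)` is a Cauchy matrix. Cauchy's formula
`det C = ∏_{i<j} (x j - x i) (y j - y i) / ∏_{i,j} (x i + y j)` has as numerator the square of
the Vandermonde determinant of `0, …, n`, i.e. `sf n ^ 2`. Grouping the factors of the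
denominator `∏_{i,j ≤ n} (i + j + s)` along the hooks `max i j = k` gives
`s * ∏_{k=1}^n (2k + s) * (∏_{i<k} (i + k + s)) ^ 2`,
and `∏_{i<k} (i + k + s) = k! C(2k+s-1, k)`.
-/

open Finset Matrix Nat

section Cauchy

variable {K : Type*} [Field K]

def cauchyMatrix {ι : Type*} (x y : ι → K) : Matrix ι ι K :=
  of fun i j => (x i + y j)⁻¹

/- Subtracting `(x 0 + y 0) / (x i + y 0)` times row `0` from row `i` clears column `0` below the
corner and leaves a Cauchy matrix of size `n` scaled by diagonal matrices on both sides. -/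
theorem det_cauchyMatrix_succ {n : ℕ} (x y : Fin (n + 1) → K) (h : ∀ i j, x i + y j ≠ 0) :
    det (cauchyMatrix x y) =
      (x 0 + y 0)⁻¹ * (∏ i : Fin n, (x i.succ - x 0) / (x i.succ + y 0)) *
        (∏ j : Fin n, (y j.succ - y 0) / (x 0 + y j.succ)) *
          det (cauchyMatrix (x ∘ Fin.succ) (y ∘ Fin.succ)) := by
  set c : Fin (n + 1) → K := Fin.cons 0 fun i => -(x 0 + y 0) / (x i.succ + y 0) with hc
  set A : Matrix (Fin (n + 1)) (Fin (n + 1)) K :=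
    of fun i j => (x i + y j)⁻¹ + c i * (x 0 + y j)⁻¹ with hA
  have hrow : det A = det (cauchyMatrix x y) :=
    det_eq_of_forall_row_eq_smul_add_const c 0 rfl fun i j => rfl
  have hcorner : A 0 0 = (x 0 + y 0)⁻¹ := by simp [hA, hc]
  have hcol : ∀ i : Fin n, A i.succ 0 = 0 := fun i => by
    have := h i.succ 0
    have := h 0 0
    simp only [hA, hc, of_apply, Fin.cons_succ]
    field_simp
    ring
  have hminor : A.submatrix Fin.succ Fin.succ =
      diagonal (fun i : Fin n => (x i.succ - x 0) / (x i.succ + y 0)) *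
        cauchyMatrix (x ∘ Fin.succ) (y ∘ Fin.succ) *
          diagonal (fun j : Fin n => (y j.succ - y 0) / (x 0 + y j.succ)) := by
    ext i j
    have := h i.succ j.succ
    have := h i.succ 0
    have := h 0 j.succ
    simp only [submatrix_apply, hA, hc, cauchyMatrix, of_apply, Fin.cons_succ, mul_diagonal,
      diagonal_mul, Function.comp_apply]
    field_simp
    ring
  rw [← hrow, det_succ_column_zero, Fin.sum_univ_succ]
  simp only [hcol, mul_zero, zero_mul, sum_const_zero, add_zero, Fin.succAbove_zero, hminor,
    det_mul, det_diagonal, hcorner, Fin.val_zero, pow_zero, one_mul]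
  ring

theorem det_cauchyMatrix {n : ℕ} (x y : Fin n → K) (h : ∀ i j, x i + y j ≠ 0) :
    det (cauchyMatrix x y) =
      (∏ i : Fin n, ∏ j ∈ Ioi i, ((x j - x i) * (y j - y i))) /
        ∏ i : Fin n, ∏ j : Fin n, (x i + y j) := by
  induction n with
  | zero => simp
  | succ n ih =>
    rw [det_cauchyMatrix_succ x y h,
      ih (x ∘ Fin.succ) (y ∘ Fin.succ) fun i j => h i.succ j.succ, Fin.prod_univ_succ,
      Fin.prod_Ioi_zero, Fin.prod_univ_succ, Fin.prod_univ_succ]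
    simp only [Fin.prod_Ioi_succ, Fin.prod_univ_succ, prod_mul_distrib, prod_div_distrib,
      Function.comp_apply]
    have := h 0 0
    have : ∏ i : Fin n, (x i.succ + y 0) ≠ 0 := prod_ne_zero_iff.2 fun i _ => h i.succ 0
    have : ∏ j : Fin n, (x 0 + y j.succ) ≠ 0 := prod_ne_zero_iff.2 fun j _ => h 0 j.succ
    field_simp

end Cauchy

theorem prod_range_prod_range_succ_of_symm {M : Type*} [CommMonoid M] (f : ℕ → ℕ → M)
    (hf : ∀ i j, f i j = f j i) (n : ℕ) :
    ∏ i ∈ range (n + 1), ∏ j ∈ range (n + 1), f i j =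
      (∏ i ∈ range n, ∏ j ∈ range n, f i j) * (∏ i ∈ range n, f i n) ^ 2 * f n n := by
  simp only [prod_range_succ, prod_mul_distrib, hf n, sq, mul_assoc]

theorem factorial_mul_genChoose_eq_prod (s : ℝ) (m : ℕ) :
    m ! * genChoose (2 * m + s - 1) m = ∏ i ∈ range m, ((i : ℝ) + m + s) := by
  rw [genChoose, mul_div_cancel₀ _ (by positivity), ← prod_range_reflect]
  refine prod_congr rfl fun i hi => ?_
  rw [Nat.sub_sub, Nat.cast_sub (by grind)]
  push_cast
  ring

theorem prod_range_prod_range_add_add (s : ℝ) (n : ℕ) :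
    ∏ i ∈ range (n + 1), ∏ j ∈ range (n + 1), ((i : ℝ) + j + s) =
      s * (sf n : ℝ) ^ 2 *
        ∏ j ∈ Icc 1 n, ((2 * (j : ℝ) + s) * genChoose (2 * j + s - 1) j ^ 2) := by
  induction n with
  | zero => simp
  | succ n ih =>
    rw [prod_range_prod_range_succ_of_symm _ (fun i j => by ring), ih,
      ← factorial_mul_genChoose_eq_prod, prod_Icc_succ_top (by omega), superFactorial_succ]
    push_cast
    ring

theorem sq_prod_pow_val {M : Type*} [CommMonoid M] (t : M) (n : ℕ) :
    (∏ i : Fin (n + 1), t ^ (i : ℕ)) ^ 2 = t ^ (n ^ 2 + n) := by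
  rw [prod_pow_eq_pow_sum, ← pow_mul, Fin.sum_univ_eq_sum_range (fun i => i),
    sum_range_id_mul_two, Nat.add_sub_cancel]
  ring_nf

/-- For `s > 0`,
`det((s·t^{i+j}/(i+j+s))_{i,j=0}^n) = s^n·t^{n²+n} / ∏_{j=1}^n ((2j+s)·C(2j+s−1,j)²)`. -/
theorem det_generalized_hilbert (s t : ℝ) (hs : 0 < s) (n : ℕ) :
    Matrix.det (Matrix.of fun i j : Fin (n + 1) =>
        s * t ^ ((i : ℕ) + (j : ℕ)) / (((i : ℕ) + (j : ℕ) : ℕ) + s)) =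
      s ^ n * t ^ (n ^ 2 + n) /
        ∏ j ∈ Finset.Icc 1 n, ((2 * (j : ℝ) + s) * (genChoose (2 * (j : ℝ) + s - 1) j) ^ 2) := by
  set G := ∏ j ∈ Icc 1 n, ((2 * (j : ℝ) + s) * genChoose (2 * j + s - 1) j ^ 2)
  set x : Fin (n + 1) → ℝ := fun i => (i : ℕ)
  set w : Fin (n + 1) → ℝ := fun i => t ^ (i : ℕ)
  have hpos : ∀ i j, x i + (x j + s) ≠ 0 := fun i j => by positivity
  have hmatrix : (Matrix.of fun i j : Fin (n + 1) =>
        s * t ^ ((i : ℕ) + (j : ℕ)) / (((i : ℕ) + (j : ℕ) : ℕ) + s)) =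
      s • (diagonal w * cauchyMatrix x (fun j => x j + s) * diagonal w) := by
    ext i j
    simp [x, w, cauchyMatrix, pow_add, div_eq_mul_inv]
    ring
  have hnum : ∏ i : Fin (n + 1), ∏ j ∈ Ioi i, ((x j - x i) * ((x j + s) - (x i + s))) =
      (sf n : ℝ) ^ 2 := by
    simp only [add_sub_add_right_eq_sub, prod_mul_distrib, ← det_vandermonde, x,
      det_vandermonde_id_eq_superFactorial, sq]
  have hden :
      ∏ i : Fin (n + 1), ∏ j : Fin (n + 1), (x i + (x j + s)) = s * (sf n : ℝ) ^ 2 * G := by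
    rw [← prod_range_prod_range_add_add, ← Fin.prod_univ_eq_prod_range]
    simp only [x, ← Fin.prod_univ_eq_prod_range, add_assoc]
  have hG : G ≠ 0 := right_ne_zero_of_mul <| hden ▸
    prod_ne_zero_iff.2 fun i _ => prod_ne_zero_iff.2 fun j _ => hpos i j
  have hsf : (sf n : ℝ) ≠ 0 := by rw [← prod_range_succ_factorial]; positivity
  rw [hmatrix, det_smul, det_mul, det_mul, det_diagonal, det_cauchyMatrix _ _ hpos, hnum, hden,
    Fintype.card_fin, ← sq_prod_pow_val t n]
  field_simp [hs.ne']
  ring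
end

section
/- Let s > 0 be a real number. Define H_m(1,s) = ∑_{k=1}^{m} s/(k+s−1) and r(n,1,s) = ∑_{j=0}^{n} (−1)^{n−j} · C(n,j) · C(n+j+s−1, n) · H_j(1,s), where for real x the generalized binomial coefficient is C(x,m) = x(x−1)⋯(x−m+1)/m!. Then for every n ≥ 0, r(n,1,s) = s·H_n + H_n(1,s), where H_n = ∑_{k=1}^{n} 1/k is the n-th harmonic number. -/
open Finset Polynomial


/-- `H_m(1,s) = ∑_{k=1}^m s/(k+s−1)`. -/
noncomputable def harmonicGen (m : ℕ) (s : ℝ) : ℝ := ∑ k ∈ Finset.Icc 1 m, s / ((k : ℝ) + s - 1)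


lemma descEval (m : ℕ) (x : ℝ) :
    (descPochhammer ℝ m).eval x = ∏ i ∈ range m, (x - i) := by
  induction m with
  | zero => simp
  | succ k ih => rw [descPochhammer_succ_eval, ih, prod_range_succ]

lemma descSmeval (m : ℕ) (x : ℝ) :
    (descPochhammer ℤ m).smeval x = ∏ i ∈ range m, (x - i) := by
  rw [← aeval_eq_smeval, aeval_def, eval₂_eq_eval_map, descPochhammer_map, descEval]

lemma vdm (n : ℕ) (a b : ℝ) :
    ∑ j ∈ range (n+1), (n.choose j : ℝ) *
        ((∏ i ∈ range j, (a - i)) * ∏ i ∈ range (n-j), (b - i))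
      = ∏ i ∈ range n, (a + b - i) := by
  have h := Ring.descPochhammer_smeval_add (R := ℝ) (r := a) (s := b) n (Commute.all a b)
  rw [Finset.Nat.sum_antidiagonal_eq_sum_range_succ_mk] at h
  simp only [descSmeval] at h
  rw [← h]

lemma prodIco1 {n j : ℕ} (hj : j ≤ n) (x : ℝ) :
    ∏ l ∈ Ico (n-j) n, (x + l) = ∏ i ∈ range j, (x + (n:ℝ) - 1 - i) := by
  rw [Finset.prod_Ico_eq_prod_range]
  have h : n - (n - j) = j := by omega
  rw [h, ← Finset.prod_range_reflect]
  refine Finset.prod_congr rfl fun i hi => ?_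
  simp only [mem_range] at hi
  have h2 : n - j + (j - 1 - i) = n - (1 + i) := by omega
  rw [h2, Nat.cast_sub (by omega : 1 + i ≤ n)]
  push_cast; ring

lemma prodIco2 {n j : ℕ} (y : ℝ) :
    ∏ m ∈ Ico n (n + j), (y + m) = ∏ i ∈ range j, (y + n + i) := by
  rw [Finset.prod_Ico_eq_prod_range]
  have h : n + j - n = j := by omega
  rw [h]
  refine Finset.prod_congr rfl fun i hi => ?_
  push_cast; ring

lemma keyEval (n : ℕ) (x y : ℝ) :
    ∑ j ∈ range (n+1), (-1:ℝ)^(n-j) * (n.choose j) *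
        (∏ l ∈ Ico j n, (x + l)) * (∏ m ∈ Ico n (n+j), (y + m))
      = ∏ i ∈ range n, (y + 1 + i - x) := by
  rw [← Finset.sum_range_reflect]
  have key : ∀ j ∈ range (n+1),
      (-1:ℝ)^(n-(n+1-1-j)) * (n.choose (n+1-1-j)) *
        (∏ l ∈ Ico (n+1-1-j) n, (x + l)) * (∏ m ∈ Ico n (n + (n+1-1-j)), (y + m))
      = (-1:ℝ)^n * ((n.choose j : ℝ) *
        ((∏ i ∈ range j, ((x + n - 1) - i)) * ∏ i ∈ range (n-j), ((-y - n) - i))) := by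
    intro j hj
    simp only [mem_range] at hj
    have hj' : j ≤ n := by omega
    have e1 : n + 1 - 1 - j = n - j := by omega
    have e2 : n - (n - j) = j := by omega
    rw [e1, e2, Nat.choose_symm hj', prodIco1 hj', prodIco2]
    have e3 : ∏ i ∈ range (n - j), (y + (n:ℝ) + i) =
        (-1:ℝ)^(n-j) * ∏ i ∈ range (n-j), ((-y - n) - i) := by
      calc ∏ i ∈ range (n-j), (y + (n:ℝ) + i)
          = ∏ i ∈ range (n-j), ((-1) * ((-y - (n:ℝ)) - i)) :=
            Finset.prod_congr rfl fun i _ => by ring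
        _ = (-1:ℝ)^(n-j) * ∏ i ∈ range (n-j), ((-y - n) - i) := by
            rw [Finset.prod_mul_distrib, Finset.prod_const, Finset.card_range]
    rw [e3]
    rw [show ((-1:ℝ))^n = (-1:ℝ)^j * (-1:ℝ)^(n-j) by
      rw [← pow_add]; congr 1; omega]
    ring
  rw [Finset.sum_congr rfl key, ← Finset.mul_sum, vdm]
  calc (-1:ℝ)^n * ∏ i ∈ range n, (x + (n:ℝ) - 1 + (-y - n) - i)
      = ∏ i ∈ range n, ((-1) * (x + (n:ℝ) - 1 + (-y - n) - i)) := by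
        rw [Finset.prod_mul_distrib, Finset.prod_const, Finset.card_range]
    _ = ∏ i ∈ range n, (y + 1 + i - x) := Finset.prod_congr rfl fun i _ => by ring

lemma keyPoly (s : ℝ) (n : ℕ) :
    ∑ j ∈ range (n+1), C ((-1:ℝ)^(n-j) * (n.choose j) * ∏ m ∈ Ico n (n+j), (s + m)) *
        ∏ l ∈ Ico j n, (X + C (l:ℝ))
      = ∏ i ∈ range n, (C (s + 1 + (i:ℝ)) - X) := by
  apply Polynomial.funext
  intro x
  have := keyEval n x s
  simp only [eval_finset_sum, eval_prod, eval_mul, eval_add, eval_sub, eval_C, eval_X]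
  calc ∑ j ∈ range (n+1), ((-1:ℝ)^(n-j) * (n.choose j) * ∏ m ∈ Ico n (n+j), (s + m)) *
          ∏ l ∈ Ico j n, (x + (l:ℝ))
      = ∑ j ∈ range (n+1), (-1:ℝ)^(n-j) * (n.choose j) *
          (∏ l ∈ Ico j n, (x + l)) * (∏ m ∈ Ico n (n+j), (s + m)) :=
        Finset.sum_congr rfl fun j _ => by ring
    _ = ∏ i ∈ range n, (s + 1 + (i:ℝ) - x) := by rw [this]

lemma factProd (n : ℕ) : ∏ i ∈ range n, ((1:ℝ) + i) = n.factorial := by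
  rw [← Finset.prod_range_add_one_eq_factorial, Nat.cast_prod]
  exact Finset.prod_congr rfl fun i _ => by push_cast; ring

lemma idA_s18 (s : ℝ) (n : ℕ) :
    ∑ j ∈ range (n+1), (-1:ℝ)^(n-j) * (n.choose j) * ∏ l ∈ Ico j (n+j), (s + l)
      = n.factorial := by
  have h := congrArg (eval s) (keyPoly s n)
  simp only [eval_finset_sum, eval_prod, eval_mul, eval_add, eval_sub, eval_C, eval_X] at h
  calc ∑ j ∈ range (n+1), (-1:ℝ)^(n-j) * (n.choose j) * ∏ l ∈ Ico j (n+j), (s + l)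
      = ∑ j ∈ range (n+1), ((-1:ℝ)^(n-j) * (n.choose j) * ∏ m ∈ Ico n (n+j), (s + m)) *
          ∏ l ∈ Ico j n, (s + (l:ℝ)) := by
        refine Finset.sum_congr rfl fun j hj => ?_
        simp only [mem_range] at hj
        rw [← Finset.prod_Ico_consecutive (fun l => (s + (l:ℝ))) (by omega : j ≤ n) (by omega : n ≤ n + j)]
        ring
    _ = ∏ i ∈ range n, (s + 1 + (i:ℝ) - s) := h
    _ = ∏ i ∈ range n, ((1:ℝ) + i) := Finset.prod_congr rfl fun i _ => by ring
    _ = n.factorial := factProd n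

lemma IccRange (n : ℕ) (f : ℕ → ℝ) : ∑ k ∈ Icc 1 n, f k = ∑ i ∈ range n, f (1 + i) := by
  rw [← Finset.Ico_add_one_right_eq_Icc, Finset.sum_Ico_eq_sum_range]
  simp

lemma derivFinsetProd (s : Finset ℕ) (f : ℕ → ℝ[X]) :
    derivative (∏ i ∈ s, f i) = ∑ i ∈ s, (∏ j ∈ s.erase i, f j) * derivative (f i) := by
  rw [Finset.prod_eq_multiset_prod, derivative_prod, Finset.sum_eq_multiset_sum]
  refine congr_arg Multiset.sum (Multiset.map_congr rfl fun i hi => ?_)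
  rw [Finset.prod_eq_multiset_prod, Finset.erase_val]

lemma helperL (s : ℝ) (j n : ℕ) :
    eval s (derivative (∏ l ∈ Ico j n, (X + C (l:ℝ))))
      = ∑ i ∈ Ico j n, ∏ l ∈ (Ico j n).erase i, (s + (l:ℝ)) := by
  rw [derivFinsetProd]
  simp [eval_finset_sum, eval_prod]

lemma helperR (s : ℝ) (n : ℕ) :
    eval s (derivative (∏ i ∈ range n, (C (s + 1 + (i:ℝ)) - X)))
      = -∑ i ∈ range n, ∏ l ∈ (range n).erase i, (s + 1 + (l:ℝ) - s) := by
  rw [derivFinsetProd]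
  simp [eval_finset_sum, eval_prod, ← Finset.sum_neg_distrib]

lemma idC_s18 (s : ℝ) (hs : 0 < s) (n : ℕ) :
    ∑ j ∈ range (n+1), (-1:ℝ)^(n-j) * (n.choose j) * (∏ l ∈ Ico j (n+j), (s + l)) *
        (∑ i ∈ Ico j n, 1/(s + i))
      = -(n.factorial : ℝ) * ∑ k ∈ Icc 1 n, 1/(k:ℝ) := by
  have h := congrArg (fun p => eval s (derivative p)) (keyPoly s n)
  simp only [derivative_sum, derivative_mul, derivative_C, zero_mul, zero_add,
    eval_finset_sum, eval_mul, eval_C, helperL, helperR] at h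
  have hpos : ∀ i : ℕ, (0:ℝ) < s + i := fun i => by positivity
  calc ∑ j ∈ range (n+1), (-1:ℝ)^(n-j) * (n.choose j) * (∏ l ∈ Ico j (n+j), (s + l)) *
          (∑ i ∈ Ico j n, 1/(s + i))
      = ∑ j ∈ range (n+1), ((-1:ℝ)^(n-j) * (n.choose j) * ∏ m ∈ Ico n (n+j), (s + m)) *
          ∑ i ∈ Ico j n, ∏ l ∈ (Ico j n).erase i, (s + (l:ℝ)) := by
        refine Finset.sum_congr rfl fun j hj => ?_
        simp only [mem_range] at hj
        rw [Finset.mul_sum, Finset.mul_sum]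
        refine Finset.sum_congr rfl fun i hi => ?_
        have hprod : (∏ l ∈ (Ico j n).erase i, (s + (l:ℝ))) * (s + i) = ∏ l ∈ Ico j n, (s + l) :=
          Finset.prod_erase_mul _ _ hi
        have hsplit : (∏ l ∈ Ico j n, (s + (l:ℝ))) * ∏ l ∈ Ico n (n+j), (s + l)
            = ∏ l ∈ Ico j (n+j), (s + l) :=
          Finset.prod_Ico_consecutive _ (by omega : j ≤ n) (by omega : n ≤ n + j)
        have hne : s + (i:ℝ) ≠ 0 := ne_of_gt (hpos i)
        rw [← hsplit, ← hprod]
        field_simp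
    _ = -∑ i ∈ range n, ∏ l ∈ (range n).erase i, (s + 1 + (l:ℝ) - s) := h
    _ = -(n.factorial : ℝ) * ∑ k ∈ Icc 1 n, 1/(k:ℝ) := by
        rw [IccRange n (fun k => 1/(k:ℝ))]
        have key2 : ∀ i ∈ range n, ∏ l ∈ (range n).erase i, (s + 1 + (l:ℝ) - s)
            = (n.factorial : ℝ) * (1/((1+i:ℕ):ℝ)) := by
          intro i hi
          have hp : (∏ l ∈ (range n).erase i, ((1:ℝ) + l)) * (1 + (i:ℝ)) = ∏ l ∈ range n, ((1:ℝ)+l) :=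
            Finset.prod_erase_mul _ _ hi
          rw [factProd] at hp
          have he : (∏ l ∈ (range n).erase i, ((1:ℝ)+l)) = (n.factorial : ℝ) / (1+(i:ℝ)) := by
            rw [eq_div_iff (by positivity)]; exact hp
          calc ∏ l ∈ (range n).erase i, (s + 1 + (l:ℝ) - s)
              = ∏ l ∈ (range n).erase i, ((1:ℝ)+l) :=
                Finset.prod_congr rfl fun l _ => by ring
            _ = (n.factorial : ℝ) * (1/((1+i:ℕ):ℝ)) := by rw [he]; push_cast; ring
        rw [Finset.sum_congr rfl key2, ← Finset.mul_sum]
        ring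

lemma genChoose_eq (s : ℝ) (n j : ℕ) :
    genChoose ((n:ℝ) + (j:ℝ) + s - 1) n = (∏ l ∈ Ico j (n+j), (s + l)) / n.factorial := by
  unfold genChoose
  congr 1
  rw [Finset.prod_Ico_eq_prod_range]
  have h : n + j - j = n := by omega
  rw [h, ← Finset.prod_range_reflect (fun i => s + ((j + i : ℕ) : ℝ))]
  refine Finset.prod_congr rfl fun i hi => ?_
  simp only [mem_range] at hi
  have h2 : j + (n - 1 - i) = j + n - (1 + i) := by omega
  rw [h2, Nat.cast_sub (by omega)]
  push_cast; ring

lemma harmRange (m : ℕ) (s : ℝ) : harmonicGen m s = ∑ i ∈ range m, s/(s + (i:ℝ)) := by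
  unfold harmonicGen
  rw [IccRange m (fun k => s/((k:ℝ)+s-1))]
  refine Finset.sum_congr rfl fun i _ => ?_
  push_cast; ring_nf

lemma harmTail (s : ℝ) {j n : ℕ} (h : j ≤ n) :
    harmonicGen j s = harmonicGen n s - ∑ i ∈ Ico j n, s/(s+(i:ℝ)) := by
  rw [harmRange, harmRange, Finset.sum_Ico_eq_sub _ h]
  ring

/-- For `s > 0` and
`r(n,1,s) = ∑_{j=0}^n (−1)^{n−j}·C(n,j)·C(n+j+s−1,n)·H_j(1,s)`, one has
`r(n,1,s) = s·H_n + H_n(1,s)` for all `n ≥ 0`, with `H_n = ∑_{k=1}^n 1/k`. -/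
theorem rGen_eq (s : ℝ) (hs : 0 < s) (n : ℕ) :
    ∑ j ∈ Finset.range (n + 1),
        (-1 : ℝ) ^ (n - j) * (Nat.choose n j : ℝ) *
          genChoose (((n : ℝ) + (j : ℝ) + s - 1)) n * harmonicGen j s =
      s * (∑ k ∈ Finset.Icc 1 n, (1 : ℝ) / (k : ℝ)) + harmonicGen n s := by
  have hA := idA_s18 s n
  have hC := idC_s18 s hs n
  have hfact : ((n.factorial : ℝ)) ≠ 0 := by positivity
  have step1 : ∀ j ∈ range (n+1),
      (-1:ℝ)^(n-j) * (n.choose j) * genChoose ((n:ℝ)+(j:ℝ)+s-1) n * harmonicGen j s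
      = (harmonicGen n s / n.factorial) * ((-1:ℝ)^(n-j) * (n.choose j) * ∏ l ∈ Ico j (n+j), (s+l))
        - (s / n.factorial) * ((-1:ℝ)^(n-j) * (n.choose j) * (∏ l ∈ Ico j (n+j), (s+l)) *
            (∑ i ∈ Ico j n, 1/(s+(i:ℝ)))) := by
    intro j hj
    simp only [mem_range] at hj
    rw [genChoose_eq, harmTail s (by omega : j ≤ n)]
    rw [show (∑ i ∈ Ico j n, s/(s+(i:ℝ))) = s * ∑ i ∈ Ico j n, 1/(s+(i:ℝ)) by
      rw [Finset.mul_sum]; exact Finset.sum_congr rfl fun i _ => by ring]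
    ring
  rw [Finset.sum_congr rfl step1, Finset.sum_sub_distrib, ← Finset.mul_sum, ← Finset.mul_sum,
    hA, hC]
  field_simp
  ring
end
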